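/- arXiv:2601.15723 — 11 statements merged into one kernel-verified Lean document; each statement's English description precedes it below -/
import Mathlib

section
/- Let n ≥ 1, let 𝓕 be a finite family of nonempty subsets of [n] with a fractional partition γ, let f : 2^[n] → ℝ be submodular with f(∅) = 0, and let g : ℝ → ℝ be monotonically non-decreasing and convex. Then g(f([n])/n) ≤ Σ_{S ∈ 𝓕} (γ(S)·|S|/n) · g( f(S | <S) / |S| ). -/
/-- `<S` : the set of indices smaller than every index of `S`. -/
def ltSet {n : ℕ} (S : Finset (Fin n)) : Finset (Fin n) :=
  Finset.univ.filter (fun i => ∀ j ∈ S, i < j)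

set_option maxRecDepth 20000 in
/-- convex-functional generalization of the strong upper
Madiman–Tetali inequality (Theorem `SasonImprov`, part 1). -/
theorem stmt_0 (n : ℕ) (hn : 1 ≤ n)
    (𝓕 : Finset (Finset (Fin n))) (h𝓕 : ∀ S ∈ 𝓕, S.Nonempty)
    (γ : Finset (Fin n) → ℝ) (hγ : ∀ S ∈ 𝓕, 0 ≤ γ S)
    (hfrac : ∀ i : Fin n, ∑ S ∈ 𝓕.filter (fun S => i ∈ S), γ S = 1)
    (f : Finset (Fin n) → ℝ)
    (hsub : ∀ S T : Finset (Fin n), f S + f T ≥ f (S ∪ T) + f (S ∩ T))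
    (hf0 : f ∅ = 0)
    (g : ℝ → ℝ) (hg : Monotone g) (hconv : ConvexOn ℝ Set.univ g) :
    g (f Finset.univ / n) ≤
      ∑ S ∈ 𝓕, (γ S * S.card / n) *
        g ((f (S ∪ ltSet S) - f (ltSet S)) / S.card) := by
  have hnpos : (0:ℝ) < n := by exact_mod_cast Nat.lt_of_lt_of_le Nat.zero_lt_one hn
  set d : Fin n → ℝ := fun i => f (insert i (Finset.Iio i)) - f (Finset.Iio i) with hd
  -- diminishing returns
  have hB : ∀ (i : Fin n) (T T' : Finset (Fin n)), T ⊆ T' → i ∉ T' →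
      f (insert i T') - f T' ≤ f (insert i T) - f T := by
    intro i T T' hTT hiT'
    have h := hsub (insert i T) T'
    have h1 : insert i T ∪ T' = insert i T' := by
      rw [Finset.insert_union, Finset.union_eq_right.mpr hTT]
    have h2 : insert i T ∩ T' = T := by
      rw [Finset.insert_inter_of_notMem hiT', Finset.inter_eq_left.mpr hTT]
    rw [h1, h2] at h
    linarith
  -- chain rule lower bound
  have hC : ∀ (S T : Finset (Fin n)), (∀ t ∈ T, ∀ j ∈ S, t < j) →
      ∑ i ∈ S, d i ≤ f (S ∪ T) - f T := by
    intro S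
    induction S using Finset.strongInduction with
    | _ S ih =>
      intro T hT
      rcases S.eq_empty_or_nonempty with rfl | hS
      · simp
      · set i := S.max' hS with hi
        set S' := S.erase i with hS'
        have hiS : i ∈ S := S.max'_mem hS
        have hSins : S = insert i S' := (Finset.insert_erase hiS).symm
        have hss : S' ⊂ S := Finset.erase_ssubset hiS
        have hsum : ∑ j ∈ S, d j = d i + ∑ j ∈ S', d j := by
          conv_lhs => rw [hSins]
          exact Finset.sum_insert (Finset.notMem_erase _ _)
        have ih' := ih S' hss T (fun t ht j hj => hT t ht j (Finset.mem_of_mem_erase hj))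
        have hsubIio : S' ∪ T ⊆ Finset.Iio i := by
          intro x hx
          rcases Finset.mem_union.mp hx with hx | hx
          · exact Finset.mem_Iio.mpr
              (lt_of_le_of_ne (S.le_max' x (Finset.mem_of_mem_erase hx))
                (Finset.ne_of_mem_erase hx))
          · exact Finset.mem_Iio.mpr (hT x hx i hiS)
        have hiNot : i ∉ Finset.Iio i := by simp
        have hB' := hB i (S' ∪ T) (Finset.Iio i) hsubIio hiNot
        have hUnion : S ∪ T = insert i (S' ∪ T) := by
          rw [hSins, Finset.insert_union]
        rw [hsum, hUnion]
        simp only [hd] at hB' ⊢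
        linarith
  -- telescoping
  have htel : ∑ i : Fin n, d i = f Finset.univ := by
    set F : ℕ → ℝ := fun m => f (Finset.univ.filter (fun i : Fin n => (i:ℕ) < m)) with hF
    have hF0 : F 0 = 0 := by
      simp only [hF]
      rw [Finset.filter_false_of_mem (fun i _ => by omega)]
      exact hf0
    have hFn : F n = f Finset.univ := by
      simp only [hF]
      rw [Finset.filter_true_of_mem (fun i _ => i.isLt)]
    have hstep : ∀ (i : Fin n), d i = F ((i:ℕ)+1) - F (i:ℕ) := by
      intro i
      have e1 : (Finset.univ.filter (fun j : Fin n => (j:ℕ) < (i:ℕ))) = Finset.Iio i := by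
        ext j
        simp only [Finset.mem_filter, Finset.mem_univ, true_and, Finset.mem_Iio]
        exact Fin.lt_def.symm
      have e2 : (Finset.univ.filter (fun j : Fin n => (j:ℕ) < (i:ℕ)+1)) = insert i (Finset.Iio i) := by
        ext j
        simp only [Finset.mem_filter, Finset.mem_univ, true_and, Finset.mem_insert,
          Finset.mem_Iio, Fin.lt_def]
        constructor
        · intro h
          rcases Nat.lt_succ_iff_lt_or_eq.mp h with h | h
          · exact Or.inr h
          · exact Or.inl (Fin.ext h)
        · rintro (rfl | h)
          · omega
          · omega
      simp only [hd, hF]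
      rw [e1, e2]
    calc ∑ i : Fin n, d i = ∑ i : Fin n, (F ((i:ℕ)+1) - F (i:ℕ)) := by
          exact Finset.sum_congr rfl (fun i _ => hstep i)
      _ = ∑ m ∈ Finset.range n, (F (m+1) - F m) :=
          Fin.sum_univ_eq_sum_range (fun m => F (m+1) - F m) n
      _ = F n - F 0 := Finset.sum_range_sub F n
      _ = f Finset.univ := by rw [hFn, hF0]; ring
  -- Madiman–Tetali
  have hMT : f Finset.univ ≤ ∑ S ∈ 𝓕, γ S * (f (S ∪ ltSet S) - f (ltSet S)) := by
    calc f Finset.univ = ∑ i : Fin n, d i := htel.symm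
      _ = ∑ i : Fin n, ∑ S ∈ 𝓕.filter (fun S => i ∈ S), γ S * d i := by
          refine Finset.sum_congr rfl (fun i _ => ?_)
          rw [← Finset.sum_mul, hfrac i, one_mul]
      _ = ∑ S ∈ 𝓕, ∑ i ∈ S, γ S * d i := by
          refine Finset.sum_comm' ?_
          intro i S
          simp only [Finset.mem_univ, true_and, Finset.mem_filter, and_comm]
      _ ≤ ∑ S ∈ 𝓕, γ S * (f (S ∪ ltSet S) - f (ltSet S)) := by
          refine Finset.sum_le_sum (fun S hS => ?_)
          rw [← Finset.mul_sum]
          refine mul_le_mul_of_nonneg_left ?_ (hγ S hS)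
          refine hC S (ltSet S) (fun t ht j hj => ?_)
          exact (Finset.mem_filter.mp ht).2 j hj
  -- Jensen
  set w : Finset (Fin n) → ℝ := fun S => γ S * S.card / n with hw
  set p : Finset (Fin n) → ℝ := fun S => (f (S ∪ ltSet S) - f (ltSet S)) / S.card with hp
  have hw0 : ∀ S ∈ 𝓕, 0 ≤ w S := by
    intro S hS
    have : (0:ℝ) ≤ γ S * S.card := mul_nonneg (hγ S hS) (Nat.cast_nonneg _)
    exact div_nonneg this hnpos.le
  have hcard : ∀ S ∈ 𝓕, (0:ℝ) < S.card := by
    intro S hS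
    exact_mod_cast Finset.card_pos.mpr (h𝓕 S hS)
  have hwsum : ∑ S ∈ 𝓕, w S = 1 := by
    have h1 : ∑ S ∈ 𝓕, γ S * (S.card : ℝ) = (n : ℝ) := by
      have : ∀ S ∈ 𝓕, γ S * (S.card : ℝ) = ∑ i ∈ S, γ S := by
        intro S _; rw [Finset.sum_const, nsmul_eq_mul, mul_comm]
      rw [Finset.sum_congr rfl this]
      rw [Finset.sum_comm' (s' := fun i => 𝓕.filter (fun S => i ∈ S)) (t' := Finset.univ)
        (by intro S i; simp only [Finset.mem_univ, true_and, Finset.mem_filter, and_comm])]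
      simp [hfrac]
    simp only [hw, div_eq_mul_inv, ← Finset.sum_mul, h1]
    field_simp
  have hkey : ∑ S ∈ 𝓕, w S • p S
      = (∑ S ∈ 𝓕, γ S * (f (S ∪ ltSet S) - f (ltSet S))) / n := by
    rw [Finset.sum_div]
    refine Finset.sum_congr rfl (fun S hS => ?_)
    have hc := (hcard S hS).ne'
    simp only [hw, hp, smul_eq_mul]
    field_simp
  have jensen := hconv.map_sum_le hw0 hwsum (fun S _ => Set.mem_univ (p S))
  have step1 : g (f Finset.univ / n) ≤ g (∑ S ∈ 𝓕, w S • p S) := by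
    apply hg
    rw [hkey]
    gcongr
  refine step1.trans (jensen.trans_eq ?_)
  refine Finset.sum_congr rfl (fun S hS => ?_)
  simp [hw, hp, smul_eq_mul]
end

section
/- Let n ≥ 1, let 𝓕 be a finite family of nonempty subsets of [n] with a fractional partition γ, let f : 2^[n] → ℝ be submodular with f(∅) = 0, and let g : ℝ → ℝ be monotonically non-decreasing and concave. Then g(f([n])/n) ≥ Σ_{S ∈ 𝓕} (γ(S)·|S|/n) · g( f(S | S^c \ >S) / |S| ). -/
open Finset

-- chain rule bound for submodular functions
lemma key_ineq {n : ℕ} (f : Finset (Fin n) → ℝ)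
    (hsub : ∀ S T : Finset (Fin n), f S + f T ≥ f (S ∪ T) + f (S ∩ T))
    (T : Finset (Fin n)) :
    ∀ S : Finset (Fin n), Disjoint S T →
      (∀ i ∈ S, Finset.Iio i ⊆ T ∪ S.filter (· < i)) →
      f (S ∪ T) - f T ≤ ∑ i ∈ S, (f (Finset.Iic i) - f (Finset.Iio i)) := by
  intro S
  induction S using Finset.strongInduction with
  | _ S ih =>
    intro hdisj hsubset
    rcases S.eq_empty_or_nonempty with rfl | hS
    · simp
    · set m := S.max' hS with hm
      have hmS : m ∈ S := S.max'_mem hS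
      have hle : ∀ i ∈ S, i ≤ m := fun i hi => S.le_max' i hi
      set S' := S.erase m with hS'
      have hS'lt : ∀ i ∈ S', i < m := fun i hi =>
        lt_of_le_of_ne (hle i (Finset.mem_of_mem_erase hi)) (Finset.ne_of_mem_erase hi)
      have hS'sub : S' ⊂ S := Finset.erase_ssubset hmS
      have hfilt : ∀ i ∈ S', S'.filter (· < i) = S.filter (· < i) := by
        intro i hi
        rw [hS', Finset.filter_erase, Finset.erase_eq_of_notMem]
        simp only [Finset.mem_filter]
        rintro ⟨-, hmi⟩
        exact absurd (hS'lt i hi) (not_lt.mpr hmi.le)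
      have hdisj' : Disjoint S' T := Finset.disjoint_of_subset_left (Finset.erase_subset _ _) hdisj
      have hsubset' : ∀ i ∈ S', Finset.Iio i ⊆ T ∪ S'.filter (· < i) := by
        intro i hi
        rw [hfilt i hi]
        exact hsubset i (Finset.mem_of_mem_erase hi)
      have hIH := ih S' hS'sub hdisj' hsubset'
      -- A := S' ∪ T
      have hmA : m ∉ S' ∪ T := by
        rw [Finset.mem_union]
        rintro (h | h)
        · exact absurd rfl (Finset.ne_of_mem_erase h)
        · exact (Finset.disjoint_left.mp hdisj hmS) h
      have hIio : Finset.Iio m ⊆ S' ∪ T := by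
        intro j hj
        have hjm : j < m := Finset.mem_Iio.mp hj
        have := hsubset m hmS hj
        rw [Finset.mem_union] at this ⊢
        rcases this with h | h
        · exact Or.inr h
        · refine Or.inl ?_
          rw [hS', Finset.mem_erase]
          exact ⟨hjm.ne, (Finset.mem_filter.mp h).1⟩
      have hstep : f (insert m (S' ∪ T)) - f (S' ∪ T) ≤ f (Finset.Iic m) - f (Finset.Iio m) := by
        have h := hsub (S' ∪ T) (Finset.Iic m)
        have h1 : (S' ∪ T) ∪ Finset.Iic m = insert m (S' ∪ T) := by
          rw [← Finset.Iio_insert]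
          ext x
          simp only [Finset.mem_union, Finset.mem_insert, Finset.mem_Iio]
          constructor
          · rintro (h | (h | h))
            exacts [Or.inr h, Or.inl h,
              Or.inr (Finset.mem_union.mp (hIio (Finset.mem_Iio.mpr h)))]
          · rintro (h | h)
            exacts [Or.inr (Or.inl h), Or.inl h]
        have h2 : (S' ∪ T) ∩ Finset.Iic m = Finset.Iio m := by
          ext x
          simp only [Finset.mem_inter, Finset.mem_Iic, Finset.mem_Iio]
          constructor
          · rintro ⟨hx, hxm⟩
            exact lt_of_le_of_ne hxm (by rintro rfl; exact hmA hx)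
          · intro hx
            exact ⟨hIio (Finset.mem_Iio.mpr hx), hx.le⟩
        rw [h1, h2] at h
        linarith
      have hSins : S = insert m S' := (Finset.insert_erase hmS).symm
      have hsum : ∑ i ∈ S, (f (Finset.Iic i) - f (Finset.Iio i))
          = (f (Finset.Iic m) - f (Finset.Iio m)) + ∑ i ∈ S', (f (Finset.Iic i) - f (Finset.Iio i)) :=
        (Finset.add_sum_erase S _ hmS).symm
      have hunion : S ∪ T = insert m (S' ∪ T) := by
        rw [hSins, Finset.insert_union]
      rw [hsum, hunion]
      linarith

-- double counting
lemma double_count {n : ℕ} (𝓕 : Finset (Finset (Fin n))) (γ : Finset (Fin n) → ℝ)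
    (hfrac : ∀ i : Fin n, ∑ S ∈ 𝓕.filter (fun S => i ∈ S), γ S = 1)
    (c : Fin n → ℝ) :
    ∑ S ∈ 𝓕, γ S * ∑ i ∈ S, c i = ∑ i : Fin n, c i := by
  calc ∑ S ∈ 𝓕, γ S * ∑ i ∈ S, c i
      = ∑ S ∈ 𝓕, ∑ i : Fin n, if i ∈ S then γ S * c i else 0 := by
        refine Finset.sum_congr rfl fun S _ => ?_
        rw [Finset.mul_sum, Finset.sum_ite_mem, Finset.univ_inter]
    _ = ∑ i : Fin n, ∑ S ∈ 𝓕, if i ∈ S then γ S * c i else 0 := Finset.sum_comm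
    _ = ∑ i : Fin n, ∑ S ∈ 𝓕.filter (fun S => i ∈ S), γ S * c i := by
        refine Finset.sum_congr rfl fun i _ => (Finset.sum_filter _ _).symm
    _ = ∑ i : Fin n, (∑ S ∈ 𝓕.filter (fun S => i ∈ S), γ S) * c i := by
        refine Finset.sum_congr rfl fun i _ => (Finset.sum_mul _ _ _).symm
    _ = ∑ i : Fin n, c i := by
        refine Finset.sum_congr rfl fun i _ => by rw [hfrac i, one_mul]

-- telescoping
lemma telescope {n : ℕ} (f : Finset (Fin n) → ℝ) (hf0 : f ∅ = 0) :
    ∑ i : Fin n, (f (Finset.Iic i) - f (Finset.Iio i)) = f Finset.univ := by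
  set h : ℕ → ℝ := fun k => f (Finset.univ.filter (fun i : Fin n => i.val < k)) with hh
  have h0 : h 0 = 0 := by simp [hh, hf0]
  have hn' : h n = f Finset.univ := by
    have : (Finset.univ.filter (fun i : Fin n => i.val < n)) = Finset.univ := by
      ext i; simp [i.isLt]
    simp [hh, this]
  have hIic : ∀ i : Fin n, Finset.Iic i = Finset.univ.filter (fun j : Fin n => j.val < i.val + 1) := by
    intro i; ext j
    simp only [Finset.mem_Iic, Finset.mem_filter, Finset.mem_univ, true_and, Fin.le_def]
    omega
  have hIio : ∀ i : Fin n, Finset.Iio i = Finset.univ.filter (fun j : Fin n => j.val < i.val) := by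
    intro i; ext j
    simp only [Finset.mem_Iio, Finset.mem_filter, Finset.mem_univ, true_and, Fin.lt_def]
  calc ∑ i : Fin n, (f (Finset.Iic i) - f (Finset.Iio i))
      = ∑ i : Fin n, (h (i.val + 1) - h i.val) := by
        refine Finset.sum_congr rfl fun i _ => by rw [hIic i, hIio i]
    _ = ∑ k ∈ Finset.range n, (h (k + 1) - h k) := Fin.sum_univ_eq_sum_range (fun k => h (k+1) - h k) n
    _ = h n - h 0 := Finset.sum_range_sub h n
    _ = f Finset.univ := by rw [h0, hn', sub_zero]

/-- `>S` : the set of indices greater than every index of `S`. -/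
def gtSet {n : ℕ} (S : Finset (Fin n)) : Finset (Fin n) :=
  Finset.univ.filter (fun i => ∀ j ∈ S, j < i)

/-- convex-functional generalization of the strong lower
Madiman–Tetali inequality (Theorem `SasonImprov`, part 2). -/
theorem stmt_1 (n : ℕ) (hn : 1 ≤ n)
    (𝓕 : Finset (Finset (Fin n))) (h𝓕 : ∀ S ∈ 𝓕, S.Nonempty)
    (γ : Finset (Fin n) → ℝ) (hγ : ∀ S ∈ 𝓕, 0 ≤ γ S)
    (hfrac : ∀ i : Fin n, ∑ S ∈ 𝓕.filter (fun S => i ∈ S), γ S = 1)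
    (f : Finset (Fin n) → ℝ)
    (hsub : ∀ S T : Finset (Fin n), f S + f T ≥ f (S ∪ T) + f (S ∩ T))
    (hf0 : f ∅ = 0)
    (g : ℝ → ℝ) (hg : Monotone g) (hconc : ConcaveOn ℝ Set.univ g) :
    g (f Finset.univ / n) ≥
      ∑ S ∈ 𝓕, (γ S * S.card / n) *
        g ((f (S ∪ (Sᶜ \ gtSet S)) - f (Sᶜ \ gtSet S)) / S.card) := by
  have hn0 : (0:ℝ) < n := by exact_mod_cast hn
  have hcond : ∀ S ∈ 𝓕, f (S ∪ (Sᶜ \ gtSet S)) - f (Sᶜ \ gtSet S)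
      ≤ ∑ i ∈ S, (f (Finset.Iic i) - f (Finset.Iio i)) := by
    intro S hS
    apply key_ineq f hsub
    · exact Finset.disjoint_of_subset_right Finset.sdiff_subset disjoint_compl_right
    · intro i hi j hj
      have hji : j < i := Finset.mem_Iio.mp hj
      by_cases hjS : j ∈ S
      · exact Finset.mem_union_right _ (Finset.mem_filter.mpr ⟨hjS, hji⟩)
      · apply Finset.mem_union_left
        rw [Finset.mem_sdiff]
        refine ⟨Finset.mem_compl.mpr hjS, ?_⟩
        simp only [gtSet, Finset.mem_filter, Finset.mem_univ, true_and]
        push_neg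
        exact ⟨i, hi, hji.le⟩
  have hsum1 : ∑ S ∈ 𝓕, γ S * (f (S ∪ (Sᶜ \ gtSet S)) - f (Sᶜ \ gtSet S)) ≤ f Finset.univ := by
    calc ∑ S ∈ 𝓕, γ S * (f (S ∪ (Sᶜ \ gtSet S)) - f (Sᶜ \ gtSet S))
        ≤ ∑ S ∈ 𝓕, γ S * ∑ i ∈ S, (f (Finset.Iic i) - f (Finset.Iio i)) :=
          Finset.sum_le_sum fun S hS => mul_le_mul_of_nonneg_left (hcond S hS) (hγ S hS)
      _ = ∑ i : Fin n, (f (Finset.Iic i) - f (Finset.Iio i)) := double_count 𝓕 γ hfrac _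
      _ = f Finset.univ := telescope f hf0
  have hcardsum : ∑ S ∈ 𝓕, γ S * (S.card : ℝ) = n := by
    have h := double_count 𝓕 γ hfrac (fun _ => (1:ℝ))
    simpa using h
  have hwsum : ∑ S ∈ 𝓕, γ S * (S.card : ℝ) / n = 1 := by
    rw [← Finset.sum_div, hcardsum, div_self hn0.ne']
  have hw0 : ∀ S ∈ 𝓕, 0 ≤ γ S * (S.card : ℝ) / n :=
    fun S hS => div_nonneg (mul_nonneg (hγ S hS) (Nat.cast_nonneg _)) hn0.le
  have hjensen := hconc.le_map_sum (t := 𝓕) (w := fun S => γ S * (S.card : ℝ) / n)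
    (p := fun S => (f (S ∪ (Sᶜ \ gtSet S)) - f (Sᶜ \ gtSet S)) / S.card)
    hw0 hwsum (fun S _ => Set.mem_univ _)
  simp only [smul_eq_mul] at hjensen
  have hpt : ∑ S ∈ 𝓕, (γ S * (S.card : ℝ) / n) *
        ((f (S ∪ (Sᶜ \ gtSet S)) - f (Sᶜ \ gtSet S)) / S.card)
      = (∑ S ∈ 𝓕, γ S * (f (S ∪ (Sᶜ \ gtSet S)) - f (Sᶜ \ gtSet S))) / n := by
    rw [Finset.sum_div]
    refine Finset.sum_congr rfl fun S hS => ?_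
    have hc : (S.card : ℝ) ≠ 0 := by exact_mod_cast (h𝓕 S hS).card_pos.ne'
    field_simp
  have h2 : (∑ S ∈ 𝓕, γ S * (f (S ∪ (Sᶜ \ gtSet S)) - f (Sᶜ \ gtSet S))) / n
      ≤ f Finset.univ / n := (div_le_div_iff_of_pos_right hn0).mpr hsum1
  calc ∑ S ∈ 𝓕, (γ S * (S.card : ℝ) / n) *
        g ((f (S ∪ (Sᶜ \ gtSet S)) - f (Sᶜ \ gtSet S)) / S.card)
      ≤ g (∑ S ∈ 𝓕, (γ S * (S.card : ℝ) / n) *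
          ((f (S ∪ (Sᶜ \ gtSet S)) - f (Sᶜ \ gtSet S)) / S.card)) := hjensen
    _ ≤ g (f Finset.univ / n) := hg (by rw [hpt]; exact h2)
end

section
/- Let n ≥ 1, let 𝓕 be a finite family of nonempty subsets of [n] with a fractional partition γ, let f : 2^[n] → ℝ be submodular with f(∅) = 0, and let g : ℝ → ℝ be monotonically non-decreasing and convex. Then g(f([n])/n) ≤ Σ_{S ∈ 𝓕} (γ(S)·|S|/n) · g( f(S) / |S| ). -/
/-- convex-functional generalization of the weak upper
Madiman–Tetali inequality (Corollary `WeakSasonImprov`, part 1). -/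
theorem stmt_2 (n : ℕ) (hn : 1 ≤ n)
    (𝓕 : Finset (Finset (Fin n))) (h𝓕 : ∀ S ∈ 𝓕, S.Nonempty)
    (γ : Finset (Fin n) → ℝ) (hγ : ∀ S ∈ 𝓕, 0 ≤ γ S)
    (hfrac : ∀ i : Fin n, ∑ S ∈ 𝓕.filter (fun S => i ∈ S), γ S = 1)
    (f : Finset (Fin n) → ℝ)
    (hsub : ∀ S T : Finset (Fin n), f S + f T ≥ f (S ∪ T) + f (S ∩ T))
    (hf0 : f ∅ = 0)
    (g : ℝ → ℝ) (hg : Monotone g) (hconv : ConvexOn ℝ Set.univ g) :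
    g (f Finset.univ / n) ≤
      ∑ S ∈ 𝓕, (γ S * S.card / n) * g (f S / S.card) := by
  classical
  have hn' : (0:ℝ) < n := by exact_mod_cast hn
  set P : ℕ → Finset (Fin n) := fun k => Finset.univ.filter (fun j => (j:ℕ) < k) with hP
  have hP0 : P 0 = ∅ := by ext j; simp [hP]
  have hPn : P n = Finset.univ := by ext j; simp [hP, j.isLt]
  set D : Fin n → ℝ := fun i => f (P (i.val+1)) - f (P i.val) with hD
  have hPsucc : ∀ i : Fin n, P (i.val+1) = insert i (P i.val) := by
    intro i; ext j
    simp only [hP, Finset.mem_filter, Finset.mem_univ, true_and, Finset.mem_insert,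
      Nat.lt_succ_iff_lt_or_eq, Fin.ext_iff]
    tauto
  have hiP : ∀ i : Fin n, i ∉ P i.val := by intro i; simp [hP]
  have tele : ∀ T : Finset (Fin n),
      ∑ i : Fin n, (f (T ∩ P (i.val+1)) - f (T ∩ P i.val)) = f T := by
    intro T
    rw [Fin.sum_univ_eq_sum_range (fun k => f (T ∩ P (k+1)) - f (T ∩ P k)) n,
        Finset.sum_range_sub (fun k => f (T ∩ P k)) n, hPn, hP0]
    simp [hf0]
  have key : ∀ S : Finset (Fin n), ∑ i : Fin n, (if i ∈ S then D i else 0) ≤ f S := by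
    intro S
    rw [← tele S]
    apply Finset.sum_le_sum
    intro i _
    by_cases hi : i ∈ S
    · simp only [hi, if_true, hD]
      have h1 : S ∩ P (i.val+1) = insert i (S ∩ P i.val) := by
        rw [hPsucc i, Finset.inter_insert_of_mem hi]
      have h2 : insert i (S ∩ P i.val) ∪ P i.val = P (i.val+1) := by
        rw [hPsucc i, Finset.insert_union,
          Finset.union_eq_right.mpr (Finset.inter_subset_right)]
      have h3 : insert i (S ∩ P i.val) ∩ P i.val = S ∩ P i.val := by
        rw [Finset.insert_inter_of_notMem (hiP i), Finset.inter_assoc,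
          Finset.inter_self]
      have := hsub (insert i (S ∩ P i.val)) (P i.val)
      rw [h2, h3] at this
      rw [h1]
      linarith
    · have h1 : S ∩ P (i.val+1) = S ∩ P i.val := by
        ext j
        simp only [Finset.mem_inter, hP, Finset.mem_filter, Finset.mem_univ, true_and,
          Nat.lt_succ_iff_lt_or_eq]
        constructor
        · rintro ⟨hjS, hj | hj⟩
          · exact ⟨hjS, hj⟩
          · exact absurd (Fin.ext hj ▸ hjS) hi
        · rintro ⟨hjS, hj⟩; exact ⟨hjS, Or.inl hj⟩
      simp [hi, h1]
  have huniv : f Finset.univ = ∑ i : Fin n, D i := by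
    rw [← tele Finset.univ]
    exact Finset.sum_congr rfl (fun i _ => by simp [hD])
  -- fractional subadditivity
  have h1 : f Finset.univ ≤ ∑ S ∈ 𝓕, γ S * f S := by
    have : f Finset.univ = ∑ S ∈ 𝓕, γ S * ∑ i : Fin n, (if i ∈ S then D i else 0) := by
      rw [huniv]
      have : ∀ i : Fin n, D i = ∑ S ∈ 𝓕, (if i ∈ S then γ S * D i else 0) := by
        intro i
        rw [← Finset.sum_filter]
        rw [← Finset.sum_mul, hfrac i, one_mul]
      rw [Finset.sum_congr rfl (fun i _ => this i), Finset.sum_comm]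
      apply Finset.sum_congr rfl
      intro S _
      rw [Finset.mul_sum]
      apply Finset.sum_congr rfl
      intro i _
      by_cases hi : i ∈ S <;> simp [hi]
    rw [this]
    apply Finset.sum_le_sum
    intro S hS
    exact mul_le_mul_of_nonneg_left (key S) (hγ S hS)
  -- weights
  set w : Finset (Fin n) → ℝ := fun S => γ S * S.card / n with hw
  have hw0 : ∀ S ∈ 𝓕, 0 ≤ w S := by
    intro S hS
    have := hγ S hS
    positivity
  have hwcard : ∀ S : Finset (Fin n), γ S * (S.card : ℝ) =
      ∑ i : Fin n, (if i ∈ S then γ S else 0) := by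
    intro S
    rw [Finset.sum_ite_mem, Finset.univ_inter, Finset.sum_const, nsmul_eq_mul, mul_comm]
  have hw1 : ∑ S ∈ 𝓕, w S = 1 := by
    have : ∑ S ∈ 𝓕, γ S * (S.card : ℝ) = n := by
      rw [Finset.sum_congr rfl (fun S _ => hwcard S), Finset.sum_comm]
      have : ∀ i : Fin n, ∑ S ∈ 𝓕, (if i ∈ S then γ S else 0) = 1 := by
        intro i
        rw [← Finset.sum_filter, hfrac i]
      rw [Finset.sum_congr rfl (fun i _ => this i)]
      simp
    simp only [hw, div_eq_mul_inv, ← Finset.sum_mul, this]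
    field_simp
  -- combine
  have hstep : f Finset.univ / n ≤ ∑ S ∈ 𝓕, w S * (f S / S.card) := by
    have : ∀ S ∈ 𝓕, w S * (f S / S.card) = γ S * f S / n := by
      intro S hS
      have hc : (S.card : ℝ) ≠ 0 := by
        have := (h𝓕 S hS).card_pos
        positivity
      simp only [hw]
      field_simp [hw]
    rw [Finset.sum_congr rfl this]
    rw [← Finset.sum_div]
    exact div_le_div_of_nonneg_right h1 hn'.le |>.trans_eq rfl
  calc g (f Finset.univ / n) ≤ g (∑ S ∈ 𝓕, w S * (f S / S.card)) := hg hstep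
    _ = g (∑ S ∈ 𝓕, w S • (f S / S.card)) := by simp [smul_eq_mul]
    _ ≤ ∑ S ∈ 𝓕, w S * g (f S / S.card) :=
        hconv.map_sum_le hw0 hw1 (fun S _ => Set.mem_univ _)
    _ = ∑ S ∈ 𝓕, (γ S * S.card / n) * g (f S / S.card) := by rfl
end

section
/- Let n ≥ 1, let 𝓕 be a finite family of nonempty subsets of [n] with a fractional partition γ, let f : 2^[n] → ℝ be submodular with f(∅) = 0, and let g : ℝ → ℝ be monotonically non-decreasing and concave. Then g(f([n])/n) ≥ Σ_{S ∈ 𝓕} (γ(S)·|S|/n) · g( f(S | S^c) / |S| ). -/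
/-- convex-functional generalization of the weak lower
Madiman–Tetali inequality (Corollary `WeakSasonImprov`, part 2). -/
theorem stmt_4 (n : ℕ) (hn : 1 ≤ n)
    (𝓕 : Finset (Finset (Fin n))) (h𝓕 : ∀ S ∈ 𝓕, S.Nonempty)
    (γ : Finset (Fin n) → ℝ) (hγ : ∀ S ∈ 𝓕, 0 ≤ γ S)
    (hfrac : ∀ i : Fin n, ∑ S ∈ 𝓕.filter (fun S => i ∈ S), γ S = 1)
    (f : Finset (Fin n) → ℝ)
    (hsub : ∀ S T : Finset (Fin n), f S + f T ≥ f (S ∪ T) + f (S ∩ T))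
    (hf0 : f ∅ = 0)
    (g : ℝ → ℝ) (hg : Monotone g) (hconc : ConcaveOn ℝ Set.univ g) :
    g (f Finset.univ / n) ≥
      ∑ S ∈ 𝓕, (γ S * S.card / n) *
        g ((f (S ∪ Sᶜ) - f Sᶜ) / S.card) := by
  have hn0 : (0:ℝ) < n := by exact_mod_cast hn
  -- diminishing returns
  have dim : ∀ (T T' : Finset (Fin n)) (i : Fin n), T ⊆ T' → i ∉ T' →
      f (insert i T') - f T' ≤ f (insert i T) - f T := by
    intro T T' i hTT hi
    have h := hsub (insert i T) T'
    have h1 : insert i T ∪ T' = insert i T' := by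
      rw [Finset.insert_union, Finset.union_eq_right.mpr hTT]
    have h2 : insert i T ∩ T' = T := by
      ext j
      simp only [Finset.mem_inter, Finset.mem_insert]
      constructor
      · rintro ⟨h | h, hj⟩
        · exact absurd (h ▸ hj) hi
        · exact h
      · intro h; exact ⟨Or.inr h, hTT h⟩
    rw [h1, h2] at h
    linarith
  -- prefix sets
  set P : ℕ → Finset (Fin n) := fun k => Finset.univ.filter (fun i => i.val < k) with hP
  have hP0 : P 0 = ∅ := by ext j; simp [hP]
  have hPn : P n = Finset.univ := by ext j; simp [hP, j.isLt]
  have hPins : ∀ i : Fin n, P (i.val + 1) = insert i (P i.val) := by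
    intro i; ext j
    simp only [hP, Finset.mem_filter, Finset.mem_univ, true_and, Finset.mem_insert]
    constructor
    · intro h
      rcases Nat.lt_succ_iff_lt_or_eq.mp h with h | h
      · exact Or.inr (by simpa using h)
      · exact Or.inl (Fin.ext h)
    · rintro (rfl | h)
      · exact Nat.lt_succ_self _
      · exact Nat.lt_succ_of_lt (by simpa using h)
  have hiP : ∀ i : Fin n, i ∉ P i.val := by
    intro i; simp [hP]
  -- telescoping: f univ = ∑ i, d i.val where d k = f (P (k+1)) - f (P k)
  have tel : ∑ k ∈ Finset.range n, (f (P (k+1)) - f (P k)) = f Finset.univ := by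
    rw [Finset.sum_range_sub (fun k => f (P k))]
    rw [hP0, hPn, hf0, sub_zero]
  -- key per-set bound
  have key : ∀ S : Finset (Fin n),
      f Finset.univ - f Sᶜ ≤ ∑ i ∈ S, (f (P (i.val+1)) - f (P i.val)) := by
    intro S
    set Q : ℕ → Finset (Fin n) := fun k => Sᶜ ∪ (S ∩ P k) with hQ
    have hQ0 : Q 0 = Sᶜ := by simp [hQ, hP0]
    have hQn : Q n = Finset.univ := by
      simp [hQ, hPn, Finset.union_comm, Finset.union_compl]
    have telQ : ∑ k ∈ Finset.range n, (f (Q (k+1)) - f (Q k)) = f Finset.univ - f Sᶜ := by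
      rw [Finset.sum_range_sub (fun k => f (Q k)), hQ0, hQn]
    set F : ℕ → ℝ := fun k => if h : k < n then
        (if (⟨k, h⟩ : Fin n) ∈ S then f (P (k+1)) - f (P k) else 0) else 0 with hF
    have hrange : ∑ i ∈ S, (f (P (i.val+1)) - f (P i.val)) = ∑ k ∈ Finset.range n, F k := by
      rw [← Fin.sum_univ_eq_sum_range F n]
      have hFi : ∀ i : Fin n, F i.val =
          if i ∈ S then f (P (i.val+1)) - f (P i.val) else 0 := by
        intro i
        rw [hF]
        simp only [i.isLt, dif_pos, Fin.eta]
      rw [Finset.sum_congr rfl (fun i _ => hFi i), Finset.sum_ite_mem, Finset.univ_inter]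
    rw [← telQ, hrange]
    apply Finset.sum_le_sum
    intro k hk
    have hkn : k < n := Finset.mem_range.mp hk
    rw [hF]
    simp only [hkn, dif_pos]
    have hPk := hPins ⟨k, hkn⟩
    have hiPk := hiP ⟨k, hkn⟩
    simp only [Fin.val_mk] at hPk hiPk
    by_cases hiS : (⟨k, hkn⟩ : Fin n) ∈ S
    · rw [if_pos hiS]
      have hQins : Q (k+1) = insert ⟨k, hkn⟩ (Q k) := by
        simp only [hQ]
        rw [hPk]
        ext j
        simp only [Finset.mem_union, Finset.mem_inter, Finset.mem_insert]
        constructor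
        · rintro (h | ⟨hj, hj2 | hj2⟩)
          · exact Or.inr (Or.inl h)
          · exact Or.inl hj2
          · exact Or.inr (Or.inr ⟨hj, hj2⟩)
        · rintro (rfl | h | ⟨hj, hj2⟩)
          · exact Or.inr ⟨hiS, Or.inl rfl⟩
          · exact Or.inl h
          · exact Or.inr ⟨hj, Or.inr hj2⟩
      have hPQ : P k ⊆ Q k := by
        intro j hj
        simp only [hQ]
        by_cases hjS : j ∈ S
        · exact Finset.mem_union_right _ (Finset.mem_inter.mpr ⟨hjS, hj⟩)
        · exact Finset.mem_union_left _ (Finset.mem_compl.mpr hjS)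
      have hiQ : (⟨k, hkn⟩ : Fin n) ∉ Q k := by
        simp only [hQ, Finset.mem_union, Finset.mem_compl, Finset.mem_inter, not_or]
        exact ⟨fun h => h hiS, fun h => hiPk h.2⟩
      have := dim (P k) (Q k) ⟨k, hkn⟩ hPQ hiQ
      rw [← hQins, ← hPk] at this
      exact this
    · rw [if_neg hiS]
      have : Q (k+1) = Q k := by
        simp only [hQ]
        rw [hPk]
        congr 1
        ext j
        simp only [Finset.mem_inter, Finset.mem_insert]
        constructor
        · rintro ⟨hj, rfl | hj2⟩
          · exact absurd hj hiS
          · exact ⟨hj, hj2⟩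
        · rintro ⟨hj, hj2⟩; exact ⟨hj, Or.inr hj2⟩
      rw [this, sub_self]
  -- weighted sum bound: ∑ γ S (f univ - f Sᶜ) ≤ f univ
  have swap : ∀ h : Fin n → ℝ, ∑ S ∈ 𝓕, γ S * ∑ i ∈ S, h i = ∑ i : Fin n, h i := by
    intro h
    have : ∀ S ∈ 𝓕, γ S * ∑ i ∈ S, h i = ∑ i : Fin n, (if i ∈ S then γ S * h i else 0) := by
      intro S _
      rw [Finset.sum_ite_mem, Finset.univ_inter, Finset.mul_sum]
    rw [Finset.sum_congr rfl this, Finset.sum_comm]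
    apply Finset.sum_congr rfl
    intro i _
    rw [← Finset.sum_filter]
    have : ∑ S ∈ 𝓕.filter (fun S => i ∈ S), γ S * h i =
        (∑ S ∈ 𝓕.filter (fun S => i ∈ S), γ S) * h i := by rw [Finset.sum_mul]
    rw [this, hfrac i, one_mul]
  have MT : ∑ S ∈ 𝓕, γ S * (f Finset.univ - f Sᶜ) ≤ f Finset.univ := by
    calc ∑ S ∈ 𝓕, γ S * (f Finset.univ - f Sᶜ)
        ≤ ∑ S ∈ 𝓕, γ S * ∑ i ∈ S, (f (P (i.val+1)) - f (P i.val)) := by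
          apply Finset.sum_le_sum
          intro S hS
          exact mul_le_mul_of_nonneg_left (key S) (hγ S hS)
      _ = ∑ i : Fin n, (f (P (i.val+1)) - f (P i.val)) :=
          swap (fun i => f (P (i.val+1)) - f (P i.val))
      _ = f Finset.univ := by
          rw [Fin.sum_univ_eq_sum_range (fun k => f (P (k+1)) - f (P k))]
          exact tel
  -- weights sum to 1
  have hwsum : ∑ S ∈ 𝓕, γ S * S.card / n = 1 := by
    have : ∑ S ∈ 𝓕, γ S * (S.card : ℝ) = n := by
      have h1 : ∀ S : Finset (Fin n), (S.card : ℝ) = ∑ i ∈ S, (1:ℝ) := by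
        intro S; simp
      calc ∑ S ∈ 𝓕, γ S * (S.card : ℝ) = ∑ S ∈ 𝓕, γ S * ∑ i ∈ S, (1:ℝ) := by
            apply Finset.sum_congr rfl; intro S _; rw [h1]
        _ = ∑ _i : Fin n, (1:ℝ) := swap (fun _ => 1)
        _ = n := by simp
    rw [← Finset.sum_div, this, div_self (ne_of_gt hn0)]
  -- Jensen
  set w : Finset (Fin n) → ℝ := fun S => γ S * S.card / n with hw
  set p : Finset (Fin n) → ℝ := fun S => (f (S ∪ Sᶜ) - f Sᶜ) / S.card with hp
  have hw0 : ∀ S ∈ 𝓕, 0 ≤ w S := by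
    intro S hS
    apply div_nonneg (mul_nonneg (hγ S hS) (Nat.cast_nonneg _)) (le_of_lt hn0)
  have jensen := hconc.le_map_sum hw0 hwsum (fun S _ => Set.mem_univ (p S))
  simp only [smul_eq_mul] at jensen
  refine le_trans jensen (hg ?_)
  -- ∑ w S * p S ≤ f univ / n
  have hwp : ∀ S ∈ 𝓕, w S * p S = γ S * (f Finset.univ - f Sᶜ) / n := by
    intro S hS
    have hc : (S.card : ℝ) ≠ 0 := by
      exact_mod_cast Finset.card_ne_zero_of_mem ((h𝓕 S hS).choose_spec)
    simp only [hw, hp, Finset.union_compl]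
    field_simp
  rw [Finset.sum_congr rfl hwp]
  rw [← Finset.sum_div]
  exact (div_le_div_iff_of_pos_right hn0).mpr MT
end

section
/- Let d ≥ 2 and let S be a nonempty finite set of n distinct points in ℝ^d. Then n^{d−1} ≤ ( Π_{i=2}^{d} n_{−i} ) · n*_{−1|x₁}, where for i ∈ {2,…,d}, n_{−i} is the cardinality of the projection of S onto the coordinate hyperplane obtained by deleting the i-th coordinate, and n*_{−1|x₁} is the maximum number of distinct points in the projection deleting the first coordinate among all points of S sharing a common first coordinate. -/
open Finset

/-- Generalized Hölder inequality in `ℝ≥0` with equal exponents. -/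
lemma holder_nnreal {ι κ : Type*} (T : Finset ι) (K : Finset κ) (hK : K.Nonempty)
    (a : ι → κ → NNReal) :
    ∑ t ∈ T, ∏ i ∈ K, a t i ^ ((K.card : ℝ)⁻¹) ≤
      ∏ i ∈ K, (∑ t ∈ T, a t i) ^ ((K.card : ℝ)⁻¹) := by
  have hkne : (K.card : NNReal) ≠ 0 := by exact_mod_cast ((Finset.card_pos.mpr hK)).ne'
  set r : ℝ := (K.card : ℝ)⁻¹ with hr
  have hr0 : 0 < r := by
    rw [hr]
    have : (0:ℝ) < (K.card : ℝ) := by exact_mod_cast (Finset.card_pos.mpr hK)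
    positivity
  by_cases hzero : ∃ i ∈ K, ∑ t ∈ T, a t i = 0
  · obtain ⟨i, hiK, hi⟩ := hzero
    have hLHS : ∑ t ∈ T, ∏ j ∈ K, a t j ^ r = 0 := by
      apply Finset.sum_eq_zero
      intro t ht
      apply Finset.prod_eq_zero hiK
      rw [Finset.sum_eq_zero_iff.mp hi t ht, NNReal.zero_rpow hr0.ne']
    rw [hLHS]; exact zero_le
  push_neg at hzero
  set A : κ → NNReal := fun i => ∑ t ∈ T, a t i with hA
  set w : κ → NNReal := fun _ => (K.card : NNReal)⁻¹ with hw
  have hw1 : ∑ i ∈ K, w i = 1 := by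
    rw [hw, Finset.sum_const, nsmul_eq_mul, mul_inv_cancel₀ hkne]
  have key : ∑ t ∈ T, ∏ i ∈ K, (a t i / A i) ^ r ≤ 1 := by
    calc ∑ t ∈ T, ∏ i ∈ K, (a t i / A i) ^ r
        ≤ ∑ t ∈ T, ∑ i ∈ K, w i * (a t i / A i) := by
          apply Finset.sum_le_sum
          intro t _
          have h := NNReal.geom_mean_le_arith_mean_weighted K w (fun i => a t i / A i) hw1
          have hwr : ∀ i : κ, ((w i : NNReal) : ℝ) = r := by
            intro i; rw [hw, hr]; push_cast; rfl
          simpa only [hwr] using h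
      _ = ∑ i ∈ K, w i * (∑ t ∈ T, a t i / A i) := by
          rw [Finset.sum_comm]
          exact Finset.sum_congr rfl fun i _ => (Finset.mul_sum _ _ _).symm
      _ = ∑ i ∈ K, w i := by
          apply Finset.sum_congr rfl
          intro i hi
          rw [← Finset.sum_div, div_self (hzero i hi), mul_one]
      _ = 1 := hw1
  calc ∑ t ∈ T, ∏ i ∈ K, a t i ^ r
      = ∑ t ∈ T, (∏ i ∈ K, (a t i / A i) ^ r) * ∏ i ∈ K, A i ^ r := by
        apply Finset.sum_congr rfl
        intro t _
        rw [← Finset.prod_mul_distrib]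
        apply Finset.prod_congr rfl
        intro i hi
        rw [← NNReal.mul_rpow, div_mul_cancel₀ _ (hzero i hi)]
    _ = (∑ t ∈ T, ∏ i ∈ K, (a t i / A i) ^ r) * ∏ i ∈ K, A i ^ r := by
        rw [Finset.sum_mul]
    _ ≤ 1 * ∏ i ∈ K, A i ^ r := by
        exact mul_le_mul_of_nonneg_right key zero_le
    _ = ∏ i ∈ K, A i ^ r := one_mul _

/-- Hölder-type inequality for natural numbers. -/
lemma holder_nat {ι κ : Type*} (T : Finset ι) (K : Finset κ) (hK : K.Nonempty)
    (c : ℕ) (f : ι → ℕ) (a : ι → κ → ℕ)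
    (H : ∀ t ∈ T, f t ^ K.card ≤ c * ∏ i ∈ K, a t i) :
    (∑ t ∈ T, f t) ^ K.card ≤ c * ∏ i ∈ K, ∑ t ∈ T, a t i := by
  have hkpos : 0 < K.card := (Finset.card_pos.mpr hK)
  set r : ℝ := (K.card : ℝ)⁻¹ with hr
  have hkR : ((K.card : ℝ)) ≠ 0 := by exact_mod_cast hkpos.ne'
  have hrk : ∀ x : NNReal, (x ^ r) ^ K.card = x := by
    intro x
    rw [← NNReal.rpow_natCast (x ^ r) K.card, ← NNReal.rpow_mul, hr,
      inv_mul_cancel₀ hkR, NNReal.rpow_one]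
  have hstep : ∀ t ∈ T, (f t : NNReal) ≤ (c : NNReal) ^ r * ∏ i ∈ K, (a t i : NNReal) ^ r := by
    intro t ht
    have h1 : ((f t : NNReal)) ^ K.card ≤ (c : NNReal) * ∏ i ∈ K, (a t i : NNReal) := by
      have := H t ht
      exact_mod_cast this
    have h2 : (f t : NNReal) = (((f t : NNReal)) ^ K.card) ^ r := by
      rw [← NNReal.rpow_natCast (f t : NNReal) K.card, ← NNReal.rpow_mul,
        mul_inv_cancel₀ hkR, NNReal.rpow_one]
    rw [h2]
    calc (((f t : NNReal)) ^ K.card) ^ r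
        ≤ ((c : NNReal) * ∏ i ∈ K, (a t i : NNReal)) ^ r := by
          exact NNReal.rpow_le_rpow h1 (inv_nonneg.mpr (Nat.cast_nonneg _))
      _ = (c : NNReal) ^ r * (∏ i ∈ K, (a t i : NNReal)) ^ r := by
          rw [NNReal.mul_rpow]
      _ = (c : NNReal) ^ r * ∏ i ∈ K, (a t i : NNReal) ^ r := by
          rw [NNReal.finset_prod_rpow]
  have hsum : (∑ t ∈ T, (f t : NNReal)) ≤
      (c : NNReal) ^ r * ∏ i ∈ K, (∑ t ∈ T, (a t i : NNReal)) ^ r := by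
    calc ∑ t ∈ T, (f t : NNReal)
        ≤ ∑ t ∈ T, (c : NNReal) ^ r * ∏ i ∈ K, (a t i : NNReal) ^ r :=
          Finset.sum_le_sum hstep
      _ = (c : NNReal) ^ r * ∑ t ∈ T, ∏ i ∈ K, (a t i : NNReal) ^ r := by
          rw [← Finset.mul_sum]
      _ ≤ (c : NNReal) ^ r * ∏ i ∈ K, (∑ t ∈ T, (a t i : NNReal)) ^ r := by
          exact mul_le_mul_of_nonneg_left (holder_nnreal T K hK _) zero_le
  have hfin : ((∑ t ∈ T, f t : ℕ) : NNReal) ^ K.card ≤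
      ((c * ∏ i ∈ K, ∑ t ∈ T, a t i : ℕ) : NNReal) := by
    push_cast
    calc (∑ t ∈ T, (f t : NNReal)) ^ K.card
        ≤ ((c : NNReal) ^ r * ∏ i ∈ K, (∑ t ∈ T, (a t i : NNReal)) ^ r) ^ K.card := by
          exact pow_le_pow_left₀ zero_le hsum K.card
      _ = (c : NNReal) * ∏ i ∈ K, ∑ t ∈ T, (a t i : NNReal) := by
          rw [mul_pow, hrk, ← Finset.prod_pow]
          congr 1
          exact Finset.prod_congr rfl fun i _ => hrk _
  exact_mod_cast hfin

open Finset

section Proj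

variable {ι : Type*} [DecidableEq ι]

/-- Projection of a finite point set onto the coordinates in `B`. -/
noncomputable def proj (B : Finset ι) (S : Finset (ι → ℝ)) : Finset ({j // j ∈ B} → ℝ) :=
  S.image (fun p => fun j : {j // j ∈ B} => p j.1)

lemma proj_card_mono (B : Finset ι) {S S' : Finset (ι → ℝ)} (h : S' ⊆ S) :
    (proj B S').card ≤ (proj B S).card :=
  Finset.card_le_card (Finset.image_subset_image h)

lemma proj_nonempty (B : Finset ι) {S : Finset (ι → ℝ)} (h : S.Nonempty) :
    (proj B S).Nonempty := h.image _

lemma proj_univ_card [Fintype ι] (T : Finset (ι → ℝ)) :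
    (proj Finset.univ T).card = T.card := by
  apply Finset.card_image_of_injective
  intro p q h
  funext x
  exact congrFun h ⟨x, Finset.mem_univ x⟩

lemma card_proj_insert_of_const (i₀ : ι) (C : Finset ι) (t : ℝ) (T : Finset (ι → ℝ))
    (hT : ∀ p ∈ T, p i₀ = t) :
    (proj (insert i₀ C) T).card = (proj C T).card := by
  classical
  have himg : proj C T = (proj (insert i₀ C) T).image
      (fun g => fun j : {j // j ∈ C} => g ⟨j.1, Finset.mem_insert_of_mem j.2⟩) := by
    rw [proj, proj, Finset.image_image]
    rfl
  have hinj : Set.InjOn (fun g : {j // j ∈ insert i₀ C} → ℝ => fun j : {j // j ∈ C} => g ⟨j.1, Finset.mem_insert_of_mem j.2⟩)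
      (↑(proj (insert i₀ C) T) : Set ({j // j ∈ insert i₀ C} → ℝ)) := by
    intro g₁ hg₁ g₂ hg₂ hG12
    rw [Finset.mem_coe] at hg₁ hg₂
    simp only [proj] at hg₁ hg₂
    obtain ⟨p₁, hp₁, rfl⟩ := Finset.mem_image.mp hg₁
    obtain ⟨p₂, hp₂, rfl⟩ := Finset.mem_image.mp hg₂
    funext j
    rcases Finset.mem_insert.mp j.2 with h | h
    · show p₁ j.1 = p₂ j.1
      rw [h, hT p₁ hp₁, hT p₂ hp₂]
    · exact congrFun hG12 ⟨j.1, h⟩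
  rw [himg, Finset.card_image_of_injOn hinj]

lemma proj_insert_card (i₀ : ι) (C : Finset ι) (S : Finset (ι → ℝ)) :
    (proj (insert i₀ C) S).card =
      ∑ t ∈ S.image (fun p => p i₀), (proj C (S.filter (fun p => p i₀ = t))).card := by
  classical
  have hmem : i₀ ∈ insert i₀ C := Finset.mem_insert_self _ _
  rw [Finset.card_eq_sum_card_image
    (fun g => g (⟨i₀, hmem⟩ : {j // j ∈ insert i₀ C})) (proj (insert i₀ C) S)]
  have himg : (proj (insert i₀ C) S).image (fun g => g ⟨i₀, hmem⟩)
      = S.image (fun p => p i₀) := by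
    rw [proj, Finset.image_image]
    rfl
  rw [himg]
  apply Finset.sum_congr rfl
  intro t ht
  have hfil : Finset.filter (fun g => g ⟨i₀, hmem⟩ = t) (proj (insert i₀ C) S)
      = proj (insert i₀ C) (S.filter fun p => p i₀ = t) := by
    rw [proj, proj, Finset.filter_image]
  rw [hfil]
  exact card_proj_insert_of_const i₀ C t _ (fun p hp => (Finset.mem_filter.mp hp).2)

lemma card_eq_proj_card [Fintype ι] (i₀ : ι) (C : Finset ι) (t : ℝ)
    (hC : insert i₀ C = Finset.univ) (T : Finset (ι → ℝ)) (hT : ∀ p ∈ T, p i₀ = t) :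
    T.card = (proj C T).card := by
  rw [← proj_univ_card T, ← hC]
  exact card_proj_insert_of_const i₀ C t T hT

lemma card_restrict_congr (S : Finset (ι → ℝ)) (P Q : ι → Prop)
    [DecidableEq ({j // P j} → ℝ)] [DecidableEq ({j // Q j} → ℝ)] (h : ∀ j, P j ↔ Q j) :
    (S.image fun p => fun j : {j // P j} => p j.1).card =
    (S.image fun p => fun j : {j // Q j} => p j.1).card := by
  set F : ({j // P j} → ℝ) → ({j // Q j} → ℝ) :=
    fun g => fun j => g ⟨j.1, (h j.1).mpr j.2⟩ with hF
  have himg : (S.image fun p => fun j : {j // Q j} => p j.1)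
      = (S.image fun p => fun j : {j // P j} => p j.1).image F := by
    rw [Finset.image_image]
    rfl
  have hFinj : Function.Injective F := by
    intro g₁ g₂ hg
    funext j
    have h1 : g₁ ⟨j.1, (h j.1).mpr ((h j.1).mp j.2)⟩ = g₂ ⟨j.1, (h j.1).mpr ((h j.1).mp j.2)⟩ :=
      congrFun hg ⟨j.1, (h j.1).mp j.2⟩
    have e : (⟨j.1, (h j.1).mpr ((h j.1).mp j.2)⟩ : {j // P j}) = j := Subtype.ext rfl
    rwa [e] at h1
  rw [himg, Finset.card_image_of_injective _ hFinj]

end Proj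

/-- Discrete Loomis–Whitney inequality. -/
lemma lw {ι : Type*} [DecidableEq ι] (B : Finset ι) :
    ∀ S : Finset (ι → ℝ), S.Nonempty →
      (proj B S).card ^ (B.card - 1) ≤ ∏ i ∈ B, (proj (B.erase i) S).card := by
  classical
  induction B using Finset.strongInduction with
  | _ B ih =>
    intro S hS
    by_cases hB : B.card ≤ 1
    · have h0 : B.card - 1 = 0 := by omega
      rw [h0, pow_zero]
      apply Finset.one_le_prod'
      intro i _
      exact Finset.card_pos.mpr (proj_nonempty _ hS)
    · push_neg at hB
      obtain ⟨i₀, hi₀⟩ := Finset.card_pos.mp (show 0 < B.card by omega)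
      have hB'card : (B.erase i₀).card = B.card - 1 := Finset.card_erase_of_mem hi₀
      have hB'ne : (B.erase i₀).Nonempty := Finset.card_pos.mp (by rw [hB'card]; omega)
      have hBi : B = insert i₀ (B.erase i₀) := (Finset.insert_erase hi₀).symm
      have hi₀B' : i₀ ∉ B.erase i₀ := Finset.notMem_erase _ _
      have h1 : (proj B S).card
          = ∑ t ∈ S.image (fun p => p i₀),
              (proj (B.erase i₀) (S.filter fun p => p i₀ = t)).card := by
        conv_lhs => rw [hBi]
        exact proj_insert_card i₀ (B.erase i₀) S
      have H : ∀ t ∈ S.image (fun p => p i₀),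
          (proj (B.erase i₀) (S.filter fun p => p i₀ = t)).card ^ (B.erase i₀).card ≤
            (proj (B.erase i₀) S).card *
              ∏ i ∈ B.erase i₀, (proj ((B.erase i₀).erase i) (S.filter fun p => p i₀ = t)).card := by
        intro t ht
        obtain ⟨p, hp, hpt⟩ := Finset.mem_image.mp ht
        have hStne : (S.filter fun q => q i₀ = t).Nonempty :=
          ⟨p, Finset.mem_filter.mpr ⟨hp, hpt⟩⟩
        have hk : (B.erase i₀).card = 1 + ((B.erase i₀).card - 1) :=
          (Nat.add_sub_cancel' hB'ne.card_pos).symm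
        rw [hk, pow_add, pow_one]
        have hle1 := ih (B.erase i₀) (Finset.erase_ssubset hi₀) (S.filter fun q => q i₀ = t) hStne
        have hle2 : (proj (B.erase i₀) (S.filter fun q => q i₀ = t)).card
            ≤ (proj (B.erase i₀) S).card :=
          proj_card_mono _ (Finset.filter_subset _ _)
        exact Nat.mul_le_mul hle2 hle1
      have hHol := holder_nat (S.image (fun p => p i₀)) (B.erase i₀) hB'ne
        ((proj (B.erase i₀) S).card)
        (fun t => (proj (B.erase i₀) (S.filter fun p => p i₀ = t)).card)
        (fun t i => (proj ((B.erase i₀).erase i) (S.filter fun p => p i₀ = t)).card) H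
      have h2 : ∀ i ∈ B.erase i₀,
          (∑ t ∈ S.image (fun p => p i₀),
            (proj ((B.erase i₀).erase i) (S.filter fun p => p i₀ = t)).card)
          = (proj (B.erase i) S).card := by
        intro i hi
        have hii : i ≠ i₀ := (Finset.mem_erase.mp hi).1
        have hiB : i ∈ B := (Finset.mem_erase.mp hi).2
        have hset : insert i₀ ((B.erase i₀).erase i) = B.erase i := by
          ext j
          simp only [Finset.mem_insert, Finset.mem_erase]
          constructor
          · rintro (rfl | ⟨hj1, hj2, hj3⟩)
            · exact ⟨Ne.symm hii, hi₀⟩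
            · exact ⟨hj1, hj3⟩
          · rintro ⟨hji, hjB⟩
            by_cases hj : j = i₀
            · exact Or.inl hj
            · exact Or.inr ⟨hji, hj, hjB⟩
        rw [← hset]
        exact (proj_insert_card i₀ ((B.erase i₀).erase i) S).symm
      rw [Finset.prod_congr rfl h2] at hHol
      calc (proj B S).card ^ (B.card - 1)
          = (∑ t ∈ S.image (fun p => p i₀),
              (proj (B.erase i₀) (S.filter fun p => p i₀ = t)).card) ^ (B.erase i₀).card := by
            rw [← h1, hB'card]
        _ ≤ (proj (B.erase i₀) S).card * ∏ i ∈ B.erase i₀, (proj (B.erase i) S).card := hHol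
        _ = ∏ i ∈ B, (proj (B.erase i) S).card :=
            Finset.mul_prod_erase B (fun i => (proj (B.erase i) S).card) hi₀

set_option maxHeartbeats 1000000 in
/-- strong Loomis–Whitney-type inequality in ℝ^d (`d ≥ 2`):
`n^{d-1} ≤ (∏_{i=2}^d n_{-i}) · n*_{-1|x₁}`, where coordinates are indexed
by `Fin d` (index `0` plays the role of the first coordinate `x₁`). -/
theorem stmt_9 (d : ℕ) (hd : 2 ≤ d) (S : Finset (Fin d → ℝ)) (hS : S.Nonempty) :
    S.card ^ (d - 1) ≤
      (∏ i ∈ Finset.univ.filter (fun i : Fin d => i ≠ ⟨0, by omega⟩),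
        (S.image (fun p => fun j : {j : Fin d // j ≠ i} => p j)).card) *
      ((S.image (fun p => p ⟨0, by omega⟩)).sup (fun x =>
        ((S.filter (fun p => p ⟨0, by omega⟩ = x)).image
          (fun p => fun j : {j : Fin d // j ≠ ⟨0, by omega⟩} => p j)).card)) := by
  set i₀ : Fin d := ⟨0, by omega⟩ with hi₀def
  set B : Finset (Fin d) := Finset.univ.erase i₀ with hBdef
  set m : ℕ := (S.image (fun p => p i₀)).sup (fun x =>
      ((S.filter (fun p => p i₀ = x)).image
        (fun p => fun j : {j : Fin d // j ≠ i₀} => p j)).card) with hm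
  have hBcard : B.card = d - 1 := by
    rw [hBdef, Finset.card_erase_of_mem (Finset.mem_univ _), Finset.card_univ, Fintype.card_fin]
  have hBne : B.Nonempty :=
    ⟨⟨1, lt_of_lt_of_le one_lt_two hd⟩, by rw [hBdef]; exact Finset.mem_erase.mpr ⟨by simp [hi₀def, Fin.ext_iff], Finset.mem_univ _⟩⟩
  have hins : insert i₀ B = Finset.univ := Finset.insert_erase (Finset.mem_univ i₀)
  have hmemB : ∀ j : Fin d, j ∈ B ↔ j ≠ i₀ := by
    intro j; rw [hBdef]; simp [Finset.mem_erase]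
  have hA : S.card = ∑ t ∈ S.image (fun p => p i₀),
      (proj B (S.filter fun p => p i₀ = t)).card := by
    rw [Finset.card_eq_sum_card_image (fun p => p i₀) S]
    apply Finset.sum_congr rfl
    intro t ht
    exact card_eq_proj_card i₀ B t hins _ (fun p hp => (Finset.mem_filter.mp hp).2)
  have hfm : ∀ t ∈ S.image (fun p => p i₀),
      (proj B (S.filter fun p => p i₀ = t)).card ≤ m := by
    intro t ht
    have hc : (proj B (S.filter fun p => p i₀ = t)).card
        = ((S.filter (fun p => p i₀ = t)).image
            (fun p => fun j : {j : Fin d // j ≠ i₀} => p j)).card :=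
      card_restrict_congr _ _ _ hmemB
    rw [hc, hm]
    exact Finset.le_sup (f := fun x => ((S.filter (fun p => p i₀ = x)).image
      (fun p => fun j : {j : Fin d // j ≠ i₀} => p j)).card) ht
  have hH : ∀ t ∈ S.image (fun p => p i₀),
      (proj B (S.filter fun p => p i₀ = t)).card ^ B.card ≤
        m * ∏ i ∈ B, (proj (B.erase i) (S.filter fun p => p i₀ = t)).card := by
    intro t ht
    obtain ⟨p, hp, hpt⟩ := Finset.mem_image.mp ht
    have hne : (S.filter fun q => q i₀ = t).Nonempty := ⟨p, Finset.mem_filter.mpr ⟨hp, hpt⟩⟩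
    have h1 := lw B (S.filter fun q => q i₀ = t) hne
    have hk : B.card = 1 + (B.card - 1) := (Nat.add_sub_cancel' hBne.card_pos).symm
    rw [hk, pow_add, pow_one]
    exact Nat.mul_le_mul (hfm t ht) h1
  have hHol := holder_nat (S.image (fun p => p i₀)) B hBne m
    (fun t => (proj B (S.filter fun p => p i₀ = t)).card)
    (fun t i => (proj (B.erase i) (S.filter fun p => p i₀ = t)).card) hH
  have hsum : ∀ i ∈ B, (∑ t ∈ S.image (fun p => p i₀),
      (proj (B.erase i) (S.filter fun p => p i₀ = t)).card)
      = (proj (Finset.univ.erase i) S).card := by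
    intro i hi
    have hii : i ≠ i₀ := (hmemB i).mp hi
    have hset : insert i₀ (B.erase i) = Finset.univ.erase i := by
      ext j
      simp only [Finset.mem_insert, Finset.mem_erase, Finset.mem_univ, and_true, hBdef]
      constructor
      · rintro (rfl | ⟨hj1, hj2⟩)
        · exact Ne.symm hii
        · exact hj1
      · intro hji
        by_cases hj : j = i₀
        · exact Or.inl hj
        · exact Or.inr ⟨hji, hj⟩
    rw [← hset]
    exact (proj_insert_card i₀ (B.erase i) S).symm
  rw [Finset.prod_congr rfl hsum] at hHol
  have hfilter : Finset.univ.filter (fun i : Fin d => i ≠ i₀) = B := by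
    rw [hBdef]; exact Finset.filter_ne' _ _
  have hproj : ∀ i : Fin d, (proj (Finset.univ.erase i) S).card
      = (S.image (fun p => fun j : {j : Fin d // j ≠ i} => p j)).card := by
    intro i
    exact card_restrict_congr S _ _ (fun j => by simp [Finset.mem_erase])
  calc S.card ^ (d - 1)
      = (∑ t ∈ S.image (fun p => p i₀),
          (proj B (S.filter fun p => p i₀ = t)).card) ^ B.card := by rw [← hA, hBcard]
    _ ≤ m * ∏ i ∈ B, (proj (Finset.univ.erase i) S).card := hHol
    _ = (∏ i ∈ Finset.univ.filter (fun i : Fin d => i ≠ i₀),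
          (S.image (fun p => fun j : {j : Fin d // j ≠ i} => p j)).card) * m := by
        rw [mul_comm, hfilter]
        congr 1
        exact Finset.prod_congr rfl (fun i _ => hproj i)
end

section
/- Let n ≥ 1, let V be a nonempty subset of {−1,1}^n, let 𝓕 be a nonempty finite family of nonempty subsets of [n], and let G be the simple graph on V in which distinct x, y ∈ V are adjacent iff Δ(x,y) ∈ 𝓕. Let r := max_{S ∈ 𝓕} |S|. For each d ∈ [r] let 𝓕_d := {S ∈ 𝓕 : |S| = d}, and suppose for each d with 𝓕_d ≠ ∅: (i) there exist x ∈ V and S ∈ 𝓕_d with x̄^{(S)} ∈ V, and x ∈ V and S ∈ 𝓕_d with x̄^{(S)} ∉ V, so that m_d and ℓ_d are well-defined, and (ii) m_d > ℓ_d. Then |E(G)| ≤ Σ_{d : 𝓕_d ≠ ∅} |V| · ( (|𝓕_d| − t_d)·log|V| − |𝓕_d|·log ℓ_d ) / ( 2·log(m_d/ℓ_d) ), where log is the natural logarithm. -/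
/-- `x̄^{(S)}` : negate the coordinates of `x` lying in `S`. -/
def flipCoords {n : ℕ} (x : Fin n → ℤ) (S : Finset (Fin n)) : Fin n → ℤ :=
  fun i => if i ∈ S then -x i else x i

section Stmt10Aux
variable {n : ℕ}



noncomputable def phiR (a b : ℝ) : ℝ :=
  (a+b) * Real.log (a+b) - a * Real.log a - b * Real.log b

/-- half of the log-sum inequality -/
lemma logsum (a c s t : ℝ) (ha : 0 ≤ a) (hc : 0 ≤ c) (has : a ≤ s) (hct : c ≤ t) :
    a * Real.log s - a * Real.log a + (c * Real.log t - c * Real.log c)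
      ≤ (a+c) * Real.log (s+t) - (a+c) * Real.log (a+c) := by
  rcases eq_or_lt_of_le ha with h0 | hapos
  · subst_vars
    rcases eq_or_lt_of_le hc with h0 | hcpos
    · simp [← h0]
    · have ht : (0:ℝ) < t := lt_of_lt_of_le hcpos hct
      have : Real.log t ≤ Real.log (s+t) :=
        Real.log_le_log ht (by linarith)
      simp only [zero_mul, sub_zero, zero_add, neg_zero]
      nlinarith
  · rcases eq_or_lt_of_le hc with h0 | hcpos
    · have hcz : c = 0 := h0.symm
      subst hcz
      have hs : (0:ℝ) < s := lt_of_lt_of_le hapos has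
      have : Real.log s ≤ Real.log (s+t) :=
        Real.log_le_log hs (by linarith)
      simp only [zero_mul, sub_zero, add_zero, neg_zero]
      nlinarith
    · have hs : (0:ℝ) < s := lt_of_lt_of_le hapos has
      have ht : (0:ℝ) < t := lt_of_lt_of_le hcpos hct
      have hac : (0:ℝ) < a + c := by linarith
      have hst : (0:ℝ) < s + t := by linarith
      have h1 : Real.log (s * (a+c) / (a * (s+t))) ≤ s * (a+c) / (a * (s+t)) - 1 :=
        Real.log_le_sub_one_of_pos (by positivity)
      have h2 : Real.log (t * (a+c) / (c * (s+t))) ≤ t * (a+c) / (c * (s+t)) - 1 :=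
        Real.log_le_sub_one_of_pos (by positivity)
      have e1 : Real.log (s * (a+c) / (a * (s+t)))
          = Real.log s + Real.log (a+c) - Real.log a - Real.log (s+t) := by
        rw [Real.log_div (by positivity) (by positivity), Real.log_mul (by positivity) (by positivity),
          Real.log_mul (by positivity) (by positivity)]; ring
      have e2 : Real.log (t * (a+c) / (c * (s+t)))
          = Real.log t + Real.log (a+c) - Real.log c - Real.log (s+t) := by
        rw [Real.log_div (by positivity) (by positivity), Real.log_mul (by positivity) (by positivity),
          Real.log_mul (by positivity) (by positivity)]; ring
      rw [e1] at h1; rw [e2] at h2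
      have k1 : a * (Real.log s + Real.log (a+c) - Real.log a - Real.log (s+t))
          ≤ s * (a+c) / (s+t) - a := by
        have := mul_le_mul_of_nonneg_left h1 (le_of_lt hapos)
        calc a * (Real.log s + Real.log (a+c) - Real.log a - Real.log (s+t))
            ≤ a * (s * (a+c) / (a * (s+t)) - 1) := this
          _ = s * (a+c) / (s+t) - a := by field_simp
      have k2 : c * (Real.log t + Real.log (a+c) - Real.log c - Real.log (s+t))
          ≤ t * (a+c) / (s+t) - c := by
        have := mul_le_mul_of_nonneg_left h2 (le_of_lt hcpos)
        calc c * (Real.log t + Real.log (a+c) - Real.log c - Real.log (s+t))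
            ≤ c * (t * (a+c) / (c * (s+t)) - 1) := this
          _ = t * (a+c) / (s+t) - c := by field_simp
      have hsum : s * (a+c) / (s+t) + t * (a+c) / (s+t) = a + c := by
        field_simp
      nlinarith [k1, k2]

lemma phiR_superadd (a b c d : ℝ) (ha : 0 ≤ a) (hb : 0 ≤ b) (hc : 0 ≤ c) (hd : 0 ≤ d) :
    phiR a b + phiR c d ≤ phiR (a+c) (b+d) := by
  have h1 := logsum a c (a+b) (c+d) ha hc (by linarith) (by linarith)
  have h2 := logsum b d (a+b) (c+d) hb hd (by linarith) (by linarith)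
  have e : (a+c) + (b+d) = (a+b) + (c+d) := by ring
  unfold phiR
  rw [e]
  nlinarith [h1, h2]

lemma phiR_zero : phiR 0 0 = 0 := by simp [phiR]

lemma sum_phiR_le {α : Type*} (s : Finset α) (a b : α → ℕ) :
    ∑ j ∈ s, phiR (a j) (b j) ≤ phiR (∑ j ∈ s, (a j : ℝ)) (∑ j ∈ s, (b j : ℝ)) := by
  classical
  induction s using Finset.induction_on with
  | empty => simp [phiR_zero]
  | insert _ _ hx ih =>
    rename_i x s
    rw [Finset.sum_insert hx, Finset.sum_insert hx, Finset.sum_insert hx]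
    calc phiR (a x) (b x) + ∑ j ∈ s, phiR (a j) (b j)
        ≤ phiR (a x) (b x) + phiR (∑ j ∈ s, (a j : ℝ)) (∑ j ∈ s, (b j : ℝ)) := by linarith
      _ ≤ phiR ((a x) + ∑ j ∈ s, (a j : ℝ)) ((b x) + ∑ j ∈ s, (b j : ℝ)) :=
        phiR_superadd _ _ _ _ (by positivity) (by positivity) (by positivity) (by positivity)



/-- restriction key: coordinates in `A`, zero elsewhere -/
def res (A : Finset (Fin n)) (x : Fin n → ℤ) : Fin n → ℤ :=
  fun i => if i ∈ A then x i else 0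

/-- the class of `x` in `V` w.r.t. agreement on `A` -/
def cl (V : Finset (Fin n → ℤ)) (A : Finset (Fin n)) (x : Fin n → ℤ) : Finset (Fin n → ℤ) :=
  V.filter (fun y => ∀ i ∈ A, y i = x i)

lemma res_eq_iff {A : Finset (Fin n)} {x y : Fin n → ℤ} :
    res A y = res A x ↔ ∀ i ∈ A, y i = x i := by
  constructor
  · intro h i hi
    have := congrFun h i
    simpa [res, hi] using this
  · intro h
    funext i
    by_cases hi : i ∈ A <;> simp [res, hi, h]

lemma cl_eq_fiber (V : Finset (Fin n → ℤ)) (A : Finset (Fin n)) (x : Fin n → ℤ) :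
    cl V A x = V.filter (fun y => res A y = res A x) := by
  apply Finset.filter_congr
  intro y _
  simp [res_eq_iff]

lemma res_res {A B : Finset (Fin n)} (hBA : B ⊆ A) (x : Fin n → ℤ) :
    res B (res A x) = res B x := by
  funext i
  by_cases hi : i ∈ B <;> simp [res, hi, hBA, fun h => hBA h]

lemma mem_cl_self {V : Finset (Fin n → ℤ)} {A : Finset (Fin n)} {x : Fin n → ℤ}
    (hx : x ∈ V) : x ∈ cl V A x := by
  simp [cl, hx]

lemma cl_card_pos {V : Finset (Fin n → ℤ)} {A : Finset (Fin n)} {x : Fin n → ℤ}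
    (hx : x ∈ V) : 0 < (cl V A x).card :=
  Finset.card_pos.2 ⟨x, mem_cl_self hx⟩

lemma cl_mono {V : Finset (Fin n → ℤ)} {A B : Finset (Fin n)} (h : A ⊆ B) (x : Fin n → ℤ) :
    cl V B x ⊆ cl V A x := by
  intro y hy
  simp only [cl, Finset.mem_filter] at hy ⊢
  exact ⟨hy.1, fun i hi => hy.2 i (h hi)⟩

/-- unnormalized "negative conditional-entropy" potential -/
noncomputable def En (V : Finset (Fin n → ℤ)) (A : Finset (Fin n)) : ℝ :=
  ∑ x ∈ V, Real.log ((cl V A x).card)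

lemma En_empty (V : Finset (Fin n → ℤ)) : En V ∅ = V.card * Real.log V.card := by
  unfold En
  have : ∀ x ∈ V, Real.log ((cl V ∅ x).card) = Real.log V.card := by
    intro x _; simp [cl]
  rw [Finset.sum_congr rfl this, Finset.sum_const, nsmul_eq_mul]

lemma En_univ (V : Finset (Fin n → ℤ)) : En V Finset.univ = 0 := by
  unfold En
  apply Finset.sum_eq_zero
  intro x hx
  have : cl V Finset.univ x = {x} := by
    ext y
    simp only [cl, Finset.mem_filter, Finset.mem_singleton, Finset.mem_univ, true_implies]
    constructor
    · rintro ⟨-, h⟩; exact funext h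
    · rintro rfl; exact ⟨hx, fun i => rfl⟩
  simp [this]

lemma En_mono {V : Finset (Fin n → ℤ)} {A B : Finset (Fin n)} (h : A ⊆ B) :
    En V B ≤ En V A := by
  apply Finset.sum_le_sum
  intro x hx
  apply Real.log_le_log (by exact_mod_cast cl_card_pos hx)
  exact_mod_cast Finset.card_le_card (cl_mono h x)



/-- count of elements of the `A`-fiber of key `s` with `i`-th coordinate `v`. -/
def fcnt (V : Finset (Fin n → ℤ)) (A : Finset (Fin n)) (i : Fin n) (v : ℤ)
    (s : Fin n → ℤ) : ℕ :=
  ((V.filter (fun y => res A y = s)).filter (fun y => y i = v)).card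

lemma cl_insert (V : Finset (Fin n → ℤ)) (A : Finset (Fin n)) (i : Fin n) (x : Fin n → ℤ) :
    cl V (insert i A) x = (cl V A x).filter (fun y => y i = x i) := by
  unfold cl
  rw [Finset.filter_filter]
  apply Finset.filter_congr
  intro y _
  simp only [Finset.forall_mem_insert]
  tauto

lemma dsum_fiber (V : Finset (Fin n → ℤ)) (hV : ∀ x ∈ V, ∀ i, x i = 1 ∨ x i = -1)
    (A : Finset (Fin n)) (i : Fin n) :
    En V A - En V (insert i A)
      = ∑ s ∈ V.image (res A), phiR (fcnt V A i 1 s) (fcnt V A i (-1) s) := by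
  unfold En
  rw [← Finset.sum_sub_distrib]
  rw [← Finset.sum_fiberwise_of_maps_to (g := res A) (t := V.image (res A))
    (fun x hx => Finset.mem_image_of_mem _ hx)]
  apply Finset.sum_congr rfl
  intro s hs
  -- within the fiber of key s
  set F := V.filter (fun y => res A y = s) with hF
  have hclF : ∀ x ∈ F, cl V A x = F := by
    intro x hx
    rw [cl_eq_fiber]
    rw [hF]
    apply Finset.filter_congr
    intro y _
    have : res A x = s := (Finset.mem_filter.1 hx).2
    rw [this]
  have hsplit : ∀ x ∈ F, ¬ (x i = 1) ↔ x i = -1 := by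
    intro x hx
    have := hV x (Finset.mem_filter.1 hx).1 i
    constructor
    · intro h; tauto
    · intro h; rw [h]; norm_num
  set a := fcnt V A i 1 s with ha
  set b := fcnt V A i (-1) s with hb
  have hcard : F.card = a + b := by
    rw [ha, hb, fcnt, fcnt, ← hF]
    rw [← Finset.card_filter_add_card_filter_not (p := fun y => y i = 1)]
    congr 2
    apply Finset.filter_congr
    intro y hy
    exact (hsplit y hy)
  have hNi : ∀ x ∈ F, (cl V (insert i A) x).card = if x i = 1 then a else b := by
    intro x hx
    rw [cl_insert, hclF x hx]
    by_cases h1 : x i = 1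
    · rw [if_pos h1, ha, fcnt, ← hF]
      congr 2
      funext y
      rw [h1]
    · have h2 : x i = -1 := (hsplit x hx).1 h1
      rw [if_neg h1, hb, fcnt, ← hF]
      congr 2
      funext y
      rw [h2]
  calc ∑ x ∈ F, (Real.log ((cl V A x).card) - Real.log ((cl V (insert i A) x).card))
      = ∑ x ∈ F, (Real.log (a+b) - Real.log (if x i = 1 then (a:ℝ) else b)) := by
        apply Finset.sum_congr rfl
        intro x hx
        rw [hclF x hx, hcard, hNi x hx]
        push_cast
        by_cases h1 : x i = 1 <;> simp [h1]
    _ = a * (Real.log (a+b) - Real.log a) + b * (Real.log (a+b) - Real.log b) := by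
        rw [← Finset.sum_filter_add_sum_filter_not F (fun x => x i = 1)]
        have e1 : ∀ x ∈ F.filter (fun x => x i = 1),
            (Real.log (a+b) - Real.log (if x i = 1 then (a:ℝ) else b))
              = Real.log (a+b) - Real.log a := by
          intro x hx
          rw [if_pos (Finset.mem_filter.1 hx).2]
        have e2 : ∀ x ∈ F.filter (fun x => ¬ x i = 1),
            (Real.log (a+b) - Real.log (if x i = 1 then (a:ℝ) else b))
              = Real.log (a+b) - Real.log b := by
          intro x hx
          rw [if_neg (Finset.mem_filter.1 hx).2]
        rw [Finset.sum_congr rfl e1, Finset.sum_congr rfl e2,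
          Finset.sum_const, Finset.sum_const]
        have ca : (F.filter (fun x => x i = 1)).card = a := by rw [ha, fcnt, ← hF]
        have cb : (F.filter (fun x => ¬ x i = 1)).card = b := by
          rw [hb, fcnt, ← hF]
          congr 1
          exact Finset.filter_congr hsplit
        rw [ca, cb]
        push_cast
        ring
    _ = phiR a b := by
        unfold phiR
        push_cast
        ring


lemma fcnt_group (V : Finset (Fin n → ℤ)) {A B : Finset (Fin n)} (hBA : B ⊆ A)
    (i : Fin n) (v : ℤ) {t : Fin n → ℤ} (ht : t ∈ V.image (res B)) :
    ∑ s ∈ (V.image (res A)).filter (fun s => res B s = t), fcnt V A i v s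
      = fcnt V B i v t := by
  rw [fcnt]
  rw [Finset.card_eq_sum_card_fiberwise (f := res A)
    (t := (V.image (res A)).filter (fun s => res B s = t))
    (fun x hx => by
      simp only [Finset.mem_coe, Finset.mem_filter] at hx ⊢
      refine ⟨Finset.mem_image_of_mem _ hx.1.1, ?_⟩
      rw [res_res hBA]
      exact hx.1.2)]
  apply Finset.sum_congr rfl
  intro s hs
  rw [fcnt]
  congr 1
  ext x
  have hs2 : res B s = t := (Finset.mem_filter.1 hs).2
  have key : res A x = s → res B x = t := by
    intro hxA
    have h' := hs2
    rw [← hxA, res_res hBA] at h'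
    exact h'
  simp only [Finset.mem_filter]
  tauto

lemma D_mono (V : Finset (Fin n → ℤ)) (hV : ∀ x ∈ V, ∀ i, x i = 1 ∨ x i = -1)
    {A B : Finset (Fin n)} (hBA : B ⊆ A) (i : Fin n) :
    En V A - En V (insert i A) ≤ En V B - En V (insert i B) := by
  rw [dsum_fiber V hV A i, dsum_fiber V hV B i]
  rw [← Finset.sum_fiberwise_of_maps_to (g := res B) (t := V.image (res B))
    (fun s hs => by
      obtain ⟨x, hx, rfl⟩ := Finset.mem_image.1 hs
      rw [res_res hBA]
      exact Finset.mem_image_of_mem _ hx)]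
  apply Finset.sum_le_sum
  intro t ht
  calc ∑ s ∈ (V.image (res A)).filter (fun s => res B s = t),
        phiR (fcnt V A i 1 s) (fcnt V A i (-1) s)
      ≤ phiR (∑ s ∈ (V.image (res A)).filter (fun s => res B s = t), (fcnt V A i 1 s : ℝ))
          (∑ s ∈ (V.image (res A)).filter (fun s => res B s = t), (fcnt V A i (-1) s : ℝ)) :=
        sum_phiR_le _ _ _
    _ = phiR (fcnt V B i 1 t) (fcnt V B i (-1) t) := by
        rw [← Nat.cast_sum, ← Nat.cast_sum, fcnt_group V hBA i 1 ht, fcnt_group V hBA i (-1) ht]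

def predF (i : Fin n) : Finset (Fin n) := Finset.univ.filter (· < i)

noncomputable def DD (V : Finset (Fin n → ℤ)) (i : Fin n) : ℝ :=
  En V (predF i) - En V (insert i (predF i))

lemma DD_nonneg (V : Finset (Fin n → ℤ)) (i : Fin n) : 0 ≤ DD V i :=
  sub_nonneg.2 (En_mono (Finset.subset_insert _ _))

lemma chain_eq (V : Finset (Fin n → ℤ)) (A : Finset (Fin n)) :
    En V ∅ - En V A
      = ∑ i ∈ A, (En V (A.filter (· < i)) - En V (insert i (A.filter (· < i)))) := by
  induction A using Finset.induction_on_max with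
  | empty => simp
  | insert a s hlt ih =>
    have has : a ∉ s := fun h => lt_irrefl a (hlt a h)
    rw [Finset.sum_insert has]
    have e1 : (insert a s).filter (· < a) = s := by
      ext x
      simp only [Finset.mem_filter, Finset.mem_insert]
      constructor
      · rintro ⟨h | h, hx⟩
        · exact absurd hx (by simp [h])
        · exact h
      · intro h
        exact ⟨Or.inr h, hlt x h⟩
    have e2 : ∀ i ∈ s, (insert a s).filter (· < i) = s.filter (· < i) := by
      intro i hi
      ext x
      simp only [Finset.mem_filter, Finset.mem_insert]
      constructor
      · rintro ⟨h | h, hx⟩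
        · exact absurd hx (by simp [h]; exact le_of_lt (hlt i hi))
        · exact ⟨h, hx⟩
      · rintro ⟨h, hx⟩
        exact ⟨Or.inr h, hx⟩
    rw [e1, Finset.sum_congr rfl (fun i hi => by rw [e2 i hi])]
    rw [← ih]
    ring

lemma chain_le (V : Finset (Fin n → ℤ)) (hV : ∀ x ∈ V, ∀ i, x i = 1 ∨ x i = -1)
    (A : Finset (Fin n)) :
    ∑ i ∈ A, DD V i ≤ En V ∅ - En V A := by
  rw [chain_eq]
  apply Finset.sum_le_sum
  intro i hi
  exact D_mono V hV (fun x hx => by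
    simp only [predF, Finset.mem_filter, Finset.mem_univ, true_and]
    exact (Finset.mem_filter.1 hx).2) i

lemma sum_DD (V : Finset (Fin n → ℤ)) :
    ∑ i : Fin n, DD V i = En V ∅ := by
  have := chain_eq V Finset.univ
  rw [En_univ, sub_zero] at this
  rw [this]
  apply Finset.sum_congr rfl
  intro i _
  rfl

theorem shearer (V : Finset (Fin n → ℤ)) (hV : ∀ x ∈ V, ∀ i, x i = 1 ∨ x i = -1)
    (𝓖 : Finset (Finset (Fin n))) (t : ℕ)
    (hcov : ∀ i : Fin n, t ≤ (𝓖.filter (fun S => i ∉ S)).card) :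
    ∑ S ∈ 𝓖, En V Sᶜ ≤ (𝓖.card : ℝ) * En V ∅ - t * En V ∅ := by
  have h1 : ∑ S ∈ 𝓖, En V Sᶜ ≤ ∑ S ∈ 𝓖, (En V ∅ - ∑ i ∈ Sᶜ, DD V i) := by
    apply Finset.sum_le_sum
    intro S _
    linarith [chain_le V hV Sᶜ]
  have h2 : ∑ S ∈ 𝓖, ∑ i ∈ Sᶜ, DD V i ≥ (t : ℝ) * En V ∅ := by
    have e : ∀ S : Finset (Fin n), ∑ i ∈ Sᶜ, DD V i
        = ∑ i : Fin n, if i ∉ S then DD V i else 0 := by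
      intro S
      rw [← Finset.sum_filter]
      apply Finset.sum_congr _ (fun _ _ => rfl)
      ext i
      simp [Finset.mem_compl]
    calc ∑ S ∈ 𝓖, ∑ i ∈ Sᶜ, DD V i
        = ∑ i : Fin n, ∑ S ∈ 𝓖, (if i ∉ S then DD V i else 0) := by
          rw [Finset.sum_congr rfl (fun S _ => e S), Finset.sum_comm]
      _ = ∑ i : Fin n, ((𝓖.filter (fun S => i ∉ S)).card : ℝ) * DD V i := by
          apply Finset.sum_congr rfl
          intro i _
          rw [← Finset.sum_filter, Finset.sum_const, nsmul_eq_mul]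
      _ ≥ ∑ i : Fin n, (t : ℝ) * DD V i := by
          apply Finset.sum_le_sum
          intro i _
          exact mul_le_mul_of_nonneg_right (by exact_mod_cast hcov i) (DD_nonneg V i)
      _ = (t : ℝ) * En V ∅ := by rw [← Finset.mul_sum, sum_DD]
  calc ∑ S ∈ 𝓖, En V Sᶜ ≤ ∑ S ∈ 𝓖, (En V ∅ - ∑ i ∈ Sᶜ, DD V i) := h1
    _ = 𝓖.card * En V ∅ - ∑ S ∈ 𝓖, ∑ i ∈ Sᶜ, DD V i := by
        rw [Finset.sum_sub_distrib, Finset.sum_const, nsmul_eq_mul]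
    _ ≤ (𝓖.card : ℝ) * En V ∅ - t * En V ∅ := by linarith


lemma flip_eq_of_delta {x y : Fin n → ℤ} (hx : ∀ i, x i = 1 ∨ x i = -1)
    (hy : ∀ i, y i = 1 ∨ y i = -1) {S : Finset (Fin n)}
    (h : Finset.univ.filter (fun i => x i ≠ y i) = S) : y = flipCoords x S := by
  funext i
  by_cases hi : i ∈ S
  · have hne : x i ≠ y i := by
      rw [← h, Finset.mem_filter] at hi
      exact hi.2
    simp only [flipCoords, if_pos hi]
    rcases hx i with h1 | h1 <;> rcases hy i with h2 | h2 <;>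
      rw [h1, h2] <;> first | rfl | (exfalso; apply hne; rw [h1, h2])
  · have heq : x i = y i := by
      by_contra hne
      exact hi (h ▸ Finset.mem_filter.2 ⟨Finset.mem_univ i, hne⟩)
    simp only [flipCoords, if_neg hi]
    exact heq.symm

lemma delta_flip {x : Fin n → ℤ} (hx : ∀ i, x i = 1 ∨ x i = -1) (S : Finset (Fin n)) :
    Finset.univ.filter (fun i => x i ≠ flipCoords x S i) = S := by
  ext i
  simp only [Finset.mem_filter, Finset.mem_univ, true_and]
  simp only [flipCoords]
  by_cases hi : i ∈ S
  · simp only [if_pos hi, hi, iff_true]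
    rcases hx i with h | h <;> rw [h] <;> norm_num
  · simp [if_neg hi, hi]

lemma fiber_card (V : Finset (Fin n → ℤ)) (hV : ∀ x ∈ V, ∀ i, x i = 1 ∨ x i = -1)
    (𝓕 : Finset (Finset (Fin n))) {S : Finset (Fin n)} (hS : S ∈ 𝓕) (hSne : S.Nonempty) :
    (((V ×ˢ V).filter (fun p => p.1 ≠ p.2 ∧
        (Finset.univ.filter (fun i => p.1 i ≠ p.2 i)) ∈ 𝓕)).filter
          (fun p => Finset.univ.filter (fun i => p.1 i ≠ p.2 i) = S)).card
      = (V.filter (fun x => flipCoords x S ∈ V)).card := by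
  apply Finset.card_bij (fun p _ => p.1)
  · rintro ⟨x, y⟩ hp
    simp only [Finset.mem_filter, Finset.mem_product] at hp
    obtain ⟨⟨⟨hxV, hyV⟩, hne, -⟩, hdel⟩ := hp
    have := flip_eq_of_delta (hV x hxV) (hV y hyV) hdel
    simp only [Finset.mem_filter]
    exact ⟨hxV, this ▸ hyV⟩
  · rintro ⟨x, y⟩ hp ⟨x', y'⟩ hp' (h : x = x')
    simp only [Finset.mem_filter, Finset.mem_product] at hp hp'
    obtain ⟨⟨⟨hxV, hyV⟩, -, -⟩, hdel⟩ := hp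
    obtain ⟨⟨⟨hxV', hyV'⟩, -, -⟩, hdel'⟩ := hp'
    have e1 := flip_eq_of_delta (hV x hxV) (hV y hyV) hdel
    have e2 := flip_eq_of_delta (hV x' hxV') (hV y' hyV') hdel'
    subst h
    rw [Prod.mk.injEq]
    exact ⟨rfl, by rw [e1, e2]⟩
  · intro x hx
    simp only [Finset.mem_filter] at hx
    obtain ⟨hxV, hfV⟩ := hx
    have hδ := delta_flip (hV x hxV) S
    refine ⟨(x, flipCoords x S), ?_, rfl⟩
    simp only [Finset.mem_filter, Finset.mem_product]
    refine ⟨⟨⟨hxV, hfV⟩, ?_, by rw [hδ]; exact hS⟩, hδ⟩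
    obtain ⟨i, hi⟩ := hSne
    intro hcon
    have := congrFun hcon i
    simp only [flipCoords, if_pos hi] at this
    rcases hV x hxV i with h | h <;> rw [h] at this <;> norm_num at this

lemma P_card (V : Finset (Fin n → ℤ)) (hV : ∀ x ∈ V, ∀ i, x i = 1 ∨ x i = -1)
    (𝓕 : Finset (Finset (Fin n))) (h𝓕 : ∀ S ∈ 𝓕, S.Nonempty) :
    ((V ×ˢ V).filter (fun p => p.1 ≠ p.2 ∧
        (Finset.univ.filter (fun i => p.1 i ≠ p.2 i)) ∈ 𝓕)).card
      = ∑ S ∈ 𝓕, (V.filter (fun x => flipCoords x S ∈ V)).card := by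
  rw [Finset.card_eq_sum_card_fiberwise
    (f := fun p => Finset.univ.filter (fun i => p.1 i ≠ p.2 i)) (t := 𝓕)
    (fun p hp => (Finset.mem_filter.1 hp).2.2)]
  exact Finset.sum_congr rfl (fun S hS => fiber_card V hV 𝓕 hS (h𝓕 S hS))

lemma two_mul_image_le (V : Finset (Fin n → ℤ)) (𝓕 : Finset (Finset (Fin n))) :
    2 * (((V ×ˢ V).filter (fun p => p.1 ≠ p.2 ∧
        (Finset.univ.filter (fun i => p.1 i ≠ p.2 i)) ∈ 𝓕)).image
          (fun p => s(p.1, p.2))).card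
      ≤ ((V ×ˢ V).filter (fun p => p.1 ≠ p.2 ∧
        (Finset.univ.filter (fun i => p.1 i ≠ p.2 i)) ∈ 𝓕)).card := by
  set P := (V ×ˢ V).filter (fun p => p.1 ≠ p.2 ∧
      (Finset.univ.filter (fun i => p.1 i ≠ p.2 i)) ∈ 𝓕) with hP
  have hswap : ∀ p ∈ P, p.swap ∈ P := by
    rintro ⟨x, y⟩ hp
    simp only [hP, Finset.mem_filter, Finset.mem_product] at hp ⊢
    obtain ⟨⟨hx, hy⟩, hne, hmem⟩ := hp
    refine ⟨⟨hy, hx⟩, Ne.symm hne, ?_⟩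
    have : (Finset.univ.filter (fun i => y i ≠ x i))
        = (Finset.univ.filter (fun i => x i ≠ y i)) := by
      apply Finset.filter_congr
      intro i _
      exact ne_comm
    simp only [Prod.fst_swap, Prod.snd_swap]
    rw [this]
    exact hmem
  rw [Finset.card_eq_sum_card_fiberwise
    (f := fun p : (Fin n → ℤ) × (Fin n → ℤ) => s(p.1, p.2)) (t := P.image (fun p => s(p.1, p.2)))
    (fun p hp => Finset.mem_image_of_mem _ hp)]
  calc 2 * (P.image (fun p => s(p.1, p.2))).card
      = ∑ _e ∈ P.image (fun p => s(p.1, p.2)), 2 := by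
        rw [Finset.sum_const, smul_eq_mul, mul_comm]
    _ ≤ ∑ e ∈ P.image (fun p => s(p.1, p.2)), (P.filter (fun p => s(p.1, p.2) = e)).card := by
        apply Finset.sum_le_sum
        intro e he
        obtain ⟨p, hp, rfl⟩ := Finset.mem_image.1 he
        have hp2 : p.swap ∈ P.filter (fun q => s(q.1, q.2) = s(p.1, p.2)) := by
          refine Finset.mem_filter.2 ⟨hswap p hp, ?_⟩
          simp only [Prod.fst_swap, Prod.snd_swap]
          exact Sym2.eq_swap
        have hp1 : p ∈ P.filter (fun q => s(q.1, q.2) = s(p.1, p.2)) :=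
          Finset.mem_filter.2 ⟨hp, rfl⟩
        have hne : p ≠ p.swap := by
          intro hcon
          have h1 : p.1 ≠ p.2 := ((Finset.mem_filter.1 hp).2).1
          apply h1
          rw [Prod.ext_iff] at hcon
          exact hcon.1
        calc 2 = ({p, p.swap} : Finset _).card := by
              rw [Finset.card_insert_of_notMem (by simpa using hne), Finset.card_singleton]
          _ ≤ _ := Finset.card_le_card (by
              intro q hq
              simp only [Finset.mem_insert, Finset.mem_singleton] at hq
              rcases hq with rfl | rfl
              · exact hp1
              · exact hp2)


lemma cl_compl (V : Finset (Fin n → ℤ)) (S : Finset (Fin n)) (x : Fin n → ℤ) :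
    cl V Sᶜ x = V.filter (fun y => ∀ i ∉ S, y i = x i) := by
  apply Finset.filter_congr
  intro y _
  simp [Finset.mem_compl]

lemma En_compl_ge (V : Finset (Fin n → ℤ)) (S : Finset (Fin n)) (mS lS : ℕ)
    (hl1 : 1 ≤ lS) (hml : lS ≤ mS)
    (hmx : ∀ x ∈ V, flipCoords x S ∈ V → mS ≤ (cl V Sᶜ x).card)
    (hlx : ∀ x ∈ V, flipCoords x S ∉ V → lS ≤ (cl V Sᶜ x).card) :
    ((V.filter (fun x => flipCoords x S ∈ V)).card : ℝ) * Real.log mS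
      + ((V.card : ℝ) - (V.filter (fun x => flipCoords x S ∈ V)).card) * Real.log lS
      ≤ En V Sᶜ := by
  have step : ∑ x ∈ V, (if flipCoords x S ∈ V then Real.log mS else Real.log lS)
      ≤ En V Sᶜ := by
    apply Finset.sum_le_sum
    intro x hx
    by_cases hf : flipCoords x S ∈ V
    · rw [if_pos hf]
      apply Real.log_le_log (by exact_mod_cast lt_of_lt_of_le hl1 hml)
      exact_mod_cast hmx x hx hf
    · rw [if_neg hf]
      apply Real.log_le_log (by exact_mod_cast hl1)
      exact_mod_cast hlx x hx hf
  refine le_trans (le_of_eq ?_) step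
  rw [Finset.sum_ite, Finset.sum_const, Finset.sum_const, nsmul_eq_mul, nsmul_eq_mul]
  have hcc : ((V.filter (fun x => ¬ flipCoords x S ∈ V)).card : ℝ)
      = (V.card : ℝ) - (V.filter (fun x => flipCoords x S ∈ V)).card := by
    have := Finset.card_filter_add_card_filter_not
      (s := V) (p := fun x => flipCoords x S ∈ V)
    push_cast [← this]
    ring
  rw [hcc]

lemma per_d (V : Finset (Fin n → ℤ))
    (hV : ∀ x ∈ V, ∀ i, x i = 1 ∨ x i = -1)
    (𝓕 : Finset (Finset (Fin n)))
    (m ℓ t : ℕ → ℕ) (d : ℕ)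
    (hd : (𝓕.filter (fun S => S.card = d)).Nonempty)
    (hm : IsLeast {k : ℕ | ∃ x ∈ V, ∃ S ∈ 𝓕, S.card = d ∧ flipCoords x S ∈ V ∧
        k = (V.filter (fun y => ∀ i ∉ S, y i = x i)).card} (m d))
    (hℓ : IsLeast {k : ℕ | ∃ x ∈ V, ∃ S ∈ 𝓕, S.card = d ∧ flipCoords x S ∉ V ∧
        k = (V.filter (fun y => ∀ i ∉ S, y i = x i)).card} (ℓ d))
    (ht : IsLeast {k : ℕ | ∃ i : Fin n,
        k = ((𝓕.filter (fun S => S.card = d)).filter (fun S => i ∉ S)).card} (t d))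
    (hml : ℓ d < m d) :
    (∑ S ∈ 𝓕.filter (fun S => S.card = d),
        ((V.filter (fun x => flipCoords x S ∈ V)).card : ℝ)) / 2
      ≤ V.card * ((((𝓕.filter (fun S => S.card = d)).card : ℝ) - t d) *
              Real.log V.card
            - ((𝓕.filter (fun S => S.card = d)).card : ℝ) * Real.log (ℓ d)) /
          (2 * Real.log ((m d : ℝ) / (ℓ d))) := by
  set 𝓖 := 𝓕.filter (fun S => S.card = d) with h𝓖
  -- ℓ d ≥ 1
  have hl1 : 1 ≤ ℓ d := by
    obtain ⟨x, hx, S, hS, hcard, hflip, hk⟩ := hℓ.1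
    rw [hk]
    apply Nat.one_le_iff_ne_zero.2
    apply Finset.card_ne_zero_of_mem (a := x)
    exact Finset.mem_filter.2 ⟨hx, fun i _ => rfl⟩
  have hlR : (0:ℝ) < (ℓ d : ℝ) := by exact_mod_cast hl1
  have hmR : (0:ℝ) < (m d : ℝ) := by exact_mod_cast Nat.lt_of_lt_of_le (Nat.lt_of_lt_of_le Nat.zero_lt_one hl1) (le_of_lt hml)
  have hlogpos : 0 < Real.log ((m d : ℝ) / (ℓ d)) := by
    rw [Real.log_div (ne_of_gt hmR) (ne_of_gt hlR)]
    have : Real.log (ℓ d) < Real.log (m d) :=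
      Real.log_lt_log hlR (by exact_mod_cast hml)
    linarith
  have hlogdiv : Real.log ((m d : ℝ) / (ℓ d)) = Real.log (m d) - Real.log (ℓ d) :=
    Real.log_div (ne_of_gt hmR) (ne_of_gt hlR)
  -- coverage
  have hcov : ∀ i : Fin n, t d ≤ (𝓖.filter (fun S => i ∉ S)).card := by
    intro i
    exact ht.2 ⟨i, rfl⟩
  have hsh := shearer V hV 𝓖 (t d) hcov
  -- lower bound each term
  have hlow : ∀ S ∈ 𝓖,
      ((V.filter (fun x => flipCoords x S ∈ V)).card : ℝ) * Real.log (m d)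
        + ((V.card : ℝ) - (V.filter (fun x => flipCoords x S ∈ V)).card) * Real.log (ℓ d)
        ≤ En V Sᶜ := by
    intro S hS
    obtain ⟨hS𝓕, hScard⟩ := Finset.mem_filter.1 hS
    apply En_compl_ge V S (m d) (ℓ d) hl1 (le_of_lt hml)
    · intro x hx hf
      rw [cl_compl]
      exact hm.2 ⟨x, hx, S, hS𝓕, hScard, hf, rfl⟩
    · intro x hx hf
      rw [cl_compl]
      exact hℓ.2 ⟨x, hx, S, hS𝓕, hScard, hf, rfl⟩
  have hsum := le_trans (Finset.sum_le_sum hlow) hsh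
  rw [En_empty] at hsum
  set L := ∑ S ∈ 𝓖, ((V.filter (fun x => flipCoords x S ∈ V)).card : ℝ) with hL
  have hexp : L * Real.log (m d)
      + ((𝓖.card : ℝ) * V.card - L) * Real.log (ℓ d)
      ≤ ((𝓖.card : ℝ) - t d) * (V.card * Real.log V.card) := by
    have e : ∑ S ∈ 𝓖, (((V.filter (fun x => flipCoords x S ∈ V)).card : ℝ) * Real.log (m d)
        + ((V.card : ℝ) - (V.filter (fun x => flipCoords x S ∈ V)).card) * Real.log (ℓ d))
        = L * Real.log (m d) + ((𝓖.card : ℝ) * V.card - L) * Real.log (ℓ d) := by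
      rw [Finset.sum_add_distrib, ← Finset.sum_mul, ← Finset.sum_mul, ← hL,
        Finset.sum_sub_distrib, Finset.sum_const, nsmul_eq_mul, ← hL]
    rw [e] at hsum
    linarith
  have hkey : L * Real.log ((m d : ℝ) / (ℓ d))
      ≤ (V.card : ℝ) * (((𝓖.card : ℝ) - t d) * Real.log V.card
          - (𝓖.card : ℝ) * Real.log (ℓ d)) := by
    rw [hlogdiv]
    nlinarith [hexp]
  have hLdiv : L ≤ (V.card : ℝ) * (((𝓖.card : ℝ) - t d) * Real.log V.card
      - (𝓖.card : ℝ) * Real.log (ℓ d)) / Real.log ((m d : ℝ) / (ℓ d)) :=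
    (le_div_iff₀ hlogpos).2 hkey
  calc L / 2 ≤ ((V.card : ℝ) * (((𝓖.card : ℝ) - t d) * Real.log V.card
      - (𝓖.card : ℝ) * Real.log (ℓ d)) / Real.log ((m d : ℝ) / (ℓ d))) / 2 := by
        linarith
    _ = (V.card : ℝ) * (((𝓖.card : ℝ) - t d) * Real.log V.card
      - (𝓖.card : ℝ) * Real.log (ℓ d)) / (2 * Real.log ((m d : ℝ) / (ℓ d))) := by
        rw [div_div, mul_comm]
        ring_nf





end Stmt10Aux

/-- extremal bound on the number of edges of the graph on
`V ⊆ {-1,1}^n` where distinct `x,y` are adjacent iff `Δ(x,y) ∈ 𝓕`.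
For each `d ∈ [r]` (with `r = max_{S ∈ 𝓕} |S|`) with `𝓕_d ≠ ∅`, the
quantities `m d`, `ℓ d`, `t d` are characterized as the corresponding
minima via `IsLeast` (which also encodes well-definedness, i.e.,
hypothesis (i)), and `ℓ d < m d` is hypothesis (ii). -/
theorem stmt_10 (n : ℕ) (hn : 1 ≤ n)
    (V : Finset (Fin n → ℤ)) (hVne : V.Nonempty)
    (hV : ∀ x ∈ V, ∀ i, x i = 1 ∨ x i = -1)
    (𝓕 : Finset (Finset (Fin n))) (h𝓕ne : 𝓕.Nonempty)
    (h𝓕 : ∀ S ∈ 𝓕, S.Nonempty)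
    (m ℓ t : ℕ → ℕ)
    (hm : ∀ d, (𝓕.filter (fun S => S.card = d)).Nonempty →
      IsLeast {k : ℕ | ∃ x ∈ V, ∃ S ∈ 𝓕, S.card = d ∧ flipCoords x S ∈ V ∧
        k = (V.filter (fun y => ∀ i ∉ S, y i = x i)).card} (m d))
    (hℓ : ∀ d, (𝓕.filter (fun S => S.card = d)).Nonempty →
      IsLeast {k : ℕ | ∃ x ∈ V, ∃ S ∈ 𝓕, S.card = d ∧ flipCoords x S ∉ V ∧
        k = (V.filter (fun y => ∀ i ∉ S, y i = x i)).card} (ℓ d))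
    (ht : ∀ d, (𝓕.filter (fun S => S.card = d)).Nonempty →
      IsLeast {k : ℕ | ∃ i : Fin n,
        k = ((𝓕.filter (fun S => S.card = d)).filter (fun S => i ∉ S)).card} (t d))
    (hml : ∀ d, (𝓕.filter (fun S => S.card = d)).Nonempty → ℓ d < m d) :
    (((((V ×ˢ V).filter (fun p => p.1 ≠ p.2 ∧
        (Finset.univ.filter (fun i => p.1 i ≠ p.2 i)) ∈ 𝓕)).image
          (fun p => s(p.1, p.2))).card : ℝ)) ≤
      ∑ d ∈ (Finset.Icc 1 (𝓕.sup Finset.card)).filter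
          (fun d => (𝓕.filter (fun S => S.card = d)).Nonempty),
        V.card * ((((𝓕.filter (fun S => S.card = d)).card : ℝ) - t d) *
              Real.log V.card
            - ((𝓕.filter (fun S => S.card = d)).card : ℝ) * Real.log (ℓ d)) /
          (2 * Real.log ((m d : ℝ) / (ℓ d))) := by
  have h2 := two_mul_image_le V 𝓕
  rw [P_card V hV 𝓕 h𝓕] at h2
  -- regroup the sum over 𝓕 by cardinality
  have group : ∑ S ∈ 𝓕, (V.filter (fun x => flipCoords x S ∈ V)).card
      = ∑ d ∈ (Finset.Icc 1 (𝓕.sup Finset.card)).filter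
          (fun d => (𝓕.filter (fun S => S.card = d)).Nonempty),
        ∑ S ∈ 𝓕.filter (fun S => S.card = d),
          (V.filter (fun x => flipCoords x S ∈ V)).card := by
    rw [Finset.sum_filter_of_ne (fun d _ hne => by
      by_contra hcon
      rw [Finset.not_nonempty_iff_eq_empty.1 hcon, Finset.sum_empty] at hne
      exact hne rfl)]
    rw [Finset.sum_fiberwise_of_maps_to (g := Finset.card) (fun S hS => by
      rw [Finset.mem_Icc]
      exact ⟨Finset.card_pos.2 (h𝓕 S hS), Finset.le_sup hS⟩)]
  rw [group] at h2
  have cast2 : (((((V ×ˢ V).filter (fun p => p.1 ≠ p.2 ∧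
        (Finset.univ.filter (fun i => p.1 i ≠ p.2 i)) ∈ 𝓕)).image
          (fun p => s(p.1, p.2))).card : ℝ))
      ≤ (∑ d ∈ (Finset.Icc 1 (𝓕.sup Finset.card)).filter
          (fun d => (𝓕.filter (fun S => S.card = d)).Nonempty),
        ∑ S ∈ 𝓕.filter (fun S => S.card = d),
          ((V.filter (fun x => flipCoords x S ∈ V)).card : ℝ)) / 2 := by
    rw [le_div_iff₀ (by norm_num : (0:ℝ) < 2)]
    push_cast
    have := (Nat.cast_le (α := ℝ)).2 h2
    push_cast at this
    linarith
  refine le_trans cast2 ?_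
  rw [Finset.sum_div]
  apply Finset.sum_le_sum
  intro d hd
  have hdne := (Finset.mem_filter.1 hd).2
  exact per_d V hV 𝓕 m ℓ t d hdne (hm d hdne) (hℓ d hdne) (ht d hdne) (hml d hdne)
end

section
/- Let n ≥ 1, let V be a nonempty subset of {−1,1}^n, fix d ∈ [n], and let 𝓕_d be a nonempty family of d-element subsets of [n]. Let E_{𝓕_d} be the set of unordered pairs {x,y} of distinct elements of V with Δ(x,y) ∈ 𝓕_d. Suppose there exist x ∈ V, S ∈ 𝓕_d with x̄^{(S)} ∈ V and x ∈ V, S ∈ 𝓕_d with x̄^{(S)} ∉ V (so that m_d and ℓ_d are well-defined), and that m_d > ℓ_d. Then |E_{𝓕_d}| ≤ |V| · ( (|𝓕_d| − t_d)·log|V| − |𝓕_d|·log ℓ_d ) / ( 2·log(m_d/ℓ_d) ), where log is the natural logarithm. -/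
namespace Stmt11

open Finset

variable {n : ℕ} (V : Finset (Fin n → ℤ))

def proj (T : Finset (Fin n)) (x : Fin n → ℤ) : Fin n → ℤ :=
  fun i => if i ∈ T then x i else 0

lemma proj_eq_iff {T : Finset (Fin n)} {x y : Fin n → ℤ} :
    proj T y = proj T x ↔ ∀ i ∈ T, y i = x i := by
  constructor
  · intro h i hi
    have := congrFun h i
    simpa [proj, hi] using this
  · intro h
    funext i
    by_cases hi : i ∈ T <;> simp [proj, hi, h]

lemma proj_mono {T T' : Finset (Fin n)} (h : T ⊆ T') {x y : Fin n → ℤ}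
    (hxy : proj T' y = proj T' x) : proj T y = proj T x := by
  rw [proj_eq_iff] at hxy ⊢
  exact fun i hi => hxy i (h hi)

def cnt (T : Finset (Fin n)) (x : Fin n → ℤ) : ℕ :=
  (V.filter fun y => proj T y = proj T x).card

lemma cnt_pos {T : Finset (Fin n)} {x : Fin n → ℤ} (hx : x ∈ V) :
    0 < cnt V T x := by
  refine Finset.card_pos.mpr ⟨x, ?_⟩
  simp [mem_filter, hx]

lemma cnt_anti {T T' : Finset (Fin n)} (h : T ⊆ T') (x : Fin n → ℤ) :
    cnt V T' x ≤ cnt V T x := by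
  apply Finset.card_le_card
  intro y hy
  rw [mem_filter] at hy ⊢
  exact ⟨hy.1, proj_mono h hy.2⟩

lemma cnt_congr {T : Finset (Fin n)} {x y : Fin n → ℤ}
    (h : proj T y = proj T x) : cnt V T y = cnt V T x := by
  unfold cnt; rw [h]

/-- Key counting claim: within the `(insert i A)`-class of `z`, the sum of the
ratios `|B-class|/|B∪i-class|` is at most `|A-class of z|`. -/
lemma sum_ratio_le {A B : Finset (Fin n)} (hAB : A ⊆ B) (i : Fin n)
    {z : Fin n → ℤ} (hz : z ∈ V) :
    ∑ x ∈ V.filter (fun x => proj (insert i A) x = proj (insert i A) z),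
      (cnt V B x : ℝ) / (cnt V (insert i B) x) ≤ (cnt V A z : ℝ) := by
  set W := V.filter (fun x => proj (insert i A) x = proj (insert i A) z) with hW
  have hWmem : ∀ {x}, x ∈ W → x ∈ V ∧ proj (insert i A) x = proj (insert i A) z := by
    intro x hx; exact mem_filter.mp hx
  -- (a) the (B∪i)-class of x ∈ W, inside V, is exactly the B-fiber of x inside W
  have hiAB : insert i A ⊆ insert i B := Finset.insert_subset_insert i hAB
  have key : ∀ x ∈ W, (V.filter fun y => proj (insert i B) y = proj (insert i B) x)
      = W.filter (fun y => proj B y = proj B x) := by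
    intro x hx
    obtain ⟨hxV, hxz⟩ := hWmem hx
    ext y
    simp only [hW, mem_filter, and_assoc]
    constructor
    · rintro ⟨hyV, hy⟩
      exact ⟨hyV, (proj_mono hiAB hy).trans hxz,
        proj_mono (Finset.subset_insert i B) hy⟩
    · rintro ⟨hyV, hyz, hyx⟩
      refine ⟨hyV, ?_⟩
      rw [proj_eq_iff] at hyz hyx ⊢
      intro j hj
      rcases Finset.mem_insert.mp hj with rfl | hjB
      · have h1 : y j = z j := hyz j (Finset.mem_insert_self _ _)
        have h2 : x j = z j := (proj_eq_iff.mp hxz) j (Finset.mem_insert_self _ _)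
        rw [h1, h2]
      · exact hyx j hjB
  -- (b) fiberwise summation over the B-projection
  have maps : ∀ x ∈ W, proj B x ∈ W.image (proj B) := fun x hx => mem_image_of_mem _ hx
  rw [← Finset.sum_fiberwise_of_maps_to maps]
  have inner : ∀ b ∈ W.image (proj B),
      ∑ x ∈ W.filter (fun x => proj B x = b), (cnt V B x : ℝ) / (cnt V (insert i B) x)
        = ((V.filter fun y => proj B y = b).card : ℝ) := by
    intro b hb
    obtain ⟨x0, hx0W, hx0b⟩ := mem_image.mp hb
    have hfib : ∀ x ∈ W.filter (fun x => proj B x = b),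
        (cnt V B x : ℝ) / (cnt V (insert i B) x)
          = ((V.filter fun y => proj B y = b).card : ℝ)
            / ((W.filter (fun x => proj B x = b)).card : ℝ) := by
      intro x hxf
      obtain ⟨hxW, hxb⟩ := mem_filter.mp hxf
      have e1 : cnt V B x = (V.filter fun y => proj B y = b).card := by
        unfold cnt; rw [hxb]
      have e2 : cnt V (insert i B) x = (W.filter fun y => proj B y = b).card := by
        unfold cnt; rw [key x hxW, hxb]
      rw [e1, e2]
    rw [Finset.sum_congr rfl hfib, Finset.sum_const, nsmul_eq_mul]
    have hpos : (0:ℝ) < ((W.filter (fun x => proj B x = b)).card : ℝ) := by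
      have hx0f : x0 ∈ W.filter (fun x => proj B x = b) := mem_filter.mpr ⟨hx0W, hx0b⟩
      exact_mod_cast Finset.card_pos.mpr ⟨x0, hx0f⟩
    field_simp
  rw [Finset.sum_congr rfl inner]
  -- (c) the distinct B-classes meeting W are disjoint subsets of the A-class of z
  rw [← Nat.cast_sum]
  have : cnt V A z = (V.filter fun y => proj A y = proj A z).card := rfl
  rw [this]
  apply Nat.cast_le.mpr
  have hdisj : (↑(W.image (proj B)) : Set (Fin n → ℤ)).PairwiseDisjoint
      (fun b => V.filter fun y => proj B y = b) := by
    intro b hb b' hb' hne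
    apply Finset.disjoint_left.mpr
    intro y hy hy'
    exact hne ((mem_filter.mp hy).2 ▸ (mem_filter.mp hy').2.symm ▸ rfl)
  rw [← Finset.card_biUnion hdisj]
  apply Finset.card_le_card
  intro y hy
  obtain ⟨b, hb, hyb⟩ := Finset.mem_biUnion.mp hy
  obtain ⟨x0, hx0W, rfl⟩ := mem_image.mp hb
  obtain ⟨hyV, hyb'⟩ := mem_filter.mp hyb
  obtain ⟨hx0V, hx0z⟩ := hWmem hx0W
  refine mem_filter.mpr ⟨hyV, ?_⟩
  have h1 : proj A y = proj A x0 := proj_mono hAB hyb'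
  have h2 : proj A x0 = proj A z := proj_mono (Finset.subset_insert i A) hx0z
  rw [h1, h2]

/-- Gibbs/expansion step: the expected ratio is at most `|V|`. -/
lemma sum_r_le {A B : Finset (Fin n)} (hAB : A ⊆ B) (i : Fin n) :
    ∑ x ∈ V, ((cnt V (insert i A) x : ℝ) * cnt V B x) /
      ((cnt V A x : ℝ) * cnt V (insert i B) x) ≤ (V.card : ℝ) := by
  have step1 : ∀ x ∈ V,
      ((cnt V (insert i A) x : ℝ) * cnt V B x) / ((cnt V A x : ℝ) * cnt V (insert i B) x)
      = ∑ z ∈ V, (if proj (insert i A) x = proj (insert i A) z then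
          (cnt V B x : ℝ) / ((cnt V A x : ℝ) * cnt V (insert i B) x) else 0) := by
    intro x hx
    have hcnt : (cnt V (insert i A) x : ℝ)
        = ∑ z ∈ V, (if proj (insert i A) x = proj (insert i A) z then (1:ℝ) else 0) := by
      unfold cnt
      rw [Finset.card_filter]
      push_cast
      exact Finset.sum_congr rfl fun z _ => if_congr eq_comm rfl rfl
    rw [mul_div_assoc, hcnt, Finset.sum_mul]
    refine Finset.sum_congr rfl fun z _ => ?_
    rw [ite_mul, one_mul, zero_mul]
  rw [Finset.sum_congr rfl step1, Finset.sum_comm]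
  have step2 : ∀ z ∈ V,
      (∑ x ∈ V, if proj (insert i A) x = proj (insert i A) z then
          (cnt V B x : ℝ) / ((cnt V A x : ℝ) * cnt V (insert i B) x) else 0) ≤ 1 := by
    intro z hz
    rw [← Finset.sum_filter]
    have hKz : (0:ℝ) < (cnt V A z : ℝ) := by exact_mod_cast cnt_pos V (T := A) hz
    have hcongr : ∀ x ∈ V.filter (fun x => proj (insert i A) x = proj (insert i A) z),
        (cnt V B x : ℝ) / ((cnt V A x : ℝ) * cnt V (insert i B) x)
        = ((cnt V B x : ℝ) / (cnt V (insert i B) x)) * ((cnt V A z : ℝ))⁻¹ := by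
      intro x hxf
      obtain ⟨hxV, hxz⟩ := mem_filter.mp hxf
      have hAx : cnt V A x = cnt V A z :=
        cnt_congr V (proj_mono (Finset.subset_insert i A) hxz)
      rw [hAx, mul_comm, ← div_div, div_eq_mul_inv]
    rw [Finset.sum_congr rfl hcongr, ← Finset.sum_mul]
    calc (∑ x ∈ V.filter (fun x => proj (insert i A) x = proj (insert i A) z),
            (cnt V B x : ℝ) / (cnt V (insert i B) x)) * ((cnt V A z : ℝ))⁻¹
        ≤ (cnt V A z : ℝ) * ((cnt V A z : ℝ))⁻¹ :=
          mul_le_mul_of_nonneg_right (sum_ratio_le V hAB i hz) (by positivity)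
      _ = 1 := mul_inv_cancel₀ (ne_of_gt hKz)
  calc ∑ z ∈ V, (∑ x ∈ V, if proj (insert i A) x = proj (insert i A) z then
          (cnt V B x : ℝ) / ((cnt V A x : ℝ) * cnt V (insert i B) x) else 0)
      ≤ ∑ _z ∈ V, (1:ℝ) := Finset.sum_le_sum step2
    _ = (V.card : ℝ) := by simp

/-- Submodularity / "conditioning reduces entropy". -/
lemma sub_ineq {A B : Finset (Fin n)} (hAB : A ⊆ B) (i : Fin n) :
    ∑ x ∈ V, (Real.log (cnt V B x) - Real.log (cnt V (insert i B) x))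
      ≤ ∑ x ∈ V, (Real.log (cnt V A x) - Real.log (cnt V (insert i A) x)) := by
  have key : ∀ x ∈ V,
      (Real.log (cnt V B x) - Real.log (cnt V (insert i B) x))
        - (Real.log (cnt V A x) - Real.log (cnt V (insert i A) x))
      ≤ ((cnt V (insert i A) x : ℝ) * cnt V B x) /
          ((cnt V A x : ℝ) * cnt V (insert i B) x) - 1 := by
    intro x hx
    have hK : (0:ℝ) < cnt V A x := by exact_mod_cast cnt_pos V hx
    have hK' : (0:ℝ) < cnt V (insert i A) x := by exact_mod_cast cnt_pos V hx
    have hL : (0:ℝ) < cnt V B x := by exact_mod_cast cnt_pos V hx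
    have hL' : (0:ℝ) < cnt V (insert i B) x := by exact_mod_cast cnt_pos V hx
    have hr : (0:ℝ) < ((cnt V (insert i A) x : ℝ) * cnt V B x) /
        ((cnt V A x : ℝ) * cnt V (insert i B) x) := by positivity
    have hlog := Real.log_le_sub_one_of_pos hr
    have heq : Real.log (((cnt V (insert i A) x : ℝ) * cnt V B x) /
        ((cnt V A x : ℝ) * cnt V (insert i B) x))
        = (Real.log (cnt V B x) - Real.log (cnt V (insert i B) x))
          - (Real.log (cnt V A x) - Real.log (cnt V (insert i A) x)) := by
      rw [Real.log_div (by positivity) (by positivity),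
          Real.log_mul (ne_of_gt hK') (ne_of_gt hL),
          Real.log_mul (ne_of_gt hK) (ne_of_gt hL')]
      ring
    rw [heq] at hlog
    exact hlog
  have h1 := Finset.sum_le_sum key
  have h2 := sum_r_le V hAB i
  simp only [Finset.sum_sub_distrib, Finset.sum_const, nsmul_eq_mul, mul_one] at h1 ⊢
  linarith

noncomputable def ent (T : Finset (Fin n)) : ℝ := ∑ x ∈ V, Real.log (cnt V T x)

lemma ent_insert_le (T : Finset (Fin n)) (i : Fin n) : ent V (insert i T) ≤ ent V T := by
  apply Finset.sum_le_sum
  intro x hx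
  have h1 : (0:ℝ) < cnt V (insert i T) x := by exact_mod_cast cnt_pos V hx
  have h2 : cnt V (insert i T) x ≤ cnt V T x := cnt_anti V (Finset.subset_insert i T) x
  exact Real.log_le_log h1 (by exact_mod_cast h2)

lemma ent_univ : ent V Finset.univ = 0 := by
  apply Finset.sum_eq_zero
  intro x hx
  have hp : ∀ y : Fin n → ℤ, proj Finset.univ y = y := by
    intro y; funext j; simp [proj]
  have h1 : cnt V Finset.univ x = 1 := by
    unfold cnt
    have : (V.filter fun y => proj Finset.univ y = proj Finset.univ x) = {x} := by
      ext y
      simp only [mem_filter, hp, Finset.mem_singleton]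
      exact ⟨fun h => h.2, fun h => ⟨h ▸ hx, h⟩⟩
    rw [this, Finset.card_singleton]
  rw [h1]
  simp

lemma ent_empty : ent V ∅ = (V.card : ℝ) * Real.log V.card := by
  unfold ent
  have h1 : ∀ x ∈ V, cnt V ∅ x = V.card := by
    intro x _
    unfold cnt
    congr 1
    apply Finset.filter_true_of_mem
    intro y _
    rw [proj_eq_iff]
    intro i hi
    exact absurd hi (Finset.notMem_empty i)
  rw [Finset.sum_congr rfl (fun x hx => by rw [h1 x hx])]
  rw [Finset.sum_const, nsmul_eq_mul]

lemma cond_anti {A B : Finset (Fin n)} (hAB : A ⊆ B) (i : Fin n) :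
    ent V B - ent V (insert i B) ≤ ent V A - ent V (insert i A) := by
  unfold ent
  rw [← Finset.sum_sub_distrib, ← Finset.sum_sub_distrib]
  exact sub_ineq V hAB i

lemma tele (T : Finset (Fin n)) : ent V ∅ - ent V T
    = ∑ i ∈ T, (ent V (T ∩ Finset.Iio i) - ent V (insert i (T ∩ Finset.Iio i))) := by
  induction T using Finset.induction_on_max with
  | empty => simp
  | insert a s ha ih =>
    have hanotin : a ∉ s := fun h => lt_irrefl a (ha a h)
    rw [Finset.sum_insert hanotin]
    have e1 : insert a s ∩ Finset.Iio a = s := by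
      ext b
      simp only [mem_inter, mem_insert, Finset.mem_Iio]
      constructor
      · rintro ⟨rfl | hb, hlt⟩
        · exact absurd hlt (lt_irrefl _)
        · exact hb
      · exact fun hb => ⟨Or.inr hb, ha b hb⟩
    have e2 : ∀ i ∈ s, insert a s ∩ Finset.Iio i = s ∩ Finset.Iio i := by
      intro i hi
      ext b
      simp only [mem_inter, mem_insert, Finset.mem_Iio]
      constructor
      · rintro ⟨rfl | hb, hlt⟩
        · exact absurd ((ha i hi).trans hlt) (lt_irrefl _)
        · exact ⟨hb, hlt⟩
      · exact fun h => ⟨Or.inr h.1, h.2⟩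
    rw [e1, Finset.sum_congr rfl (fun i hi => by rw [e2 i hi]), ← ih]
    ring

lemma shearer (𝓕 : Finset (Finset (Fin n))) (t : ℕ)
    (ht : ∀ i : Fin n, t ≤ (𝓕.filter (fun S => i ∉ S)).card) :
    (t : ℝ) * ent V ∅ ≤ ∑ S ∈ 𝓕, (ent V ∅ - ent V Sᶜ) := by
  set c : Fin n → ℝ := fun i => ent V (Finset.Iio i) - ent V (insert i (Finset.Iio i)) with hc
  have hc0 : ∀ i, 0 ≤ c i := fun i => sub_nonneg.mpr (ent_insert_le V _ i)
  have hterm : ∀ S : Finset (Fin n), ∑ i ∈ Sᶜ, c i ≤ ent V ∅ - ent V Sᶜ := by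
    intro S
    rw [tele V Sᶜ]
    apply Finset.sum_le_sum
    intro i _
    exact cond_anti V Finset.inter_subset_right i
  have huniv : ∑ i : Fin n, c i = ent V ∅ := by
    have h := tele V Finset.univ
    rw [ent_univ, sub_zero] at h
    rw [h]
    apply Finset.sum_congr rfl
    intro i _
    rw [Finset.univ_inter]
  calc (t:ℝ) * ent V ∅ = ∑ i : Fin n, (t:ℝ) * c i := by rw [← Finset.mul_sum, huniv]
    _ ≤ ∑ i : Fin n, ((𝓕.filter (fun S => i ∉ S)).card : ℝ) * c i := by
        apply Finset.sum_le_sum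
        intro i _
        exact mul_le_mul_of_nonneg_right (by exact_mod_cast ht i) (hc0 i)
    _ = ∑ i : Fin n, ∑ S ∈ 𝓕, (if i ∉ S then c i else 0) := by
        apply Finset.sum_congr rfl
        intro i _
        rw [← Finset.sum_filter, Finset.sum_const, nsmul_eq_mul]
    _ = ∑ S ∈ 𝓕, ∑ i : Fin n, (if i ∉ S then c i else 0) := Finset.sum_comm
    _ = ∑ S ∈ 𝓕, ∑ i ∈ Sᶜ, c i := by
        apply Finset.sum_congr rfl
        intro S _
        rw [← Finset.sum_filter]
        congr 1
        ext i
        simp [Finset.mem_compl]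
    _ ≤ ∑ S ∈ 𝓕, (ent V ∅ - ent V Sᶜ) := Finset.sum_le_sum (fun S _ => hterm S)

lemma flip_delta {n : ℕ} {V : Finset (Fin n → ℤ)}
    (hV : ∀ x ∈ V, ∀ i, x i = 1 ∨ x i = -1)
    {x y : Fin n → ℤ} (hx : x ∈ V) (hy : y ∈ V) :
    flipCoords x (Finset.univ.filter fun i => x i ≠ y i) = y := by
  funext i
  unfold flipCoords
  by_cases h : x i = y i
  · rw [if_neg (by simp [h])]
    exact h
  · rw [if_pos (by simp [h])]
    rcases hV x hx i with h1 | h1 <;> rcases hV y hy i with h2 | h2 <;>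
      rw [h1, h2] at h ⊢ <;> omega

end Stmt11

open Stmt11 Finset in
/-- for a family `𝓕_d` of `d`-element subsets of `[n]`, an
upper bound on the number of edges `{x,y}` of vertices of `V ⊆ {-1,1}^n`
with `Δ(x,y) ∈ 𝓕_d`.  Here `m` and `ℓ` are characterized as the minima
defining `m_d` and `ℓ_d` (via `IsLeast`, which also encodes the
well-definedness hypotheses), and `t` is the minimum defining `t_d`. -/
theorem stmt_11 (n : ℕ) (hn : 1 ≤ n)
    (V : Finset (Fin n → ℤ)) (hVne : V.Nonempty)
    (hV : ∀ x ∈ V, ∀ i, x i = 1 ∨ x i = -1)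
    (d : ℕ) (hd1 : 1 ≤ d) (hdn : d ≤ n)
    (𝓕d : Finset (Finset (Fin n))) (h𝓕dne : 𝓕d.Nonempty)
    (h𝓕d : ∀ S ∈ 𝓕d, S.card = d)
    (m ℓ t : ℕ)
    (hm : IsLeast {k : ℕ | ∃ x ∈ V, ∃ S ∈ 𝓕d, flipCoords x S ∈ V ∧
      k = (V.filter (fun y => ∀ i ∉ S, y i = x i)).card} m)
    (hℓ : IsLeast {k : ℕ | ∃ x ∈ V, ∃ S ∈ 𝓕d, flipCoords x S ∉ V ∧
      k = (V.filter (fun y => ∀ i ∉ S, y i = x i)).card} ℓ)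
    (ht : IsLeast {k : ℕ | ∃ i : Fin n,
      k = (𝓕d.filter (fun S => i ∉ S)).card} t)
    (hml : ℓ < m) :
    (((((V ×ˢ V).filter (fun p => p.1 ≠ p.2 ∧
        (Finset.univ.filter (fun i => p.1 i ≠ p.2 i)) ∈ 𝓕d)).image
          (fun p => s(p.1, p.2))).card : ℝ)) ≤
      V.card * (((𝓕d.card : ℝ) - t) * Real.log V.card
          - (𝓕d.card : ℝ) * Real.log ℓ) /
        (2 * Real.log ((m : ℝ) / ℓ)) := by
  classical
  obtain ⟨hm1, hm2⟩ := hm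
  obtain ⟨hl1, hl2⟩ := hℓ
  obtain ⟨ht1, ht2⟩ := ht
  -- positivity of ℓ and m
  have hl_pos : 1 ≤ ℓ := by
    obtain ⟨x, hx, S, hS, hflip, hcard⟩ := hl1
    rw [hcard]
    exact Finset.card_pos.mpr ⟨x, Finset.mem_filter.mpr ⟨hx, fun i _ => rfl⟩⟩
  have hm_pos : 2 ≤ m := by omega
  -- Shearer upper bound
  have htle : ∀ i : Fin n, t ≤ (𝓕d.filter (fun S => i ∉ S)).card :=
    fun i => ht2 ⟨i, rfl⟩
  have hshear := shearer V 𝓕d t htle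
  have hup : ∑ S ∈ 𝓕d, ent V Sᶜ ≤ ((𝓕d.card : ℝ) - t) * ent V ∅ := by
    have hexp : ∑ S ∈ 𝓕d, (ent V ∅ - ent V Sᶜ)
        = (𝓕d.card : ℝ) * ent V ∅ - ∑ S ∈ 𝓕d, ent V Sᶜ := by
      rw [Finset.sum_sub_distrib, Finset.sum_const, nsmul_eq_mul]
    rw [hexp] at hshear
    linarith
  -- relating `cnt` to the filters in the hypotheses
  have hcompl : ∀ (S : Finset (Fin n)) (x : Fin n → ℤ),
      cnt V Sᶜ x = (V.filter (fun y => ∀ i ∉ S, y i = x i)).card := by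
    intro S x
    unfold cnt
    congr 1
    ext y
    simp only [Finset.mem_filter, proj_eq_iff, Finset.mem_compl]
  -- per-pair lower bound on the log class size
  have hlow1 : ∀ S ∈ 𝓕d, ∀ x ∈ V,
      Real.log ℓ + (if flipCoords x S ∈ V then (1:ℝ) else 0)
          * (Real.log m - Real.log ℓ)
        ≤ Real.log (cnt V Sᶜ x) := by
    intro S hS x hx
    by_cases hf : flipCoords x S ∈ V
    · have hge : m ≤ cnt V Sᶜ x := by
        rw [hcompl]
        exact hm2 ⟨x, hx, S, hS, hf, rfl⟩
      have hlog : Real.log m ≤ Real.log (cnt V Sᶜ x) :=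
        Real.log_le_log (by positivity) (by exact_mod_cast hge)
      rw [if_pos hf]
      linarith
    · have hge : ℓ ≤ cnt V Sᶜ x := by
        rw [hcompl]
        exact hl2 ⟨x, hx, S, hS, hf, rfl⟩
      have hlog : Real.log ℓ ≤ Real.log (cnt V Sᶜ x) :=
        Real.log_le_log (by positivity) (by exact_mod_cast hge)
      rw [if_neg hf]
      linarith
  -- the number of flip-pairs
  set Pc := ((V ×ˢ 𝓕d).filter
      (fun q : (Fin n → ℤ) × Finset (Fin n) => flipCoords q.1 q.2 ∈ V)).card with hPc
  have hPsum : (Pc : ℝ)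
      = ∑ S ∈ 𝓕d, ∑ x ∈ V, (if flipCoords x S ∈ V then (1:ℝ) else 0) := by
    rw [hPc, Finset.card_filter]
    push_cast
    rw [Finset.sum_product, Finset.sum_comm]
  have hlowsum : (𝓕d.card : ℝ) * V.card * Real.log ℓ
      + (Pc : ℝ) * (Real.log m - Real.log ℓ) ≤ ∑ S ∈ 𝓕d, ent V Sᶜ := by
    have h1 : ∀ S ∈ 𝓕d,
        ∑ x ∈ V, (Real.log ℓ + (if flipCoords x S ∈ V then (1:ℝ) else 0)
          * (Real.log m - Real.log ℓ)) ≤ ent V Sᶜ :=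
      fun S hS => Finset.sum_le_sum (fun x hx => hlow1 S hS x hx)
    have h2 := Finset.sum_le_sum h1
    have h3 : ∑ S ∈ 𝓕d, ∑ x ∈ V,
        (Real.log ℓ + (if flipCoords x S ∈ V then (1:ℝ) else 0)
          * (Real.log m - Real.log ℓ))
        = (𝓕d.card : ℝ) * V.card * Real.log ℓ
          + (Pc : ℝ) * (Real.log m - Real.log ℓ) := by
      have hin : ∀ S ∈ 𝓕d, ∑ x ∈ V,
          (Real.log ℓ + (if flipCoords x S ∈ V then (1:ℝ) else 0)
            * (Real.log m - Real.log ℓ))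
          = (V.card : ℝ) * Real.log ℓ
            + (∑ x ∈ V, if flipCoords x S ∈ V then (1:ℝ) else 0)
              * (Real.log m - Real.log ℓ) := by
        intro S _
        rw [Finset.sum_add_distrib, Finset.sum_const, nsmul_eq_mul, Finset.sum_mul]
      rw [Finset.sum_congr rfl hin, Finset.sum_add_distrib, Finset.sum_const,
        nsmul_eq_mul, ← Finset.sum_mul, ← hPsum]
      ring
    rw [h3] at h2
    exact h2
  -- combine the two entropy bounds
  have hkey : (Pc : ℝ) * (Real.log m - Real.log ℓ)
      ≤ (V.card : ℝ) * (((𝓕d.card : ℝ) - t) * Real.log V.card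
          - (𝓕d.card : ℝ) * Real.log ℓ) := by
    have he := ent_empty V
    nlinarith [hlowsum, hup, he]
  -- edge counting: the edge set, ordered pairs, and flip-pairs
  set P2 := (V ×ˢ V).filter (fun p : (Fin n → ℤ) × (Fin n → ℤ) => p.1 ≠ p.2 ∧
      (Finset.univ.filter (fun i => p.1 i ≠ p.2 i)) ∈ 𝓕d) with hP2
  set E := P2.image (fun p => s(p.1, p.2)) with hE
  have hmemP2 : ∀ {p : (Fin n → ℤ) × (Fin n → ℤ)}, p ∈ P2 →
      p.1 ∈ V ∧ p.2 ∈ V ∧ p.1 ≠ p.2 ∧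
        (Finset.univ.filter (fun i => p.1 i ≠ p.2 i)) ∈ 𝓕d := by
    intro p hp
    rw [hP2, Finset.mem_filter, Finset.mem_product] at hp
    exact ⟨hp.1.1, hp.1.2, hp.2.1, hp.2.2⟩
  have hinj : P2.card ≤ Pc := by
    rw [hPc]
    apply Finset.card_le_card_of_injOn
      (fun p => (p.1, Finset.univ.filter (fun i => p.1 i ≠ p.2 i)))
    · intro p hp
      obtain ⟨h1, h2, h3, h4⟩ := hmemP2 hp
      refine Finset.mem_filter.mpr ⟨Finset.mem_product.mpr ⟨h1, h4⟩, ?_⟩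
      simpa [flip_delta hV h1 h2] using h2
    · intro p hp q hq heq
      obtain ⟨hp1, hp2, _, _⟩ := hmemP2 hp
      obtain ⟨hq1, hq2, _, _⟩ := hmemP2 hq
      dsimp only at heq
      rw [Prod.mk.injEq] at heq
      obtain ⟨h1, h2⟩ := heq
      have hpd := flip_delta hV hp1 hp2
      have hqd := flip_delta hV hq1 hq2
      have : p.2 = q.2 := by rw [← hpd, ← hqd, h2, h1]
      exact Prod.ext h1 this
  have hdouble : 2 * E.card ≤ P2.card := by
    have hmaps : ∀ p ∈ P2, s(p.1, p.2) ∈ E := fun p hp => Finset.mem_image_of_mem _ hp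
    rw [Finset.card_eq_sum_card_fiberwise hmaps]
    have hfib : ∀ q ∈ E, 2 ≤ (P2.filter (fun p => s(p.1, p.2) = q)).card := by
      intro q hq
      obtain ⟨p, hp, rfl⟩ := Finset.mem_image.mp hq
      obtain ⟨hp1, hp2, hpne, hpS⟩ := hmemP2 hp
      have hswap : (p.2, p.1) ∈ P2 := by
        rw [hP2, Finset.mem_filter, Finset.mem_product]
        refine ⟨⟨hp2, hp1⟩, Ne.symm hpne, ?_⟩
        have : (Finset.univ.filter (fun i => p.2 i ≠ p.1 i))
            = (Finset.univ.filter (fun i => p.1 i ≠ p.2 i)) := by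
          apply Finset.filter_congr
          intro i _
          exact ne_comm
        rw [this]
        exact hpS
      have hsub : ({p, (p.2, p.1)} : Finset _) ⊆ P2.filter (fun p' => s(p'.1, p'.2) = s(p.1, p.2)) := by
        intro r hr
        rcases Finset.mem_insert.mp hr with rfl | hr
        · exact Finset.mem_filter.mpr ⟨hp, rfl⟩
        · rw [Finset.mem_singleton] at hr
          subst hr
          exact Finset.mem_filter.mpr ⟨hswap, Sym2.eq_swap⟩
      have hcard2 : ({p, (p.2, p.1)} : Finset _).card = 2 := by
        apply Finset.card_pair
        intro h
        exact hpne (congrArg Prod.fst h)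
      calc 2 = ({p, (p.2, p.1)} : Finset _).card := hcard2.symm
        _ ≤ _ := Finset.card_le_card hsub
    calc 2 * E.card = ∑ _q ∈ E, 2 := by rw [Finset.sum_const, smul_eq_mul, mul_comm]
      _ ≤ ∑ q ∈ E, (P2.filter (fun p => s(p.1, p.2) = q)).card :=
          Finset.sum_le_sum hfib
  -- final arithmetic
  have hL : (0:ℝ) < Real.log ((m : ℝ) / ℓ) := by
    apply Real.log_pos
    rw [one_lt_div (by positivity)]
    exact_mod_cast hml
  have hlogdiv : Real.log ((m : ℝ) / ℓ) = Real.log m - Real.log ℓ :=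
    Real.log_div (by positivity) (by positivity)
  have hEP : (E.card : ℝ) ≤ (Pc : ℝ) / 2 := by
    have h1 : (2 * E.card : ℝ) ≤ Pc := by
      exact_mod_cast le_trans hdouble hinj
    linarith
  have hPle : (Pc : ℝ) ≤ (V.card : ℝ) * (((𝓕d.card : ℝ) - t) * Real.log V.card
      - (𝓕d.card : ℝ) * Real.log ℓ) / Real.log ((m : ℝ) / ℓ) := by
    rw [le_div_iff₀ hL, hlogdiv]
    exact hkey
  calc (E.card : ℝ) ≤ (Pc : ℝ) / 2 := hEP
    _ ≤ ((V.card : ℝ) * (((𝓕d.card : ℝ) - t) * Real.log V.card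
        - (𝓕d.card : ℝ) * Real.log ℓ) / Real.log ((m : ℝ) / ℓ)) / 2 := by linarith
    _ = (V.card : ℝ) * (((𝓕d.card : ℝ) - t) * Real.log V.card
        - (𝓕d.card : ℝ) * Real.log ℓ) / (2 * Real.log ((m : ℝ) / ℓ)) := by
        ring
end

section
/- Let n ≥ 1 and let V be a nonempty subset of {−1,1}^n. Let G be the simple graph on V in which distinct x, y ∈ V are adjacent iff they differ in exactly one coordinate. Then |E(G)| ≤ (1/2)·|V|·log₂|V|. -/
lemma two_rpow_le (x : ℝ) (hx0 : 0 ≤ x) (hx1 : x ≤ 1) : (2:ℝ) ^ x ≤ 1 + x := by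
  have h := convexOn_exp.2 (Set.mem_univ (0:ℝ)) (Set.mem_univ (Real.log 2))
    (by linarith : (0:ℝ) ≤ 1 - x) hx0 (by ring)
  rw [Real.rpow_def_of_pos two_pos]
  simp only [smul_eq_mul, mul_zero, zero_add, Real.exp_zero, Real.exp_log two_pos] at h
  calc Real.exp (Real.log 2 * x) = Real.exp (x * Real.log 2) := by ring_nf
    _ ≤ (1 - x) * 1 + x * 2 := h
    _ = 1 + x := by ring

lemma logb_one_add_ge (x : ℝ) (hx0 : 0 ≤ x) (hx1 : x ≤ 1) : x ≤ Real.logb 2 (1 + x) := by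
  have h1 : (2:ℝ) ^ x ≤ 1 + x := two_rpow_le x hx0 hx1
  have := Real.logb_le_logb_of_le (by norm_num : (1:ℝ) < 2) (Real.rpow_pos_of_pos two_pos x) h1
  rwa [Real.logb_rpow two_pos (by norm_num)] at this

lemma anal_le (a b m : ℝ) (hab : a ≤ b) (hm0 : 0 ≤ m) (hma : m ≤ a) (ha : 0 ≤ a) :
    a * Real.logb 2 a + b * Real.logb 2 b + 2 * m ≤ (a + b) * Real.logb 2 (a + b) := by
  rcases eq_or_lt_of_le ha with h0 | ha
  · have : m = 0 := le_antisymm (hma.trans h0.symm.le) hm0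
    simp [← h0, this]
  · have hb : 0 < b := lt_of_lt_of_le ha hab
    have hab2 : 2 * a ≤ a + b := by linarith
    have key1 : a * Real.logb 2 a + a ≤ a * Real.logb 2 (a + b) := by
      have : Real.logb 2 (2 * a) ≤ Real.logb 2 (a + b) :=
        Real.logb_le_logb_of_le (by norm_num) (by linarith) hab2
      rw [Real.logb_mul (by norm_num) (ne_of_gt ha), Real.logb_self_eq_one (by norm_num)] at this
      nlinarith
    have key2 : b * Real.logb 2 b + a ≤ b * Real.logb 2 (a + b) := by
      have hx : a / b ≤ 1 := (div_le_one hb).2 hab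
      have hx0 : 0 ≤ a / b := by positivity
      have h := logb_one_add_ge (a / b) hx0 hx
      have heq : 1 + a / b = (a + b) / b := by field_simp; ring
      rw [heq, Real.logb_div (by positivity) (ne_of_gt hb)] at h
      have h2 := mul_le_mul_of_nonneg_left h hb.le
      have h3 : b * (a / b) = a := by field_simp
      nlinarith
    have : (a + b) * Real.logb 2 (a + b) = a * Real.logb 2 (a+b) + b * Real.logb 2 (a+b) := by ring
    nlinarith

lemma anal (a b m : ℝ) (ha : 0 ≤ a) (hb : 0 ≤ b) (hm0 : 0 ≤ m) (hma : m ≤ a) (hmb : m ≤ b) :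
    a * Real.logb 2 a + b * Real.logb 2 b + 2 * m ≤ (a + b) * Real.logb 2 (a + b) := by
  rcases le_total a b with h | h
  · exact anal_le a b m h hm0 hma ha
  · have := anal_le b a m h hm0 hmb hb
    calc a * Real.logb 2 a + b * Real.logb 2 b + 2*m
        = b * Real.logb 2 b + a * Real.logb 2 a + 2*m := by ring
      _ ≤ (b + a) * Real.logb 2 (b + a) := this
      _ = (a + b) * Real.logb 2 (a + b) := by ring_nf

lemma ham (n : ℕ) (x y : Fin (n+1) → ℤ) :
    (Finset.univ.filter (fun i => x i ≠ y i)).card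
    = (Finset.univ.filter (fun i => Fin.init x i ≠ Fin.init y i)).card
      + (if x (Fin.last n) ≠ y (Fin.last n) then 1 else 0) := by
  rw [Finset.card_filter, Finset.card_filter, Fin.sum_univ_castSucc]
  simp [Fin.init]
  exact Finset.sum_congr rfl (fun i _ => by by_cases h : x i.castSucc = y i.castSucc <;> simp [h])

lemma dist_ne {n : ℕ} (x y : Fin n → ℤ)
    (h : (Finset.univ.filter (fun i => x i ≠ y i)).card = 1) : x ≠ y := by
  intro he; subst he; simp at h

lemma ham_dist_zero {n : ℕ} (x y : Fin n → ℤ)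
    (h : (Finset.univ.filter (fun i => x i ≠ y i)).card = 0) : x = y := by
  funext i
  by_contra hne
  have : i ∈ Finset.univ.filter (fun i => x i ≠ y i) := by simp [hne]
  rw [Finset.card_eq_zero] at h
  simp [h] at this

lemma key : ∀ (n : ℕ) (V : Finset (Fin n → ℤ)),
    (∀ x ∈ V, ∀ i, x i = 1 ∨ x i = -1) →
    ((((V ×ˢ V).filter (fun p =>
        (Finset.univ.filter (fun i => p.1 i ≠ p.2 i)).card = 1)).card : ℝ)
      ≤ V.card * Real.logb 2 V.card) := by
  intro n
  induction n with
  | zero =>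
    intro V _
    have hP : ((V ×ˢ V).filter (fun p =>
        (Finset.univ.filter (fun i : Fin 0 => p.1 i ≠ p.2 i)).card = 1)) = ∅ := by
      apply Finset.filter_false_of_mem
      intro p _
      simp
    have hV1 : V.card ≤ 1 := Finset.card_le_one.mpr (fun a _ b _ => Subsingleton.elim a b)
    interval_cases h : V.card <;> simp [hP, h]
  | succ n ih =>
    intro V hV
    set V1 := V.filter (fun x => x (Fin.last n) = 1) with hV1
    set V2 := V.filter (fun x => x (Fin.last n) = -1) with hV2
    set A := V1.image Fin.init with hA
    set B := V2.image Fin.init with hB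
    have hsplit : V1.card + V2.card = V.card := by
      have h2 : V.filter (fun a => ¬ a (Fin.last n) = 1) = V2 := by
        apply Finset.filter_congr
        intro x hx
        rcases hV x hx (Fin.last n) with h | h <;> simp [h]
      rw [hV1, ← h2, Finset.card_filter_add_card_filter_not]
    have injslice : ∀ (c : ℤ), ∀ x ∈ V.filter (fun x => x (Fin.last n) = c),
        ∀ y ∈ V.filter (fun x => x (Fin.last n) = c), Fin.init x = Fin.init y → x = y := by
      intro c x hx y hy hxy
      simp only [Finset.mem_filter] at hx hy
      rw [← Fin.snoc_init_self x, ← Fin.snoc_init_self y, hxy, hx.2, hy.2]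
    have cardA : A.card = V1.card := Finset.card_image_of_injOn (injslice 1)
    have cardB : B.card = V2.card := Finset.card_image_of_injOn (injslice (-1))
    have hAmem : ∀ z ∈ A, ∀ i, z i = 1 ∨ z i = -1 := by
      intro z hz i
      rw [hA] at hz
      obtain ⟨x, hx, rfl⟩ := Finset.mem_image.mp hz
      exact hV x (Finset.mem_filter.mp hx).1 _
    have hBmem : ∀ z ∈ B, ∀ i, z i = 1 ∨ z i = -1 := by
      intro z hz i
      rw [hB] at hz
      obtain ⟨x, hx, rfl⟩ := Finset.mem_image.mp hz
      exact hV x (Finset.mem_filter.mp hx).1 _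
    set P := (V ×ˢ V).filter (fun p =>
        (Finset.univ.filter (fun i => p.1 i ≠ p.2 i)).card = 1) with hP
    set PA := (A ×ˢ A).filter (fun p =>
        (Finset.univ.filter (fun i => p.1 i ≠ p.2 i)).card = 1) with hPA
    set PB := (B ×ˢ B).filter (fun p =>
        (Finset.univ.filter (fun i => p.1 i ≠ p.2 i)).card = 1) with hPB
    have hsub : P ⊆ (P.filter (fun p => p.1 (Fin.last n) = 1 ∧ p.2 (Fin.last n) = 1))
        ∪ (P.filter (fun p => p.1 (Fin.last n) = -1 ∧ p.2 (Fin.last n) = -1))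
        ∪ (P.filter (fun p => p.1 (Fin.last n) ≠ p.2 (Fin.last n))) := by
      intro p hp
      have hpV := Finset.mem_product.mp (Finset.mem_filter.mp hp).1
      rcases hV p.1 hpV.1 (Fin.last n) with h1 | h1 <;>
        rcases hV p.2 hpV.2 (Fin.last n) with h2 | h2 <;>
        simp [Finset.mem_union, Finset.mem_filter, hp, h1, h2]
    have hcard3 : P.card ≤ (P.filter (fun p => p.1 (Fin.last n) = 1 ∧ p.2 (Fin.last n) = 1)).card
        + (P.filter (fun p => p.1 (Fin.last n) = -1 ∧ p.2 (Fin.last n) = -1)).card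
        + (P.filter (fun p => p.1 (Fin.last n) ≠ p.2 (Fin.last n))).card := by
      calc P.card ≤ _ := Finset.card_le_card hsub
        _ ≤ _ := by
            refine (Finset.card_union_le _ _).trans ?_
            exact Nat.add_le_add_right (Finset.card_union_le _ _) _
    have bound_same : ∀ (c : ℤ),
        (P.filter (fun p => p.1 (Fin.last n) = c ∧ p.2 (Fin.last n) = c)).card
        ≤ (((V.filter (fun x => x (Fin.last n) = c)).image Fin.init ×ˢ
            (V.filter (fun x => x (Fin.last n) = c)).image Fin.init).filter (fun p =>
            (Finset.univ.filter (fun i => p.1 i ≠ p.2 i)).card = 1)).card := by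
      intro c
      apply Finset.card_le_card_of_injOn
        (fun p : (Fin (n+1) → ℤ) × (Fin (n+1) → ℤ) => (Fin.init p.1, Fin.init p.2))
      · intro p hp
        simp only [Finset.mem_coe, Finset.mem_filter] at hp
        obtain ⟨hpP, hc1, hc2⟩ := hp
        have hpV := Finset.mem_product.mp (Finset.mem_filter.mp hpP).1
        have hd := (Finset.mem_filter.mp hpP).2
        rw [ham] at hd
        rw [if_neg (by simp [hc1, hc2] :
          ¬ (p.1 (Fin.last n) ≠ p.2 (Fin.last n))), add_zero] at hd
        simp only [Finset.mem_coe, Finset.mem_filter, Finset.mem_product]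
        refine ⟨⟨?_, ?_⟩, hd⟩
        · exact Finset.mem_image_of_mem _ (Finset.mem_filter.mpr ⟨hpV.1, hc1⟩)
        · exact Finset.mem_image_of_mem _ (Finset.mem_filter.mpr ⟨hpV.2, hc2⟩)
      · intro p hp q hq hpq
        simp only [Finset.mem_coe, Finset.mem_filter] at hp hq
        have hpV := Finset.mem_product.mp (Finset.mem_filter.mp hp.1).1
        have hqV := Finset.mem_product.mp (Finset.mem_filter.mp hq.1).1
        have h1 := congrArg Prod.fst hpq
        have h2 := congrArg Prod.snd hpq
        simp only at h1 h2
        have e1 : p.1 = q.1 := injslice c p.1 (Finset.mem_filter.mpr ⟨hpV.1, hp.2.1⟩)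
          q.1 (Finset.mem_filter.mpr ⟨hqV.1, hq.2.1⟩) h1
        have e2 : p.2 = q.2 := injslice c p.2 (Finset.mem_filter.mpr ⟨hpV.2, hp.2.2⟩)
          q.2 (Finset.mem_filter.mpr ⟨hqV.2, hq.2.2⟩) h2
        exact Prod.ext e1 e2
    have bound_cross :
        (P.filter (fun p => p.1 (Fin.last n) ≠ p.2 (Fin.last n))).card ≤ 2 * (A ∩ B).card := by
      set S := P.filter (fun p => p.1 (Fin.last n) ≠ p.2 (Fin.last n)) with hS
      have hinit : ∀ p ∈ S, Fin.init p.1 = Fin.init p.2 := by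
        intro p hp
        simp only [hS, Finset.mem_filter] at hp
        have hd := (Finset.mem_filter.mp hp.1).2
        rw [ham] at hd
        rw [if_pos hp.2] at hd
        exact ham_dist_zero _ _ (by omega)
      have hmem : ∀ p ∈ S, Fin.init p.1 ∈ A ∩ B := by
        intro p hp
        have hie := hinit p hp
        simp only [hS, Finset.mem_filter] at hp
        have hpV := Finset.mem_product.mp (Finset.mem_filter.mp hp.1).1
        rcases hV p.1 hpV.1 (Fin.last n) with h1 | h1 <;>
          rcases hV p.2 hpV.2 (Fin.last n) with h2 | h2
        · exact absurd (h1.trans h2.symm) hp.2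
        · refine Finset.mem_inter.mpr ⟨?_, ?_⟩
          · exact Finset.mem_image_of_mem _ (Finset.mem_filter.mpr ⟨hpV.1, h1⟩)
          · rw [hie]; exact Finset.mem_image_of_mem _ (Finset.mem_filter.mpr ⟨hpV.2, h2⟩)
        · refine Finset.mem_inter.mpr ⟨?_, ?_⟩
          · rw [hie]; exact Finset.mem_image_of_mem _ (Finset.mem_filter.mpr ⟨hpV.2, h2⟩)
          · exact Finset.mem_image_of_mem _ (Finset.mem_filter.mpr ⟨hpV.1, h1⟩)
        · exact absurd (h1.trans h2.symm) hp.2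
      have himg : S.image (fun p => Fin.init p.1) ⊆ A ∩ B := by
        intro z hz
        obtain ⟨p, hp, rfl⟩ := Finset.mem_image.mp hz
        exact hmem p hp
      have hfib : ∀ z ∈ S.image (fun p => Fin.init p.1),
          (S.filter (fun p => Fin.init p.1 = z)).card ≤ 2 := by
        intro z _
        have hss : S.filter (fun p => Fin.init p.1 = z) ⊆
            {(Fin.snoc z 1, Fin.snoc z (-1)), (Fin.snoc z (-1), Fin.snoc z 1)} := by
          intro p hp
          simp only [Finset.mem_filter] at hp
          obtain ⟨hpS, hz⟩ := hp
          have hie := hinit p hpS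
          simp only [hS, Finset.mem_filter] at hpS
          have hpV := Finset.mem_product.mp (Finset.mem_filter.mp hpS.1).1
          have hp1 : p.1 = Fin.snoc z (p.1 (Fin.last n)) := by
            rw [← hz, Fin.snoc_init_self]
          have hp2 : p.2 = Fin.snoc z (p.2 (Fin.last n)) := by
            rw [← hz, hie, Fin.snoc_init_self]
          rcases hV p.1 hpV.1 (Fin.last n) with h1 | h1 <;>
            rcases hV p.2 hpV.2 (Fin.last n) with h2 | h2
          · exact absurd (h1.trans h2.symm) hpS.2
          · simp only [Finset.mem_insert, Finset.mem_singleton]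
            left
            have e1 : p.1 = Fin.snoc z 1 := by rw [hp1, h1]
            have e2 : p.2 = Fin.snoc z (-1) := by rw [hp2, h2]
            exact Prod.ext e1 e2
          · simp only [Finset.mem_insert, Finset.mem_singleton]
            right
            have e1 : p.1 = Fin.snoc z (-1) := by rw [hp1, h1]
            have e2 : p.2 = Fin.snoc z 1 := by rw [hp2, h2]
            exact Prod.ext e1 e2
          · exact absurd (h1.trans h2.symm) hpS.2
        calc (S.filter (fun p => Fin.init p.1 = z)).card ≤ _ := Finset.card_le_card hss
          _ ≤ 2 := (Finset.card_insert_le _ _).trans (by simp)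
      calc S.card ≤ 2 * (S.image (fun p => Fin.init p.1)).card :=
            Finset.card_le_mul_card_image S 2 hfib
        _ ≤ 2 * (A ∩ B).card := Nat.mul_le_mul_left 2 (Finset.card_le_card himg)
    have IH_A := ih A hAmem
    have IH_B := ih B hBmem
    have hmA : (A ∩ B).card ≤ A.card := Finset.card_le_card (Finset.inter_subset_left)
    have hmB : (A ∩ B).card ≤ B.card := Finset.card_le_card (Finset.inter_subset_right)
    have hb1 := bound_same 1
    have hb2 := bound_same (-1)
    rw [← hV1, ← hA, ← hPA] at hb1
    rw [← hV2, ← hB, ← hPB] at hb2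
    have hnat : P.card ≤ PA.card + PB.card + 2 * (A ∩ B).card := by omega
    have hAB := anal ((A.card : ℝ)) ((B.card : ℝ)) (((A ∩ B).card : ℝ))
      (by positivity) (by positivity) (by positivity)
      (by exact_mod_cast hmA) (by exact_mod_cast hmB)
    have hVcast : (A.card : ℝ) + (B.card : ℝ) = (V.card : ℝ) := by
      rw [cardA, cardB]
      exact_mod_cast hsplit
    calc (P.card : ℝ) ≤ (PA.card : ℝ) + (PB.card : ℝ) + 2 * ((A ∩ B).card : ℝ) := by
          exact_mod_cast hnat
      _ ≤ (A.card : ℝ) * Real.logb 2 (A.card : ℝ) + (B.card : ℝ) * Real.logb 2 (B.card : ℝ)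
            + 2 * ((A ∩ B).card : ℝ) := by
          exact add_le_add (add_le_add IH_A IH_B) le_rfl
      _ ≤ ((A.card : ℝ) + (B.card : ℝ)) * Real.logb 2 ((A.card : ℝ) + (B.card : ℝ)) := hAB
      _ = (V.card : ℝ) * Real.logb 2 (V.card : ℝ) := by rw [hVcast]

/-- a graph on a subset of the hypercube `{-1,1}^n` whose
edges join vertices differing in exactly one coordinate has at most
`(1/2)·|V|·log₂|V|` edges. -/
theorem stmt_12 (n : ℕ) (hn : 1 ≤ n)
    (V : Finset (Fin n → ℤ)) (hVne : V.Nonempty)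
    (hV : ∀ x ∈ V, ∀ i, x i = 1 ∨ x i = -1) :
    ((((V ×ˢ V).filter (fun p =>
        (Finset.univ.filter (fun i => p.1 i ≠ p.2 i)).card = 1)).image
          (fun p => s(p.1, p.2))).card : ℝ) ≤
      (1 / 2) * V.card * Real.logb 2 V.card := by
  set P := (V ×ˢ V).filter (fun p =>
      (Finset.univ.filter (fun i => p.1 i ≠ p.2 i)).card = 1) with hP
  set E := P.image (fun p => s(p.1, p.2)) with hE
  have hswap : ∀ p ∈ P, Prod.swap p ∈ P := by
    intro p hp
    rw [hP, Finset.mem_filter] at hp ⊢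
    have hpV := Finset.mem_product.mp hp.1
    refine ⟨Finset.mem_product.mpr ⟨hpV.2, hpV.1⟩, ?_⟩
    have : (Finset.univ.filter (fun i => p.2 i ≠ p.1 i))
        = (Finset.univ.filter (fun i => p.1 i ≠ p.2 i)) := by
      apply Finset.filter_congr
      intro i _
      exact ne_comm
    simpa [this] using hp.2
  have h2 : 2 * E.card ≤ P.card := by
    apply Finset.mul_card_image_le_card_of_maps_to (fun p hp => Finset.mem_image_of_mem _ hp)
    intro b hb
    obtain ⟨p, hp, rfl⟩ := Finset.mem_image.mp hb
    have hne : p.1 ≠ p.2 := dist_ne _ _ (Finset.mem_filter.mp hp).2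
    have hpne : p ≠ Prod.swap p := by
      intro h
      exact hne (congrArg Prod.fst h)
    have hsub : ({p, Prod.swap p} : Finset _) ⊆
        P.filter (fun q => s(q.1, q.2) = s(p.1, p.2)) := by
      intro q hq
      rcases Finset.mem_insert.mp hq with rfl | hq
      · exact Finset.mem_filter.mpr ⟨hp, rfl⟩
      · rw [Finset.mem_singleton] at hq
        subst hq
        exact Finset.mem_filter.mpr ⟨hswap p hp, Sym2.eq_swap.symm⟩
    calc 2 = ({p, Prod.swap p} : Finset _).card := (Finset.card_pair hpne).symm
      _ ≤ _ := Finset.card_le_card hsub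
  have hkey := key n V hV
  rw [← hP] at hkey
  have h2' : (E.card : ℝ) ≤ (P.card : ℝ) / 2 := by
    have : ((2 * E.card : ℕ) : ℝ) ≤ (P.card : ℝ) := by exact_mod_cast h2
    push_cast at this
    linarith
  calc (E.card : ℝ) ≤ (P.card : ℝ) / 2 := h2'
    _ ≤ ((V.card : ℝ) * Real.logb 2 (V.card : ℝ)) / 2 := by linarith
    _ = (1 / 2) * V.card * Real.logb 2 V.card := by ring
end

section
/- Let n ≥ 1, 1 ≤ τ ≤ n, let V be a nonempty subset of {−1,1}^n, and let G be the simple graph on V in which distinct x, y ∈ V are adjacent iff their Hamming distance |Δ(x,y)| is at most τ. For each d ∈ [τ], let 𝓕_d be the family of all d-element subsets of [n], and suppose there exist x ∈ V, S ∈ 𝓕_d with x̄^{(S)} ∈ V and x ∈ V, S ∈ 𝓕_d with x̄^{(S)} ∉ V (so m_d, ℓ_d are well-defined) and m_d > ℓ_d. Then |E(G)| ≤ Σ_{d=1}^{τ} C(n−1, d−1)·|V|·( log|V| − (n/d)·log ℓ_d ) / ( 2·log(m_d/ℓ_d) ), where log is the natural logarithm and C(·,·) the binomial coefficient. -/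
namespace Stmt13

variable {n : ℕ} (V : Finset (Fin n → ℤ))

def fib (T : Finset (Fin n)) (x : Fin n → ℤ) : ℕ :=
  (V.filter (fun y => ∀ i ∈ T, y i = x i)).card

/-- `|V|` times the conditional entropy `H(x_A | x_B)` for `x` uniform on `V`. -/
noncomputable def SH (A B : Finset (Fin n)) : ℝ :=
  ∑ x ∈ V, (Real.log (fib V B x) - Real.log (fib V (A ∪ B) x))

lemma fib_pos {T : Finset (Fin n)} {x : Fin n → ℤ} (hx : x ∈ V) : 0 < fib V T x :=
  Finset.card_pos.2 ⟨x, Finset.mem_filter.2 ⟨hx, fun _ _ => rfl⟩⟩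

lemma fib_congr {T T' : Finset (Fin n)} (h : ∀ i, i ∈ T ↔ i ∈ T') (x : Fin n → ℤ) :
    fib V T x = fib V T' x := by
  unfold fib
  congr 1
  apply Finset.filter_congr
  intro y _
  constructor <;> intro hy i hi
  · exact hy i ((h i).2 hi)
  · exact hy i ((h i).1 hi)

lemma sh_chain (A B C : Finset (Fin n)) :
    SH V (A ∪ B) C = SH V A (B ∪ C) + SH V B C := by
  unfold SH
  rw [← Finset.sum_add_distrib]
  apply Finset.sum_congr rfl
  intro x _
  rw [Finset.union_assoc]
  ring

/-- key counting bound : `∑_{x∈V} fib(A∪C)x·fib(B∪C)x/(fib(A∪B∪C)x·fib C x) ≤ |V|`. -/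
lemma ratio_sum_le (A B C : Finset (Fin n)) :
    ∑ x ∈ V, ((fib V (A ∪ C) x : ℝ) * fib V (B ∪ C) x /
      (fib V (A ∪ (B ∪ C)) x * fib V C x)) ≤ V.card := by
  classical
  have expand : ∀ x ∈ V,
      (fib V (A ∪ C) x : ℝ) * fib V (B ∪ C) x /
        (fib V (A ∪ (B ∪ C)) x * fib V C x)
      = ∑ u ∈ V, ∑ v ∈ V,
          (if (∀ i ∈ A ∪ C, u i = x i) ∧ (∀ i ∈ B ∪ C, v i = x i) then
            ((fib V (A ∪ (B ∪ C)) x : ℝ) * fib V C x)⁻¹ else 0) := by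
    intro x hx
    have h1 : (fib V (A ∪ C) x : ℝ) = ∑ u ∈ V, (if (∀ i ∈ A ∪ C, u i = x i) then (1:ℝ) else 0) := by
      simp [Finset.sum_boole, fib]
    have h2 : (fib V (B ∪ C) x : ℝ) = ∑ v ∈ V, (if (∀ i ∈ B ∪ C, v i = x i) then (1:ℝ) else 0) := by
      simp [Finset.sum_boole, fib]
    rw [div_eq_mul_inv, h1, h2, Finset.sum_mul_sum, Finset.sum_mul]
    apply Finset.sum_congr rfl; intro u _
    rw [Finset.sum_mul]
    apply Finset.sum_congr rfl; intro v _
    split_ifs <;> simp_all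
  rw [Finset.sum_congr rfl expand, Finset.sum_comm]
  have inner_le : ∀ u ∈ V,
      (∑ x ∈ V, ∑ v ∈ V,
        (if (∀ i ∈ A ∪ C, u i = x i) ∧ (∀ i ∈ B ∪ C, v i = x i) then
          ((fib V (A ∪ (B ∪ C)) x : ℝ) * fib V C x)⁻¹ else 0)) ≤ 1 := by
    intro u hu
    rw [Finset.sum_comm]
    have hv_le : ∀ v ∈ V,
        (∑ x ∈ V,
          (if (∀ i ∈ A ∪ C, u i = x i) ∧ (∀ i ∈ B ∪ C, v i = x i) then
            ((fib V (A ∪ (B ∪ C)) x : ℝ) * fib V C x)⁻¹ else 0))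
        ≤ (if (∀ i ∈ C, v i = u i) then ((fib V C u : ℝ))⁻¹ else 0) := by
      intro v hv
      rw [← Finset.sum_filter]
      set W := V.filter (fun x => (∀ i ∈ A ∪ C, u i = x i) ∧ (∀ i ∈ B ∪ C, v i = x i)) with hW
      rcases W.eq_empty_or_nonempty with hE | ⟨x₀, hx₀⟩
      · rw [hE, Finset.sum_empty]
        positivity
      · obtain ⟨hx₀V, hx₀u, hx₀v⟩ := Finset.mem_filter.1 hx₀
        have hCuv : ∀ i ∈ C, v i = u i := fun i hi =>
          (hx₀v i (Finset.mem_union_right _ hi)).trans (hx₀u i (Finset.mem_union_right _ hi)).symm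
        rw [if_pos hCuv]
        have hfibs : ∀ x ∈ W, fib V (A ∪ (B ∪ C)) x = W.card ∧ fib V C x = fib V C u := by
          intro x hxW
          obtain ⟨hxV, hxu, hxv⟩ := Finset.mem_filter.1 hxW
          constructor
          · unfold fib
            congr 1
            apply Finset.filter_congr
            intro z _
            constructor
            · intro hz
              refine ⟨fun i hi => ?_, fun i hi => ?_⟩
              · rcases Finset.mem_union.1 hi with hiA | hiC
                · exact (hxu i (Finset.mem_union_left _ hiA)).trans
                    (hz i (Finset.mem_union_left _ hiA)).symm
                · exact (hxu i (Finset.mem_union_right _ hiC)).trans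
                    (hz i (Finset.mem_union_right _ (Finset.mem_union_right _ hiC))).symm
              · rcases Finset.mem_union.1 hi with hiB | hiC
                · exact (hxv i (Finset.mem_union_left _ hiB)).trans
                    (hz i (Finset.mem_union_right _ (Finset.mem_union_left _ hiB))).symm
                · exact (hxv i (Finset.mem_union_right _ hiC)).trans
                    (hz i (Finset.mem_union_right _ (Finset.mem_union_right _ hiC))).symm
            · rintro ⟨hzu, hzv⟩ i hi
              rcases Finset.mem_union.1 hi with hiA | hiBC
              · exact (hzu i (Finset.mem_union_left _ hiA)).symm.trans
                  (hxu i (Finset.mem_union_left _ hiA))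
              rcases Finset.mem_union.1 hiBC with hiB | hiC
              · exact (hzv i (Finset.mem_union_left _ hiB)).symm.trans
                  (hxv i (Finset.mem_union_left _ hiB))
              · exact (hzu i (Finset.mem_union_right _ hiC)).symm.trans
                  (hxu i (Finset.mem_union_right _ hiC))
          · unfold fib
            congr 1
            apply Finset.filter_congr
            intro z _
            constructor <;> intro hz i hi
            · exact (hz i hi).trans (hxu i (Finset.mem_union_right _ hi)).symm
            · exact (hz i hi).trans (hxu i (Finset.mem_union_right _ hi))
        have hsum : ∑ x ∈ W, ((fib V (A ∪ (B ∪ C)) x : ℝ) * fib V C x)⁻¹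
            = ∑ _x ∈ W, ((W.card : ℝ) * fib V C u)⁻¹ :=
          Finset.sum_congr rfl fun x hxW => by rw [(hfibs x hxW).1, (hfibs x hxW).2]
        rw [hsum, Finset.sum_const, nsmul_eq_mul, mul_inv]
        have hWpos : (0:ℝ) < W.card := by exact_mod_cast Finset.card_pos.2 ⟨x₀, hx₀⟩
        rw [← mul_assoc, mul_inv_cancel₀ (ne_of_gt hWpos), one_mul]
    calc ∑ v ∈ V, ∑ x ∈ V, _ ≤ ∑ v ∈ V, (if (∀ i ∈ C, v i = u i) then ((fib V C u : ℝ))⁻¹ else 0) :=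
          Finset.sum_le_sum hv_le
      _ = 1 := by
          rw [← Finset.sum_filter, Finset.sum_const, nsmul_eq_mul]
          have h : (V.filter (fun v => ∀ i ∈ C, v i = u i)).card = fib V C u := rfl
          rw [h, mul_inv_cancel₀]
          exact_mod_cast (fib_pos V hu).ne'
  calc _ ≤ ∑ _u ∈ V, (1:ℝ) := Finset.sum_le_sum inner_le
    _ = V.card := by simp

lemma sh_mono (A B C : Finset (Fin n)) : SH V A (B ∪ C) ≤ SH V A C := by
  unfold SH
  rw [← sub_nonneg, ← Finset.sum_sub_distrib]
  have key := ratio_sum_le V A B C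
  have hterm : ∀ x ∈ V,
      1 - (fib V (A ∪ C) x : ℝ) * fib V (B ∪ C) x /
        (fib V (A ∪ (B ∪ C)) x * fib V C x)
      ≤ (Real.log (fib V C x) - Real.log (fib V (A ∪ C) x)) -
        (Real.log (fib V (B ∪ C) x) - Real.log (fib V (A ∪ (B ∪ C)) x)) := by
    intro x hx
    have pAC : (0:ℝ) < fib V (A ∪ C) x := by exact_mod_cast fib_pos V hx
    have pBC : (0:ℝ) < fib V (B ∪ C) x := by exact_mod_cast fib_pos V hx
    have pABC : (0:ℝ) < fib V (A ∪ (B ∪ C)) x := by exact_mod_cast fib_pos V hx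
    have pC : (0:ℝ) < fib V C x := by exact_mod_cast fib_pos V hx
    have hr : (0:ℝ) < (fib V (A ∪ C) x : ℝ) * fib V (B ∪ C) x /
        (fib V (A ∪ (B ∪ C)) x * fib V C x) := by positivity
    have hlog := Real.log_le_sub_one_of_pos hr
    have hexp : Real.log ((fib V (A ∪ C) x : ℝ) * fib V (B ∪ C) x /
        (fib V (A ∪ (B ∪ C)) x * fib V C x))
        = Real.log (fib V (A ∪ C) x) + Real.log (fib V (B ∪ C) x)
          - (Real.log (fib V (A ∪ (B ∪ C)) x) + Real.log (fib V C x)) := by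
      rw [Real.log_div (by positivity) (by positivity), Real.log_mul pAC.ne' pBC.ne',
        Real.log_mul pABC.ne' pC.ne']
    rw [hexp] at hlog
    linarith
  calc (0:ℝ) ≤ ∑ x ∈ V, (1 - (fib V (A ∪ C) x : ℝ) * fib V (B ∪ C) x /
        (fib V (A ∪ (B ∪ C)) x * fib V C x)) := by
        rw [Finset.sum_sub_distrib, Finset.sum_const, nsmul_eq_mul, mul_one]
        linarith
    _ ≤ _ := Finset.sum_le_sum hterm

lemma sh_mono_subset (A : Finset (Fin n)) {C D : Finset (Fin n)} (h : C ⊆ D) :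
    SH V A D ≤ SH V A C := by
  have := sh_mono V A (D \ C) C
  rwa [Finset.sdiff_union_of_subset h] at this

lemma sh_empty (B : Finset (Fin n)) : SH V ∅ B = 0 := by
  simp [SH]

lemma sh_univ : SH V Finset.univ ∅ = V.card * Real.log V.card := by
  unfold SH
  have h1 : ∀ x : Fin n → ℤ, fib V (∅ : Finset (Fin n)) x = V.card := by
    intro x; unfold fib; simp
  have h2 : ∀ x ∈ V, fib V (Finset.univ ∪ ∅) x = 1 := by
    intro x hx
    unfold fib
    rw [Finset.card_eq_one]
    refine ⟨x, ?_⟩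
    ext z
    simp only [Finset.mem_filter, Finset.mem_singleton]
    constructor
    · rintro ⟨_, hz⟩
      funext i
      exact hz i (by simp)
    · rintro rfl
      exact ⟨hx, fun _ _ => rfl⟩
  rw [Finset.sum_congr rfl (fun x hx => by rw [h1 x, h2 x hx])]
  simp [mul_comm]

lemma chain_bound (S : Finset (Fin n)) (k : ℕ) :
    SH V (S.filter (fun i : Fin n => (i : ℕ) < k)) Sᶜ ≤
      ∑ i ∈ S.filter (fun i : Fin n => (i : ℕ) < k), SH V {i} (Finset.Iio i) := by
  induction k with
  | zero => simp [sh_empty]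
  | succ k ih =>
    by_cases hk : k < n
    · set i₀ : Fin n := ⟨k, hk⟩ with hi₀def
      by_cases hi₀ : i₀ ∈ S
      · have hset : S.filter (fun i : Fin n => (i : ℕ) < k + 1)
            = insert i₀ (S.filter (fun i : Fin n => (i : ℕ) < k)) := by
          ext j
          simp only [Finset.mem_filter, Finset.mem_insert]
          constructor
          · rintro ⟨hjS, hj⟩
            rcases Nat.lt_succ_iff_lt_or_eq.1 hj with h | h
            · exact Or.inr ⟨hjS, h⟩
            · exact Or.inl (Fin.ext h)
          · rintro (rfl | ⟨hjS, hj⟩)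
            · exact ⟨hi₀, Nat.lt_succ_self k⟩
            · exact ⟨hjS, Nat.lt_succ_of_lt hj⟩
        have hnotmem : i₀ ∉ S.filter (fun i : Fin n => (i : ℕ) < k) := by
          simp [hi₀def]
        rw [hset, Finset.sum_insert hnotmem, Finset.insert_eq, sh_chain]
        have hmono : SH V {i₀} (S.filter (fun i : Fin n => (i : ℕ) < k) ∪ Sᶜ)
            ≤ SH V {i₀} (Finset.Iio i₀) := by
          apply sh_mono_subset
          intro j hj
          have hjlt : (j : ℕ) < k := Fin.lt_def.mp (Finset.mem_Iio.mp hj)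
          by_cases hjS : j ∈ S
          · exact Finset.mem_union_left _ (Finset.mem_filter.2 ⟨hjS, hjlt⟩)
          · exact Finset.mem_union_right _ (Finset.mem_compl.2 hjS)
        linarith
      · have hset : S.filter (fun i : Fin n => (i : ℕ) < k + 1)
            = S.filter (fun i : Fin n => (i : ℕ) < k) := by
          apply Finset.filter_congr
          intro i hiS
          constructor
          · intro h
            rcases Nat.lt_succ_iff_lt_or_eq.1 h with h' | h'
            · exact h'
            · exact absurd ((Fin.ext h' : i = i₀) ▸ hiS) hi₀
          · exact Nat.lt_succ_of_lt
        rw [hset]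
        exact ih
    · have hset : S.filter (fun i : Fin n => (i : ℕ) < k + 1) = S.filter (fun i : Fin n => (i : ℕ) < k) := by
        apply Finset.filter_congr
        intro i _
        have := i.isLt
        constructor
        · intro _; omega
        · intro _; omega
      rw [hset]
      exact ih

lemma chain_eq_univ (k : ℕ) (hk : k ≤ n) :
    SH V (Finset.univ.filter (fun i : Fin n => (i : ℕ) < k)) ∅ =
      ∑ i ∈ Finset.univ.filter (fun i : Fin n => (i : ℕ) < k), SH V {i} (Finset.Iio i) := by
  induction k with
  | zero => simp [sh_empty]
  | succ k ih =>
    have hk' : k < n := hk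
    set i₀ : Fin n := ⟨k, hk'⟩ with hi₀def
    have hset : Finset.univ.filter (fun i : Fin n => (i : ℕ) < k + 1)
        = insert i₀ (Finset.univ.filter (fun i : Fin n => (i : ℕ) < k)) := by
      ext j
      simp only [Finset.mem_filter, Finset.mem_insert, Finset.mem_univ, true_and]
      constructor
      · rintro hj
        rcases Nat.lt_succ_iff_lt_or_eq.1 hj with h | h
        · exact Or.inr h
        · exact Or.inl (Fin.ext h)
      · rintro (rfl | hj)
        · exact Nat.lt_succ_self k
        · exact Nat.lt_succ_of_lt hj
    have hnotmem : i₀ ∉ Finset.univ.filter (fun i : Fin n => (i : ℕ) < k) := by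
      simp [hi₀def]
    have hIio : Finset.univ.filter (fun i : Fin n => (i : ℕ) < k) = Finset.Iio i₀ := by
      ext j
      simp [Finset.mem_Iio, Fin.lt_def, hi₀def]
    rw [hset, Finset.sum_insert hnotmem, Finset.insert_eq, sh_chain,
      ih (Nat.le_of_succ_le hk), Finset.union_empty, hIio]

lemma sum_singletons (hn : 0 < n) :
    ∑ i : Fin n, SH V {i} (Finset.Iio i) = V.card * Real.log V.card := by
  have h := chain_eq_univ V n le_rfl
  have hfull : Finset.univ.filter (fun i : Fin n => (i : ℕ) < n) = Finset.univ := by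
    apply Finset.filter_true_of_mem
    intro i _
    exact i.isLt
  rw [hfull] at h
  rw [← h, sh_univ]

lemma sh_S_bound (S : Finset (Fin n)) :
    SH V S Sᶜ ≤ ∑ i ∈ S, SH V {i} (Finset.Iio i) := by
  have h := chain_bound V S n
  have hfull : S.filter (fun i : Fin n => (i : ℕ) < n) = S := by
    apply Finset.filter_true_of_mem
    intro i _
    exact i.isLt
  rwa [hfull] at h

lemma count_containing (i : Fin n) (d : ℕ) (hd : 1 ≤ d) :
    ((Finset.powersetCard d (Finset.univ : Finset (Fin n))).filter
      (fun S => i ∈ S)).card = (n - 1).choose (d - 1) := by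
  classical
  have hcard : ((Finset.univ : Finset (Fin n)).erase i).card = n - 1 := by
    rw [Finset.card_erase_of_mem (Finset.mem_univ i), Finset.card_univ, Fintype.card_fin]
  rw [← hcard, ← Finset.card_powersetCard (d-1) ((Finset.univ : Finset (Fin n)).erase i)]
  apply Finset.card_bij' (fun S _ => S.erase i) (fun T _ => insert i T)
  · intro S hS
    exact Finset.insert_erase (Finset.mem_filter.1 hS).2
  · intro T hT
    obtain ⟨hsub, _⟩ := Finset.mem_powersetCard.1 hT
    exact Finset.erase_insert (fun h => (Finset.mem_erase.1 (hsub h)).1 rfl)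
  · intro S hS
    obtain ⟨hS1, hS2⟩ := Finset.mem_filter.1 hS
    obtain ⟨hsub, hc⟩ := Finset.mem_powersetCard.1 hS1
    apply Finset.mem_powersetCard.2
    constructor
    · intro j hj
      obtain ⟨hji, hjS⟩ := Finset.mem_erase.1 hj
      exact Finset.mem_erase.2 ⟨hji, Finset.mem_univ j⟩
    · rw [Finset.card_erase_of_mem hS2, hc]
  · intro T hT
    obtain ⟨hsub, hc⟩ := Finset.mem_powersetCard.1 hT
    have hiT : i ∉ T := fun h => (Finset.mem_erase.1 (hsub h)).1 rfl
    apply Finset.mem_filter.2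
    refine ⟨Finset.mem_powersetCard.2 ⟨Finset.subset_univ _, ?_⟩, Finset.mem_insert_self i T⟩
    rw [Finset.card_insert_of_notMem hiT, hc]
    omega

/-- the per-`S` entropy lower bound -/
lemma per_S_bound (m ℓ : ℕ → ℕ) (τ d : ℕ) (hd : d ∈ Finset.Icc 1 τ)
    (hm : ∀ d ∈ Finset.Icc 1 τ,
      IsLeast {k : ℕ | ∃ x ∈ V, ∃ S : Finset (Fin n), S.card = d ∧
        flipCoords x S ∈ V ∧
        k = (V.filter (fun y => ∀ i ∉ S, y i = x i)).card} (m d))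
    (hℓ : ∀ d ∈ Finset.Icc 1 τ,
      IsLeast {k : ℕ | ∃ x ∈ V, ∃ S : Finset (Fin n), S.card = d ∧
        flipCoords x S ∉ V ∧
        k = (V.filter (fun y => ∀ i ∉ S, y i = x i)).card} (ℓ d))
    (S : Finset (Fin n)) (hS : S.card = d) :
    ((V.filter (fun x => flipCoords x S ∈ V)).card : ℝ) *
        (Real.log (m d) - Real.log (ℓ d)) + V.card * Real.log (ℓ d)
      ≤ SH V S Sᶜ := by
  classical
  have hSH : SH V S Sᶜ = ∑ x ∈ V, Real.log (fib V Sᶜ x) := by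
    unfold SH
    apply Finset.sum_congr rfl
    intro x hx
    have huniv : S ∪ Sᶜ = Finset.univ := Finset.union_compl S
    have h1 : fib V (S ∪ Sᶜ) x = 1 := by
      rw [huniv]
      unfold fib
      rw [Finset.card_eq_one]
      refine ⟨x, ?_⟩
      ext z
      simp only [Finset.mem_filter, Finset.mem_singleton]
      constructor
      · rintro ⟨_, hz⟩; funext j; exact hz j (by simp)
      · rintro rfl; exact ⟨hx, fun _ _ => rfl⟩
    rw [h1]
    simp
  rw [hSH]
  have hfib_eq : ∀ x, fib V Sᶜ x = (V.filter (fun y => ∀ i ∉ S, y i = x i)).card := by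
    intro x
    unfold fib
    congr 1
    apply Finset.filter_congr
    intro y _
    constructor <;> intro h i hi
    · exact h i (Finset.mem_compl.2 hi)
    · exact h i (Finset.mem_compl.1 hi)
  have hpt : ∀ x ∈ V,
      (if flipCoords x S ∈ V then Real.log (m d) else Real.log (ℓ d))
        ≤ Real.log (fib V Sᶜ x) := by
    intro x hx
    have hfp : (0:ℝ) < fib V Sᶜ x := by exact_mod_cast fib_pos V hx
    by_cases hflip : flipCoords x S ∈ V
    · rw [if_pos hflip]
      have hmem : (V.filter (fun y => ∀ i ∉ S, y i = x i)).card ∈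
          {k : ℕ | ∃ x ∈ V, ∃ S : Finset (Fin n), S.card = d ∧ flipCoords x S ∈ V ∧
            k = (V.filter (fun y => ∀ i ∉ S, y i = x i)).card} := ⟨x, hx, S, hS, hflip, rfl⟩
      have hle : m d ≤ fib V Sᶜ x := by rw [hfib_eq]; exact (hm d hd).2 hmem
      by_cases hm0 : m d = 0
      · rw [hm0]; simpa using Real.log_nonneg (by exact_mod_cast fib_pos V hx)
      · exact Real.log_le_log (by positivity) (by exact_mod_cast hle)
    · rw [if_neg hflip]
      have hmem : (V.filter (fun y => ∀ i ∉ S, y i = x i)).card ∈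
          {k : ℕ | ∃ x ∈ V, ∃ S : Finset (Fin n), S.card = d ∧ flipCoords x S ∉ V ∧
            k = (V.filter (fun y => ∀ i ∉ S, y i = x i)).card} := ⟨x, hx, S, hS, hflip, rfl⟩
      have hle : ℓ d ≤ fib V Sᶜ x := by rw [hfib_eq]; exact (hℓ d hd).2 hmem
      by_cases hl0 : ℓ d = 0
      · rw [hl0]; simpa using Real.log_nonneg (by exact_mod_cast fib_pos V hx)
      · exact Real.log_le_log (by positivity) (by exact_mod_cast hle)
  have hsum := Finset.sum_le_sum hpt
  refine le_trans (le_of_eq ?_) hsum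
  rw [Finset.sum_ite, Finset.sum_const, Finset.sum_const, nsmul_eq_mul, nsmul_eq_mul]
  have hcards : ((V.filter (fun x => ¬ flipCoords x S ∈ V)).card : ℝ)
      = V.card - (V.filter (fun x => flipCoords x S ∈ V)).card := by
    have h := Finset.card_filter_add_card_filter_not
      (s := V) (p := fun x => flipCoords x S ∈ V)
    push_cast [← h]
    ring
  rw [hcards]
  ring

lemma swap_sum (f : Fin n → ℝ) (d : ℕ) (hd : 1 ≤ d) :
    ∑ S ∈ Finset.powersetCard d (Finset.univ : Finset (Fin n)), ∑ i ∈ S, f i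
      = ((n - 1).choose (d - 1) : ℝ) * ∑ i : Fin n, f i := by
  classical
  have h1 : ∀ S ∈ Finset.powersetCard d (Finset.univ : Finset (Fin n)),
      ∑ i ∈ S, f i = ∑ i : Fin n, if i ∈ S then f i else 0 := by
    intro S _
    rw [Finset.sum_ite_mem, Finset.univ_inter]
  rw [Finset.sum_congr rfl h1, Finset.sum_comm, Finset.mul_sum]
  apply Finset.sum_congr rfl
  intro i _
  rw [← Finset.sum_filter, Finset.sum_const, count_containing i d hd, nsmul_eq_mul]

lemma family_bound (hn : 0 < n) (m ℓ : ℕ → ℕ) (τ d : ℕ) (hd : d ∈ Finset.Icc 1 τ)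
    (hm : ∀ d ∈ Finset.Icc 1 τ,
      IsLeast {k : ℕ | ∃ x ∈ V, ∃ S : Finset (Fin n), S.card = d ∧
        flipCoords x S ∈ V ∧
        k = (V.filter (fun y => ∀ i ∉ S, y i = x i)).card} (m d))
    (hℓ : ∀ d ∈ Finset.Icc 1 τ,
      IsLeast {k : ℕ | ∃ x ∈ V, ∃ S : Finset (Fin n), S.card = d ∧
        flipCoords x S ∉ V ∧
        k = (V.filter (fun y => ∀ i ∉ S, y i = x i)).card} (ℓ d)) :
    (∑ S ∈ Finset.powersetCard d (Finset.univ : Finset (Fin n)),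
        ((V.filter (fun x => flipCoords x S ∈ V)).card : ℝ)) *
        (Real.log (m d) - Real.log (ℓ d))
      ≤ ((n - 1).choose (d - 1) : ℝ) * (V.card * Real.log V.card)
        - (n.choose d : ℝ) * (V.card * Real.log (ℓ d)) := by
  classical
  have hd1 : 1 ≤ d := (Finset.mem_Icc.1 hd).1
  have step1 : ∑ S ∈ Finset.powersetCard d (Finset.univ : Finset (Fin n)),
      (((V.filter (fun x => flipCoords x S ∈ V)).card : ℝ) *
        (Real.log (m d) - Real.log (ℓ d)) + V.card * Real.log (ℓ d))
      ≤ ∑ S ∈ Finset.powersetCard d (Finset.univ : Finset (Fin n)), SH V S Sᶜ := by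
    apply Finset.sum_le_sum
    intro S hS
    exact per_S_bound V m ℓ τ d hd hm hℓ S (Finset.mem_powersetCard.1 hS).2
  have step2 : ∑ S ∈ Finset.powersetCard d (Finset.univ : Finset (Fin n)), SH V S Sᶜ
      ≤ ((n - 1).choose (d - 1) : ℝ) * (V.card * Real.log V.card) := by
    calc ∑ S ∈ Finset.powersetCard d (Finset.univ : Finset (Fin n)), SH V S Sᶜ
        ≤ ∑ S ∈ Finset.powersetCard d (Finset.univ : Finset (Fin n)),
            ∑ i ∈ S, SH V {i} (Finset.Iio i) :=
          Finset.sum_le_sum fun S _ => sh_S_bound V S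
      _ = ((n - 1).choose (d - 1) : ℝ) * ∑ i : Fin n, SH V {i} (Finset.Iio i) :=
          swap_sum _ d hd1
      _ = _ := by rw [sum_singletons V hn]
  have hcardF : (Finset.powersetCard d (Finset.univ : Finset (Fin n))).card = n.choose d := by
    rw [Finset.card_powersetCard, Finset.card_univ, Fintype.card_fin]
  have hsplit : ∑ S ∈ Finset.powersetCard d (Finset.univ : Finset (Fin n)),
      (((V.filter (fun x => flipCoords x S ∈ V)).card : ℝ) *
        (Real.log (m d) - Real.log (ℓ d)) + V.card * Real.log (ℓ d))
      = (∑ S ∈ Finset.powersetCard d (Finset.univ : Finset (Fin n)),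
          ((V.filter (fun x => flipCoords x S ∈ V)).card : ℝ)) *
          (Real.log (m d) - Real.log (ℓ d))
        + (n.choose d : ℝ) * (V.card * Real.log (ℓ d)) := by
    rw [Finset.sum_add_distrib, Finset.sum_const, ← Finset.sum_mul, hcardF, nsmul_eq_mul]
  rw [hsplit] at step1
  linarith

lemma image_le_pairs (τ : ℕ) :
    2 * ((((V ×ˢ V).filter (fun p => p.1 ≠ p.2 ∧
        (Finset.univ.filter (fun i => p.1 i ≠ p.2 i)).card ≤ τ)).image
          (fun p => s(p.1, p.2))).card)
      ≤ ((V ×ˢ V).filter (fun p => p.1 ≠ p.2 ∧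
        (Finset.univ.filter (fun i => p.1 i ≠ p.2 i)).card ≤ τ)).card := by
  classical
  set P := (V ×ˢ V).filter (fun p => p.1 ≠ p.2 ∧
      (Finset.univ.filter (fun i => p.1 i ≠ p.2 i)).card ≤ τ) with hP
  have hswap : ∀ p ∈ P, (p.2, p.1) ∈ P := by
    rintro ⟨a, b⟩ hp
    obtain ⟨hab, hne, hcard⟩ := Finset.mem_filter.1 hp
    obtain ⟨ha, hb⟩ := Finset.mem_product.1 hab
    refine Finset.mem_filter.2 ⟨Finset.mem_product.2 ⟨hb, ha⟩, Ne.symm hne, ?_⟩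
    have : (Finset.univ.filter (fun i => b i ≠ a i))
        = (Finset.univ.filter (fun i => a i ≠ b i)) := by
      apply Finset.filter_congr
      intro i _
      exact ne_comm
    simpa [this] using hcard
  rw [Finset.card_eq_sum_card_image (fun p => s(p.1, p.2)) P]
  have h2 : ∀ e ∈ P.image (fun p => s(p.1, p.2)),
      2 ≤ (P.filter (fun p => s(p.1, p.2) = e)).card := by
    intro e he
    obtain ⟨p, hp, hpe⟩ := Finset.mem_image.1 he
    apply Finset.one_lt_card.2
    refine ⟨p, ?_, (p.2, p.1), ?_, ?_⟩
    · exact Finset.mem_filter.2 ⟨hp, hpe⟩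
    · refine Finset.mem_filter.2 ⟨hswap p hp, ?_⟩
      rw [← hpe]
      exact Sym2.eq_swap
    · intro h
      have hne := (Finset.mem_filter.1 hp).2.1
      rw [Prod.ext_iff] at h
      exact hne (h.1)
  calc 2 * (P.image (fun p => s(p.1, p.2))).card
      = ∑ _e ∈ P.image (fun p => s(p.1, p.2)), 2 := by
        rw [Finset.sum_const, smul_eq_mul, mul_comm]
    _ ≤ ∑ e ∈ P.image (fun p => s(p.1, p.2)),
          (P.filter (fun p => s(p.1, p.2) = e)).card := Finset.sum_le_sum h2

lemma pairs_fiberwise (τ : ℕ) :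
    ((V ×ˢ V).filter (fun p => p.1 ≠ p.2 ∧
        (Finset.univ.filter (fun i => p.1 i ≠ p.2 i)).card ≤ τ)).card
      = ∑ d ∈ Finset.Icc 1 τ,
        (((V ×ˢ V).filter (fun p => p.1 ≠ p.2 ∧
          (Finset.univ.filter (fun i => p.1 i ≠ p.2 i)).card ≤ τ)).filter
            (fun p => (Finset.univ.filter (fun i => p.1 i ≠ p.2 i)).card = d)).card := by
  classical
  apply Finset.card_eq_sum_card_fiberwise
  rintro ⟨a, b⟩ hp
  obtain ⟨_, hne, hcard⟩ := Finset.mem_filter.1 hp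
  refine Finset.mem_Icc.2 ⟨?_, hcard⟩
  obtain ⟨i, hi⟩ := Function.ne_iff.1 hne
  exact Finset.card_pos.2 ⟨i, Finset.mem_filter.2 ⟨Finset.mem_univ i, hi⟩⟩

lemma neg_of_pm {a b : ℤ} (ha : a = 1 ∨ a = -1) (hb : b = 1 ∨ b = -1) (hne : a ≠ b) :
    b = -a := by
  rcases ha with rfl | rfl <;> rcases hb with rfl | rfl <;> simp_all

lemma dist_fiber (hV : ∀ x ∈ V, ∀ i, x i = 1 ∨ x i = -1) (τ d : ℕ) (hd1 : 1 ≤ d)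
    (hdτ : d ≤ τ) :
    (((V ×ˢ V).filter (fun p => p.1 ≠ p.2 ∧
        (Finset.univ.filter (fun i => p.1 i ≠ p.2 i)).card ≤ τ)).filter
          (fun p => (Finset.univ.filter (fun i => p.1 i ≠ p.2 i)).card = d)).card
      = ∑ S ∈ Finset.powersetCard d (Finset.univ : Finset (Fin n)),
          (V.filter (fun x => flipCoords x S ∈ V)).card := by
  classical
  set Pd := ((V ×ˢ V).filter (fun p => p.1 ≠ p.2 ∧
      (Finset.univ.filter (fun i => p.1 i ≠ p.2 i)).card ≤ τ)).filter
        (fun p => (Finset.univ.filter (fun i => p.1 i ≠ p.2 i)).card = d) with hPd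
  have hstep : Pd.card = ∑ S ∈ Finset.powersetCard d (Finset.univ : Finset (Fin n)),
      (Pd.filter (fun p => Finset.univ.filter (fun i => p.1 i ≠ p.2 i) = S)).card := by
    apply Finset.card_eq_sum_card_fiberwise
    rintro p hp
    exact Finset.mem_powersetCard.2 ⟨Finset.subset_univ _, (Finset.mem_filter.1 hp).2⟩
  rw [hstep]
  apply Finset.sum_congr rfl
  intro S hS
  obtain ⟨-, hScard⟩ := Finset.mem_powersetCard.1 hS
  -- key : for p in the fiber, p.2 = flipCoords p.1 S
  have hflip_eq : ∀ p ∈ Pd.filter (fun p => Finset.univ.filter (fun i => p.1 i ≠ p.2 i) = S),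
      flipCoords p.1 S = p.2 := by
    rintro ⟨a, b⟩ hp
    obtain ⟨hpPd, hpS⟩ := Finset.mem_filter.1 hp
    obtain ⟨hp1, -⟩ := Finset.mem_filter.1 hpPd
    obtain ⟨hab, -, -⟩ := Finset.mem_filter.1 hp1
    obtain ⟨ha, hb⟩ := Finset.mem_product.1 hab
    funext i
    by_cases hiS : i ∈ S
    · have hine : a i ≠ b i := by
        have := hpS ▸ hiS
        exact (Finset.mem_filter.1 this).2
      have : b i = -(a i) := neg_of_pm (hV a ha i) (hV b hb i) hine
      simp [flipCoords, hiS, this]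
    · have hieq : a i = b i := by
        by_contra hne'
        exact hiS (hpS ▸ Finset.mem_filter.2 ⟨Finset.mem_univ i, hne'⟩)
      simp [flipCoords, hiS, hieq]
  apply Finset.card_bij' (fun p _ => p.1) (fun x _ => (x, flipCoords x S))
  · rintro ⟨a, b⟩ hp
    obtain ⟨hpPd, -⟩ := Finset.mem_filter.1 hp
    obtain ⟨hp1, -⟩ := Finset.mem_filter.1 hpPd
    obtain ⟨hab, -, -⟩ := Finset.mem_filter.1 hp1
    obtain ⟨ha, hb⟩ := Finset.mem_product.1 hab
    refine Finset.mem_filter.2 ⟨ha, ?_⟩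
    show flipCoords a S ∈ V
    rw [hflip_eq (a, b) hp]
    exact hb
  · intro x hx
    obtain ⟨hxV, hflipV⟩ := Finset.mem_filter.1 hx
    have hflipV' : flipCoords x S ∈ V := hflipV
    -- x ≠ flipCoords x S
    obtain ⟨i₀, hi₀⟩ : S.Nonempty := Finset.card_pos.1 (by omega)
    have hxne : ∀ i ∈ S, x i ≠ flipCoords x S i := by
      intro i hi
      have hpm := hV x hxV i
      simp only [flipCoords, if_pos hi]
      rcases hpm with h | h <;> rw [h] <;> norm_num
    have hne : x ≠ flipCoords x S := fun h => hxne i₀ hi₀ (congrFun h i₀)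
    have hΔ : Finset.univ.filter (fun i => x i ≠ flipCoords x S i) = S := by
      ext i
      simp only [Finset.mem_filter, Finset.mem_univ, true_and]
      constructor
      · intro hne'
        by_contra hiS
        exact hne' (by simp [flipCoords, hiS])
      · exact hxne i
    apply Finset.mem_filter.2
    constructor
    · apply Finset.mem_filter.2
      constructor
      · apply Finset.mem_filter.2
        refine ⟨Finset.mem_product.2 ⟨hxV, hflipV'⟩, hne, ?_⟩
        show (Finset.univ.filter (fun i => x i ≠ flipCoords x S i)).card ≤ τ
        rw [hΔ, hScard]
        exact hdτ
      · show (Finset.univ.filter (fun i => x i ≠ flipCoords x S i)).card = d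
        rw [hΔ, hScard]
    · show Finset.univ.filter (fun i => x i ≠ flipCoords x S i) = S
      exact hΔ

  · rintro ⟨a, b⟩ hp
    exact Prod.ext rfl (hflip_eq (a, b) hp)
  · intro x _
    rfl
end Stmt13

/-- bound on the number of edges of the graph on
`V ⊆ {-1,1}^n` where distinct vertices are adjacent iff their Hamming
distance is at most `τ`.  For each `d ∈ [τ]`, `𝓕_d` is the family of all
`d`-element subsets of `[n]`, and `m d`, `ℓ d` are characterized as the
corresponding minima via `IsLeast` (encoding well-definedness). -/
theorem stmt_13 (n : ℕ) (hn : 1 ≤ n) (τ : ℕ) (hτ1 : 1 ≤ τ) (hτn : τ ≤ n)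
    (V : Finset (Fin n → ℤ)) (hVne : V.Nonempty)
    (hV : ∀ x ∈ V, ∀ i, x i = 1 ∨ x i = -1)
    (m ℓ : ℕ → ℕ)
    (hm : ∀ d ∈ Finset.Icc 1 τ,
      IsLeast {k : ℕ | ∃ x ∈ V, ∃ S : Finset (Fin n), S.card = d ∧
        flipCoords x S ∈ V ∧
        k = (V.filter (fun y => ∀ i ∉ S, y i = x i)).card} (m d))
    (hℓ : ∀ d ∈ Finset.Icc 1 τ,
      IsLeast {k : ℕ | ∃ x ∈ V, ∃ S : Finset (Fin n), S.card = d ∧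
        flipCoords x S ∉ V ∧
        k = (V.filter (fun y => ∀ i ∉ S, y i = x i)).card} (ℓ d))
    (hml : ∀ d ∈ Finset.Icc 1 τ, ℓ d < m d) :
    (((((V ×ˢ V).filter (fun p => p.1 ≠ p.2 ∧
        (Finset.univ.filter (fun i => p.1 i ≠ p.2 i)).card ≤ τ)).image
          (fun p => s(p.1, p.2))).card : ℝ)) ≤
      ∑ d ∈ Finset.Icc 1 τ,
        ((n - 1).choose (d - 1) : ℝ) * V.card *
            (Real.log V.card - ((n : ℝ) / d) * Real.log (ℓ d)) /
          (2 * Real.log ((m d : ℝ) / (ℓ d))) := by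
  classical
  set P := (V ×ˢ V).filter (fun p => p.1 ≠ p.2 ∧
      (Finset.univ.filter (fun i => p.1 i ≠ p.2 i)).card ≤ τ) with hPdef
  have hE1 := Stmt13.image_le_pairs V τ
  have hE2 := Stmt13.pairs_fiberwise V τ
  rw [← hPdef] at hE1 hE2
  have key : ∀ d ∈ Finset.Icc 1 τ,
      ((P.filter
          (fun p => (Finset.univ.filter (fun i => p.1 i ≠ p.2 i)).card = d)).card : ℝ) / 2
      ≤ ((n - 1).choose (d - 1) : ℝ) * V.card *
            (Real.log V.card - ((n : ℝ) / d) * Real.log (ℓ d)) /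
          (2 * Real.log ((m d : ℝ) / (ℓ d))) := by
    intro d hd
    obtain ⟨hd1, hdτ⟩ := Finset.mem_Icc.1 hd
    have hdn : d ≤ n := le_trans hdτ hτn
    have hℓpos : 0 < ℓ d := by
      obtain ⟨x, hx, S, -, -, hk⟩ := (hℓ d hd).1
      rw [hk]
      exact Finset.card_pos.2 ⟨x, Finset.mem_filter.2 ⟨hx, fun _ _ => rfl⟩⟩
    have hmgt : ℓ d < m d := hml d hd
    have hmpos : 0 < m d := lt_trans hℓpos hmgt
    have hL0 : Real.log (ℓ d) < Real.log (m d) := by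
      apply Real.log_lt_log
      · exact_mod_cast hℓpos
      · exact_mod_cast hmgt
    have hL : (0:ℝ) < Real.log (m d) - Real.log (ℓ d) := by linarith
    set L : ℝ := Real.log (m d) - Real.log (ℓ d) with hLdef
    have hlogdiv : Real.log ((m d : ℝ) / (ℓ d)) = L := by
      rw [Real.log_div (by exact_mod_cast hmpos.ne') (by exact_mod_cast hℓpos.ne')]
    have hE3 := Stmt13.dist_fiber V hV τ d hd1 hdτ
    rw [← hPdef] at hE3
    have hFB := Stmt13.family_bound V (by omega) m ℓ τ d hd hm hℓ
    set A : ℝ := ∑ S ∈ Finset.powersetCard d (Finset.univ : Finset (Fin n)),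
        ((V.filter (fun x => flipCoords x S ∈ V)).card : ℝ) with hAdef
    have hPdA : ((P.filter
        (fun p => (Finset.univ.filter (fun i => p.1 i ≠ p.2 i)).card = d)).card : ℝ) = A := by
      rw [hE3]
      push_cast
      rfl
    have hNat : n * (n - 1).choose (d - 1) = n.choose d * d := by
      have h := Nat.add_one_mul_choose_eq (n - 1) (d - 1)
      have h1 : n - 1 + 1 = n := by omega
      have h2 : d - 1 + 1 = d := by omega
      rwa [h1, h2] at h
    have hN : ((n.choose d : ℝ)) * d = ((n - 1).choose (d - 1) : ℝ) * n := by
      exact_mod_cast (mul_comm ((n:ℕ)) ((n - 1).choose (d - 1))) ▸ hNat.symm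
    have hd0 : ((d:ℝ)) ≠ 0 := by positivity
    have hnum : ((n - 1).choose (d - 1) : ℝ) * V.card *
          (Real.log V.card - ((n : ℝ) / d) * Real.log (ℓ d))
        = ((n - 1).choose (d - 1) : ℝ) * (V.card * Real.log V.card)
          - (n.choose d : ℝ) * (V.card * Real.log (ℓ d)) := by
      have hNd : ((n.choose d : ℝ)) = ((n - 1).choose (d - 1) : ℝ) * n / d := by
        field_simp
        linarith [hN]
      rw [hNd]
      field_simp
    rw [hPdA, hlogdiv, hnum]
    rw [div_le_div_iff₀ (by norm_num) (by linarith)]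
    calc A * (2 * L) = (A * L) * 2 := by ring
      _ ≤ (((n - 1).choose (d - 1) : ℝ) * (V.card * Real.log V.card)
          - (n.choose d : ℝ) * (V.card * Real.log (ℓ d))) * 2 := by
          nlinarith [hFB]
  calc ((P.image (fun p => s(p.1, p.2))).card : ℝ)
      ≤ (P.card : ℝ) / 2 := by
        rw [le_div_iff₀ (by norm_num)]
        exact_mod_cast (mul_comm 2 _ ▸ hE1)
    _ = ∑ d ∈ Finset.Icc 1 τ,
        (((P.filter
            (fun p => (Finset.univ.filter (fun i => p.1 i ≠ p.2 i)).card = d)).card : ℝ) / 2) := by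
        rw [hE2]
        push_cast
        rw [Finset.sum_div]
    _ ≤ _ := Finset.sum_le_sum key
end

section
/- Let n ≥ 1, let f : 2^[n] → ℝ be submodular with f(∅) = 0, and let γ be a fractional partition with respect to a finite family 𝓕 of nonempty subsets of [n]. Then Σ_{S ∈ 𝓕} γ(S)·f(S | S^c) ≤ f([n]) ≤ Σ_{S ∈ 𝓕} γ(S)·f(S). -/
/-!
Order the ground set and let `g i = f(Iic i) - f(Iio i)` be the marginal value of `i` given its
predecessors; these marginals telescope to `f univ`. Submodularity means marginal values decrease
as the conditioning set grows, so on each `S` the sum of the `g i` over `i ∈ S` lies between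
`f(S | Sᶜ)` and `f S`. A fractional partition counts every `g i` with total weight one, so
averaging these two bounds over `𝓕` with weights `γ` gives both inequalities.
-/

open Finset

namespace Finset

variable {α β : Type*} [DecidableEq α] [LinearOrder α] [LocallyFiniteOrderBot α]

theorem sum_sub_inter_Iic_inter_Iio [AddCommGroup β] (F : Finset α → β) (s : Finset α) :
    ∑ i ∈ s, (F (s ∩ Iic i) - F (s ∩ Iio i)) = F s - F ∅ := by
  induction s using Finset.induction_on_max with
  | empty => simp
  | insert a s hlt ih =>
    have ha : a ∉ s := fun h => (hlt a h).false
    have hIic : ∀ i ∈ s, insert a s ∩ Iic i = s ∩ Iic i := fun i hi =>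
      insert_inter_of_notMem (by simpa using hlt i hi)
    have hIio : ∀ i ∈ s, insert a s ∩ Iio i = s ∩ Iio i := fun i hi =>
      insert_inter_of_notMem (by simpa using (hlt i hi).le)
    have htop : insert a s ∩ Iic a = insert a s :=
      inter_eq_left.mpr fun x hx => by
        rcases mem_insert.mp hx with rfl | hx
        exacts [mem_Iic.mpr le_rfl, mem_Iic.mpr (hlt x hx).le]
    have hbelow : insert a s ∩ Iio a = s := by
      rw [insert_inter_of_notMem (by simp), inter_eq_left.mpr fun x hx => mem_Iio.mpr (hlt x hx)]
    rw [sum_insert ha, htop, hbelow, sum_congr rfl fun i hi => by rw [hIic i hi, hIio i hi], ih]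
    abel

end Finset

section Submodular

variable {α : Type*} [DecidableEq α] {f : Finset α → ℝ}

theorem sub_insert_le_sub_insert_of_subset
    (hf : ∀ S T : Finset α, f (S ∪ T) + f (S ∩ T) ≤ f S + f T)
    {A B : Finset α} (hAB : A ⊆ B) {i : α} (hi : i ∉ B) :
    f (insert i B) - f B ≤ f (insert i A) - f A := by
  have h := hf (insert i A) B
  rw [insert_union, union_eq_right.mpr hAB, insert_inter_of_notMem hi,
    inter_eq_left.mpr hAB] at h
  linarith

variable [LinearOrder α] [LocallyFiniteOrderBot α]

def predMarginal (f : Finset α → ℝ) (i : α) : ℝ := f (Iic i) - f (Iio i)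

theorem sum_predMarginal_univ [Fintype α] (f : Finset α → ℝ) :
    ∑ i, predMarginal f i = f univ - f ∅ := by
  simpa only [predMarginal, univ_inter] using sum_sub_inter_Iic_inter_Iio f univ

theorem sum_predMarginal_le (hf : ∀ S T : Finset α, f (S ∪ T) + f (S ∩ T) ≤ f S + f T)
    (S : Finset α) : ∑ i ∈ S, predMarginal f i ≤ f S - f ∅ := by
  rw [← sum_sub_inter_Iic_inter_Iio f S]
  refine sum_le_sum fun i hi => ?_
  have hins : insert i (S ∩ Iio i) = S ∩ Iic i := by
    rw [← Iio_insert, inter_insert_of_mem hi]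
  have h := sub_insert_le_sub_insert_of_subset hf (inter_subset_right : S ∩ Iio i ⊆ Iio i)
    notMem_Iio_self
  rwa [Iio_insert, hins] at h

theorem sub_compl_le_sum_predMarginal [Fintype α]
    (hf : ∀ S T : Finset α, f (S ∪ T) + f (S ∩ T) ≤ f S + f T) (S : Finset α) :
    f univ - f Sᶜ ≤ ∑ i ∈ S, predMarginal f i := by
  have htel := sum_sub_inter_Iic_inter_Iio (fun T => f (Sᶜ ∪ T)) S
  rw [union_empty, union_comm, union_compl] at htel
  rw [← htel]
  refine sum_le_sum fun i hi => ?_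
  have hsub : Iio i ⊆ Sᶜ ∪ (S ∩ Iio i) := fun x hx => by
    by_cases hxS : x ∈ S
    · exact mem_union_right _ (mem_inter.mpr ⟨hxS, hx⟩)
    · exact mem_union_left _ (mem_compl.mpr hxS)
  have hnot : i ∉ Sᶜ ∪ (S ∩ Iio i) := by simp [hi]
  have hins : insert i (Sᶜ ∪ (S ∩ Iio i)) = Sᶜ ∪ (S ∩ Iic i) := by
    rw [← Iio_insert, inter_insert_of_mem hi, union_insert]
  have h := sub_insert_le_sub_insert_of_subset hf hsub hnot
  rwa [Iio_insert, hins] at h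

end Submodular

theorem sum_mul_sum_eq_sum_of_fractional_partition {α : Type*} [Fintype α] [DecidableEq α]
    {𝓕 : Finset (Finset α)} {γ : Finset α → ℝ}
    (hfrac : ∀ i : α, ∑ S ∈ 𝓕.filter (fun S => i ∈ S), γ S = 1) (g : α → ℝ) :
    ∑ S ∈ 𝓕, γ S * ∑ i ∈ S, g i = ∑ i, g i := by
  calc ∑ S ∈ 𝓕, γ S * ∑ i ∈ S, g i
      = ∑ i, ∑ S ∈ 𝓕.filter (fun S => i ∈ S), γ S * g i := by
        simp_rw [mul_sum]
        exact sum_comm' fun S i => by simp [and_comm]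
    _ = ∑ i, g i := by simp_rw [← sum_mul, hfrac, one_mul]

theorem stmt_17_general (n : ℕ)
    (f : Finset (Fin n) → ℝ)
    (hsub : ∀ S T : Finset (Fin n), f S + f T ≥ f (S ∪ T) + f (S ∩ T))
    (hf0 : f ∅ = 0)
    (𝓕 : Finset (Finset (Fin n)))
    (γ : Finset (Fin n) → ℝ) (hγ : ∀ S ∈ 𝓕, 0 ≤ γ S)
    (hfrac : ∀ i : Fin n, ∑ S ∈ 𝓕.filter (fun S => i ∈ S), γ S = 1) :
    (∑ S ∈ 𝓕, γ S * (f (S ∪ Sᶜ) - f Sᶜ) ≤ f Finset.univ) ∧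
      (f Finset.univ ≤ ∑ S ∈ 𝓕, γ S * f S) := by
  have hweights := sum_mul_sum_eq_sum_of_fractional_partition hfrac (predMarginal f)
  rw [sum_predMarginal_univ, hf0, sub_zero] at hweights
  constructor
  · rw [← hweights]
    refine sum_le_sum fun S hS => mul_le_mul_of_nonneg_left ?_ (hγ S hS)
    simpa only [union_compl] using sub_compl_le_sum_predMarginal hsub S
  · rw [← hweights]
    refine sum_le_sum fun S hS => mul_le_mul_of_nonneg_left ?_ (hγ S hS)
    simpa only [hf0, sub_zero] using sum_predMarginal_le hsub S

/-- weak form of the Madiman–Tetali inequalities. -/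
theorem stmt_17 (n : ℕ) (hn : 1 ≤ n)
    (f : Finset (Fin n) → ℝ)
    (hsub : ∀ S T : Finset (Fin n), f S + f T ≥ f (S ∪ T) + f (S ∩ T))
    (hf0 : f ∅ = 0)
    (𝓕 : Finset (Finset (Fin n))) (h𝓕 : ∀ S ∈ 𝓕, S.Nonempty)
    (γ : Finset (Fin n) → ℝ) (hγ : ∀ S ∈ 𝓕, 0 ≤ γ S)
    (hfrac : ∀ i : Fin n, ∑ S ∈ 𝓕.filter (fun S => i ∈ S), γ S = 1) :
    (∑ S ∈ 𝓕, γ S * (f (S ∪ Sᶜ) - f Sᶜ) ≤ f Finset.univ) ∧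
      (f Finset.univ ≤ ∑ S ∈ 𝓕, γ S * f S) :=
  stmt_17_general n f hsub hf0 𝓕 γ hγ hfrac
end

section
/- Let n ≥ 1 and 1 ≤ k ≤ n, let f : 2^[n] → ℝ be submodular with f(∅) = 0, and let g : ℝ → ℝ be monotonically non-decreasing and convex. Then g( f([n])/n ) ≤ (1 / C(n,k)) · Σ_{S ⊆ [n], |S| = k} g( f(S | <S) / k ), where C(n,k) is the binomial coefficient; in particular g( f([n])/n ) ≤ (1 / C(n,k)) · Σ_{S ⊆ [n], |S| = k} g( f(S) / k ). -/
namespace Stmt19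

variable {n : ℕ}

/-- Prefix `{0, …, i-1}` in `Fin n`. -/
def below (i : Fin n) : Finset (Fin n) := Finset.univ.filter (· < i)

lemma mem_below {i x : Fin n} : x ∈ below i ↔ x < i := by simp [below]

lemma mem_ltSet {S : Finset (Fin n)} {x : Fin n} :
    x ∈ ltSet S ↔ ∀ j ∈ S, x < j := by simp [ltSet]

/-- Gain of element `i` over the prefix below it. -/
noncomputable def cgain (f : Finset (Fin n) → ℝ) (i : Fin n) : ℝ :=
  f (insert i (below i)) - f (below i)

lemma key (f : Finset (Fin n) → ℝ)
    (hsub : ∀ S T : Finset (Fin n), f S + f T ≥ f (S ∪ T) + f (S ∩ T)) :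
    ∀ S T : Finset (Fin n), (∀ j ∈ T, ∀ i ∈ S, j < i) →
      ∑ i ∈ S, cgain f i ≤ f (S ∪ T) - f T := by
  intro S
  induction S using Finset.induction_on_min with
  | empty => intro T _; simp
  | insert a s ha ih =>
    intro T hT
    have hTa : ∀ j ∈ T, j < a := fun j hj => hT j hj a (Finset.mem_insert_self a s)
    have haT : a ∉ T := fun h => lt_irrefl a (hTa a h)
    have hTsub : T ⊆ below a := fun j hj => mem_below.mpr (hTa j hj)
    have h1 : cgain f a ≤ f (insert a T) - f T := by
      have h := hsub (insert a T) (below a)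
      have hu : insert a T ∪ below a = insert a (below a) := by
        rw [Finset.insert_union, Finset.union_eq_right.mpr hTsub]
      have hi : insert a T ∩ below a = T := by
        ext x
        simp only [Finset.mem_inter, Finset.mem_insert, mem_below]
        constructor
        · rintro ⟨hxa | hx, hlt⟩
          · subst hxa; exact absurd hlt (lt_irrefl _)
          · exact hx
        · intro hx; exact ⟨Or.inr hx, hTa x hx⟩
      rw [hu, hi] at h
      unfold cgain; linarith
    have h2 : ∑ i ∈ s, cgain f i ≤ f (s ∪ insert a T) - f (insert a T) := by
      apply ih
      intro j hj i hi
      rcases Finset.mem_insert.mp hj with rfl | hj'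
      · exact ha i hi
      · exact hT j hj' i (Finset.mem_insert_of_mem hi)
    have has : a ∉ s := fun h => lt_irrefl a (ha a h)
    have hset : insert a s ∪ T = s ∪ insert a T := by
      ext x
      simp only [Finset.mem_union, Finset.mem_insert]
      tauto
    rw [Finset.sum_insert has, hset]
    linarith

lemma sum_cgain (f : Finset (Fin n) → ℝ) (hf0 : f ∅ = 0) :
    ∑ i : Fin n, cgain f i = f Finset.univ := by
  suffices h : ∀ S : Finset (Fin n), (∀ i ∈ S, ∀ j : Fin n, j < i → j ∈ S) →
      ∑ i ∈ S, cgain f i = f S from h Finset.univ (by simp)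
  intro S
  induction S using Finset.induction_on_max with
  | empty => intro _; simpa using hf0.symm
  | insert a s ha ih =>
    intro hdc
    have has : a ∉ s := fun h => lt_irrefl a (ha a h)
    have hba : below a = s := by
      ext x
      rw [mem_below]
      constructor
      · intro hx
        rcases Finset.mem_insert.mp
          (hdc a (Finset.mem_insert_self a s) x hx) with hxa | hx'
        · rw [hxa] at hx; exact absurd hx (lt_irrefl _)
        · exact hx'
      · exact ha x
    have hsdc : ∀ i ∈ s, ∀ j : Fin n, j < i → j ∈ s := by
      intro i hi j hj
      have hja : j < a := lt_trans hj (ha i hi)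
      rcases Finset.mem_insert.mp
        (hdc i (Finset.mem_insert_of_mem hi) j hj) with rfl | hj'
      · exact absurd hja (lt_irrefl j)
      · exact hj'
    rw [Finset.sum_insert has, ih hsdc]
    unfold cgain
    rw [hba]
    ring

lemma count_mem (k : ℕ) (i : Fin n) (hk : 1 ≤ k) :
    ((Finset.powersetCard k (Finset.univ : Finset (Fin n))).filter
        (fun S => i ∈ S)).card = (n - 1).choose (k - 1) := by
  have hcard : ((Finset.univ : Finset (Fin n)).erase i).card = n - 1 := by
    rw [Finset.card_erase_of_mem (Finset.mem_univ i), Finset.card_univ, Fintype.card_fin]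
  rw [← hcard, ← Finset.card_powersetCard]
  apply Finset.card_bij (fun S _ => S.erase i)
  · intro S hS
    simp only [Finset.mem_filter, Finset.mem_powersetCard] at hS
    obtain ⟨⟨hsub, hc⟩, hmem⟩ := hS
    simp only [Finset.mem_powersetCard]
    refine ⟨Finset.erase_subset_erase i hsub, ?_⟩
    rw [Finset.card_erase_of_mem hmem, hc]
  · intro S hS S' hS' h
    simp only [Finset.mem_filter, Finset.mem_powersetCard] at hS hS'
    have := congrArg (insert i) h
    rwa [Finset.insert_erase hS.2, Finset.insert_erase hS'.2] at this
  · intro t ht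
    simp only [Finset.mem_powersetCard] at ht
    obtain ⟨hsub, hc⟩ := ht
    have hit : i ∉ t := fun h => (Finset.mem_erase.mp (hsub h)).1 rfl
    refine ⟨insert i t, ?_, ?_⟩
    · simp only [Finset.mem_filter, Finset.mem_powersetCard]
      refine ⟨⟨Finset.subset_univ _, ?_⟩, Finset.mem_insert_self i t⟩
      rw [Finset.card_insert_of_notMem hit, hc]
      omega
    · rw [Finset.erase_insert hit]

lemma sum_sum (k : ℕ) (c : Fin n → ℝ) (hk : 1 ≤ k) :
    ∑ S ∈ Finset.powersetCard k (Finset.univ : Finset (Fin n)), ∑ i ∈ S, c i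
      = ((n - 1).choose (k - 1) : ℝ) * ∑ i : Fin n, c i := by
  have h1 : ∀ S ∈ Finset.powersetCard k (Finset.univ : Finset (Fin n)),
      ∑ i ∈ S, c i = ∑ i : Fin n, if i ∈ S then c i else 0 := by
    intro S _
    rw [← Finset.sum_filter]
    congr 1
    ext x
    simp
  rw [Finset.sum_congr rfl h1, Finset.sum_comm]
  have h2 : ∀ i : Fin n,
      (∑ S ∈ Finset.powersetCard k (Finset.univ : Finset (Fin n)),
        if i ∈ S then c i else 0) = ((n - 1).choose (k - 1) : ℝ) * c i := by
    intro i
    rw [← Finset.sum_filter, Finset.sum_const, count_mem k i hk, nsmul_eq_mul]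
  rw [Finset.sum_congr rfl (fun i _ => h2 i), ← Finset.mul_sum]

end Stmt19

/-- convex-functional strong and weak Han-type inequalities
for the family of all `k`-element subsets of `[n]` with weights
`1/C(n,k)` (after normalization). -/
theorem stmt_19 (n k : ℕ) (hn : 1 ≤ n) (hk1 : 1 ≤ k) (hkn : k ≤ n)
    (f : Finset (Fin n) → ℝ)
    (hsub : ∀ S T : Finset (Fin n), f S + f T ≥ f (S ∪ T) + f (S ∩ T))
    (hf0 : f ∅ = 0)
    (g : ℝ → ℝ) (hg : Monotone g) (hconv : ConvexOn ℝ Set.univ g) :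
    (g (f Finset.univ / n) ≤
        (1 / (n.choose k : ℝ)) *
          ∑ S ∈ Finset.powersetCard k (Finset.univ : Finset (Fin n)),
            g ((f (S ∪ ltSet S) - f (ltSet S)) / k)) ∧
      (g (f Finset.univ / n) ≤
        (1 / (n.choose k : ℝ)) *
          ∑ S ∈ Finset.powersetCard k (Finset.univ : Finset (Fin n)),
            g (f S / k)) := by
  classical
  set P := Finset.powersetCard k (Finset.univ : Finset (Fin n)) with hP
  set C : ℝ := (n.choose k : ℝ) with hC
  have hCpos : 0 < C := by
    have := Nat.choose_pos hkn
    positivity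
  have hkpos : (0:ℝ) < k := by exact_mod_cast hk1
  have hnpos : (0:ℝ) < n := by exact_mod_cast hn
  have hPcard : (P.card : ℝ) = C := by
    rw [hP, Finset.card_powersetCard, Finset.card_univ, Fintype.card_fin]
  -- the strong conditional values
  set x : Finset (Fin n) → ℝ := fun S => (f (S ∪ ltSet S) - f (ltSet S)) / k with hx
  -- pointwise bound by prefix gains
  have hkey : ∀ S ∈ P, ∑ i ∈ S, Stmt19.cgain f i ≤ f (S ∪ ltSet S) - f (ltSet S) := by
    intro S _
    exact Stmt19.key f hsub S (ltSet S)
      (fun j hj i hi => (Stmt19.mem_ltSet.mp hj) i hi)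
  -- combinatorial identity
  have hcount : ∑ S ∈ P, ∑ i ∈ S, Stmt19.cgain f i
      = ((n - 1).choose (k - 1) : ℝ) * f Finset.univ := by
    rw [Stmt19.sum_sum k _ hk1, Stmt19.sum_cgain f hf0]
  have hchoose : ((n - 1).choose (k - 1) : ℝ) * n = C * k := by
    have h := Nat.add_one_mul_choose_eq (n - 1) (k - 1)
    have hn' : n - 1 + 1 = n := by omega
    have hk' : k - 1 + 1 = k := by omega
    rw [hn', hk'] at h
    have h2 : (n - 1).choose (k - 1) * n = n.choose k * k := by
      rw [Nat.mul_comm]; exact h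
    rw [hC]; exact_mod_cast h2
  -- average of x over P dominates f(univ)/n
  have havg : f Finset.univ / n ≤ ∑ S ∈ P, (1 / C) * x S := by
    have hsum : ((n - 1).choose (k - 1) : ℝ) * f Finset.univ
        ≤ ∑ S ∈ P, (f (S ∪ ltSet S) - f (ltSet S)) := by
      rw [← hcount]
      exact Finset.sum_le_sum hkey
    have : ∑ S ∈ P, (1 / C) * x S
        = (1 / (C * k)) * ∑ S ∈ P, (f (S ∪ ltSet S) - f (ltSet S)) := by
      rw [Finset.mul_sum]
      refine Finset.sum_congr rfl fun S _ => ?_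
      rw [hx]
      field_simp
    have hDpos : (0:ℝ) < ((n - 1).choose (k - 1) : ℝ) := by
      exact_mod_cast Nat.choose_pos (by omega : k - 1 ≤ n - 1)
    have h2 : f Finset.univ / n
        = (((n - 1).choose (k - 1) : ℝ) * f Finset.univ) / (C * k) := by
      rw [← hchoose, mul_div_mul_left _ _ (ne_of_gt hDpos)]
    have h3 : (1 : ℝ) / (C * k) * (∑ S ∈ P, (f (S ∪ ltSet S) - f (ltSet S)))
        = (∑ S ∈ P, (f (S ∪ ltSet S) - f (ltSet S))) / (C * k) := by ring
    rw [this, h2, h3]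
    exact (div_le_div_iff_of_pos_right (by positivity)).mpr hsum
  -- Jensen
  have hjensen : g (∑ S ∈ P, (1 / C) * x S) ≤ ∑ S ∈ P, (1 / C) * g (x S) := by
    have h := hconv.map_sum_le (t := P) (w := fun _ => 1 / C) (p := x)
      (fun _ _ => by positivity)
      (by rw [Finset.sum_const, nsmul_eq_mul, hPcard]; field_simp)
      (fun _ _ => Set.mem_univ _)
    simpa using h
  have hstrong : g (f Finset.univ / n) ≤ (1 / C) * ∑ S ∈ P, g (x S) := by
    calc g (f Finset.univ / n) ≤ g (∑ S ∈ P, (1 / C) * x S) := hg havg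
      _ ≤ ∑ S ∈ P, (1 / C) * g (x S) := hjensen
      _ = (1 / C) * ∑ S ∈ P, g (x S) := by rw [Finset.mul_sum]
  constructor
  · exact hstrong
  · refine le_trans hstrong ?_
    apply mul_le_mul_of_nonneg_left _ (by positivity)
    apply Finset.sum_le_sum
    intro S _
    apply hg
    have h := hsub S (ltSet S)
    have hdisj : S ∩ ltSet S = ∅ := by
      ext y
      simp only [Finset.mem_inter, Stmt19.mem_ltSet, Finset.notMem_empty, iff_false]
      rintro ⟨hy, hy'⟩
      exact absurd (hy' y hy) (lt_irrefl y)
    rw [hdisj, hf0] at h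
    have harg : f (S ∪ ltSet S) - f (ltSet S) ≤ f S := by linarith
    exact (div_le_div_iff_of_pos_right hkpos).mpr harg
end
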